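/- arXiv:2506.05002 — 4 statements merged into one kernel-verified Lean document; each statement's English description precedes it below -/
import Mathlib

section
/- Let M : [-1,0] → ℝ^{n×n} be of bounded variation with det(I − (M(0) − M(0⁻))) ≠ 0. Then for every continuous φ : [-1,0] → ℝ^n satisfying the compatibility condition φ(0) = ∫_{-1}^0 dM(θ) φ(θ), there exists a unique continuous function x : [-1,∞) → ℝ^n such that x restricted to [-1,0] equals φ and x(t) = ∫_{-1}^0 dM(θ) x(t+θ) for all t ≥ 0. -/
/-- `IsRSIntegral M f a b v` means that the Riemann–Stieltjes integral
`∫_a^b dM(θ) f(θ)` of the `ℝ^n`-valued function `f` against the matrix-valued function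
`M` exists and equals `v`: Riemann–Stieltjes sums over tagged partitions of `[a,b]` of
mesh at most `δ` approximate `v`. -/
def IsRSIntegral {n : ℕ} (M : ℝ → Matrix (Fin n) (Fin n) ℝ) (f : ℝ → Fin n → ℝ)
    (a b : ℝ) (v : Fin n → ℝ) : Prop :=
  ∀ ε > (0:ℝ), ∃ δ > (0:ℝ), ∀ (k : ℕ) (t ξ : ℕ → ℝ),
    t 0 = a → t k = b →
    (∀ i < k, t i ≤ t (i + 1) ∧ t (i + 1) - t i ≤ δ ∧ ξ i ∈ Set.Icc (t i) (t (i + 1))) →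
    dist (∑ i ∈ Finset.range k, (M (t (i + 1)) - M (t i)).mulVec (f (ξ i))) v ≤ ε

open Set Finset
open scoped NNReal

namespace RSP

variable {n : ℕ}

noncomputable def a1 (A : Matrix (Fin n) (Fin n) ℝ) : ℝ := ∑ p, ∑ q, |A p q|

lemma a1_nonneg (A : Matrix (Fin n) (Fin n) ℝ) : 0 ≤ a1 A := by
  apply Finset.sum_nonneg; intro p _; apply Finset.sum_nonneg; intro q _; positivity

lemma norm_mulVec_le (A : Matrix (Fin n) (Fin n) ℝ) (v : Fin n → ℝ) :
    ‖A.mulVec v‖ ≤ a1 A * ‖v‖ := by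
  have h : ∀ p, ‖A.mulVec v p‖ ≤ a1 A * ‖v‖ := by
    intro p
    have h0 : A.mulVec v p = ∑ q, A p q * v q := by
      simp [Matrix.mulVec, dotProduct]
    rw [h0]
    have h1 : ‖∑ q, A p q * v q‖ ≤ ∑ q, |A p q| * ‖v‖ := by
      refine (norm_sum_le _ _).trans ?_
      refine Finset.sum_le_sum fun q _ => ?_
      rw [norm_mul]
      have := norm_le_pi_norm v q
      have h2 : ‖A p q‖ = |A p q| := rfl
      rw [h2]
      exact mul_le_mul_of_nonneg_left this (abs_nonneg _)
    refine h1.trans ?_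
    rw [← Finset.sum_mul]
    have h3 : ∑ q, |A p q| ≤ a1 A :=
      Finset.single_le_sum (f := fun p => ∑ q, |A p q|) (fun i _ => by positivity)
        (Finset.mem_univ p)
    exact mul_le_mul_of_nonneg_right h3 (norm_nonneg _)
  exact (pi_norm_le_iff_of_nonneg (mul_nonneg (a1_nonneg A) (norm_nonneg v))).2 h

noncomputable def Vr (M : ℝ → Matrix (Fin n) (Fin n) ℝ) (s : Set ℝ) : ℝ :=
  ∑ p, ∑ q, (eVariationOn (fun u => M u p q) s).toReal

lemma Vr_nonneg (M : ℝ → Matrix (Fin n) (Fin n) ℝ) (s : Set ℝ) : 0 ≤ Vr M s := by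
  apply Finset.sum_nonneg; intro p _; apply Finset.sum_nonneg; intro q _
  exact ENNReal.toReal_nonneg

def BVo (M : ℝ → Matrix (Fin n) (Fin n) ℝ) (s : Set ℝ) : Prop :=
  ∀ p q, BoundedVariationOn (fun u => M u p q) s

lemma BVo.mono {M : ℝ → Matrix (Fin n) (Fin n) ℝ} {s t : Set ℝ} (h : BVo M s) (hts : t ⊆ s) :
    BVo M t := fun p q => (h p q).mono hts

lemma Vr_mono {M : ℝ → Matrix (Fin n) (Fin n) ℝ} {s t : Set ℝ} (h : BVo M s) (hts : t ⊆ s) :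
    Vr M t ≤ Vr M s := by
  apply Finset.sum_le_sum; intro p _; apply Finset.sum_le_sum; intro q _
  exact ENNReal.toReal_mono (h p q) (eVariationOn.mono _ hts)

lemma chain_mono {t : ℕ → ℝ} {k : ℕ} (h : ∀ i < k, t i ≤ t (i + 1)) :
    ∀ i j, i ≤ j → j ≤ k → t i ≤ t j := by
  intro i j hij hjk
  induction j with
  | zero => have : i = 0 := Nat.le_zero.mp hij; subst this; exact le_rfl
  | succ m ih =>
    rcases Nat.lt_succ_iff_lt_or_eq.mp (Nat.lt_succ_of_le hij) with h' | h'
    · exact (ih (Nat.lt_succ_iff.mp h') (le_of_lt hjk)).trans (h m hjk)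
    · subst h'; exact le_rfl

/-- key bound: sum of `a1` of increments along a monotone chain in `s` is at most `Vr M s`. -/
lemma sum_a1_le {M : ℝ → Matrix (Fin n) (Fin n) ℝ} {s : Set ℝ} (hBV : BVo M s)
    (k : ℕ) {t : ℕ → ℝ} (hmono : ∀ i < k, t i ≤ t (i + 1)) (hmem : ∀ i ≤ k, t i ∈ s) :
    ∑ i ∈ Finset.range k, a1 (M (t (i + 1)) - M (t i)) ≤ Vr M s := by
  have hMonoOn : MonotoneOn t (Set.Iic k) := fun i hi j hj hij =>
    chain_mono hmono i j hij hj
  unfold a1 Vr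
  rw [Finset.sum_comm]
  refine Finset.sum_le_sum fun p _ => ?_
  rw [Finset.sum_comm]
  refine Finset.sum_le_sum fun q _ => ?_
  have key := eVariationOn.sum_le_of_monotoneOn_Iic (f := fun u => M u p q) (n := k) (u := t)
    hMonoOn (fun i hi => hmem i hi)
  have h2 : ∑ i ∈ Finset.range k, |(M (t (i + 1)) - M (t i)) p q|
      = (∑ i ∈ Finset.range k, edist (M (t (i + 1)) p q) (M (t i) p q)).toReal := by
    rw [ENNReal.toReal_sum (fun i _ => edist_ne_top _ _)]
    refine Finset.sum_congr rfl fun i _ => ?_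
    rw [edist_dist, ENNReal.toReal_ofReal dist_nonneg, Real.dist_eq, Matrix.sub_apply]
  rw [h2]
  exact ENNReal.toReal_mono (hBV p q) key



noncomputable def RSsum (M : ℝ → Matrix (Fin n) (Fin n) ℝ) (g : ℝ → Fin n → ℝ)
    (k : ℕ) (t ξ : ℕ → ℝ) : Fin n → ℝ :=
  ∑ i ∈ Finset.range k, (M (t (i + 1)) - M (t i)).mulVec (g (ξ i))

def IsPart (a b : ℝ) (k : ℕ) (t : ℕ → ℝ) : Prop :=
  t 0 = a ∧ t k = b ∧ ∀ i < k, t i ≤ t (i + 1)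

lemma IsPart.mem {a b : ℝ} {k : ℕ} {t : ℕ → ℝ} (h : IsPart a b k t) {i : ℕ} (hi : i ≤ k) :
    t i ∈ Icc a b := by
  constructor
  · rw [← h.1]; exact chain_mono h.2.2 0 i (Nat.zero_le _) hi
  · rw [← h.2.1]; exact chain_mono h.2.2 i k hi le_rfl

/-- clamp of `x` into the `i`-th subinterval -/
noncomputable def cl (t : ℕ → ℝ) (i : ℕ) (x : ℝ) : ℝ := max (t i) (min (t (i + 1)) x)

lemma cl_mem {t : ℕ → ℝ} {i : ℕ} (h : t i ≤ t (i + 1)) (x : ℝ) :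
    cl t i x ∈ Icc (t i) (t (i + 1)) :=
  ⟨le_max_left _ _, max_le h (min_le_left _ _)⟩

lemma cl_mono {t : ℕ → ℝ} {i : ℕ} {x y : ℝ} (hxy : x ≤ y) : cl t i x ≤ cl t i y :=
  max_le_max le_rfl (min_le_min le_rfl hxy)

lemma cl_left {t : ℕ → ℝ} {i : ℕ} {x : ℝ} (h : x ≤ t i) : cl t i x = t i := by
  unfold cl
  have : min (t (i + 1)) x ≤ t i := (min_le_right _ _).trans h
  exact max_eq_left this

lemma cl_right {t : ℕ → ℝ} {i : ℕ} {x : ℝ} (hti : t i ≤ t (i + 1)) (h : t (i + 1) ≤ x) :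
    cl t i x = t (i + 1) := by
  unfold cl
  rw [min_eq_left h]
  exact max_eq_right hti

lemma sum_mulVec {k : ℕ} (A : ℕ → Matrix (Fin n) (Fin n) ℝ) (v : Fin n → ℝ) :
    (∑ j ∈ Finset.range k, A j).mulVec v = ∑ j ∈ Finset.range k, (A j).mulVec v := by
  induction k with
  | zero => simp [Matrix.zero_mulVec]
  | succ m ih => rw [Finset.sum_range_succ, Finset.sum_range_succ, Matrix.add_mulVec, ih]

/-- telescoping of clamped increments -/
lemma tel (M : ℝ → Matrix (Fin n) (Fin n) ℝ) {k : ℕ} {t : ℕ → ℝ}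
    (hmono : ∀ i < k, t i ≤ t (i + 1)) {x : ℝ} (hx : t 0 ≤ x) (hxk : x ≤ t k) :
    ∑ i ∈ Finset.range k, (M (cl t i x) - M (t i)) = M x - M (t 0) := by
  induction k with
  | zero =>
    have : x = t 0 := le_antisymm hxk hx
    subst this; simp
  | succ m ih =>
    have hmono' : ∀ i < m, t i ≤ t (i + 1) := fun i hi => hmono i (hi.trans (Nat.lt_succ_self m))
    rcases le_total x (t m) with hc | hc
    · rw [Finset.sum_range_succ, ih hmono' hc, cl_left hc]
      simp
    · have hcl : ∀ i < m, cl t i x = t (i + 1) := by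
        intro i hi
        exact cl_right (hmono i (hi.trans (Nat.lt_succ_self m)))
          ((chain_mono hmono (i + 1) m hi (Nat.le_succ m)).trans hc)
      rw [Finset.sum_range_succ]
      have h1 : ∑ i ∈ Finset.range m, (M (cl t i x) - M (t i))
          = ∑ i ∈ Finset.range m, (M (t (i + 1)) - M (t i)) := by
        refine Finset.sum_congr rfl fun i hi => ?_
        rw [hcl i (Finset.mem_range.mp hi)]
      rw [h1, Finset.sum_range_sub (fun i => M (t i))]
      have h2 : cl t m x = x := by
        unfold cl
        rw [min_eq_right hxk]
        exact max_eq_right hc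
      rw [h2]
      abel



lemma sum_range_mul_eq {E : Type*} [AddCommMonoid E] (f : ℕ → E) (k m : ℕ) :
    ∑ l ∈ Finset.range (k * m), f l = ∑ i ∈ Finset.range k, ∑ j ∈ Finset.range m, f (i * m + j) := by
  induction k with
  | zero => simp
  | succ p ih =>
    have h1 : (p + 1) * m = p * m + m := by ring
    rw [h1, Finset.sum_range_add, ih, Finset.sum_range_succ]

lemma IsPart.le {a b : ℝ} {k : ℕ} {t : ℕ → ℝ} (h : IsPart a b k t) : a ≤ b := by
  have := h.mem (Nat.zero_le k); rw [h.1] at this; exact this.2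

lemma sum_double_a1_le {M : ℝ → Matrix (Fin n) (Fin n) ℝ} {a b : ℝ} {k m : ℕ} {t u : ℕ → ℝ}
    (hBV : BVo M (Icc a b)) (hpt : IsPart a b k t) (hpu : IsPart a b m u) (hm : 0 < m) :
    ∑ i ∈ Finset.range k, ∑ j ∈ Finset.range m,
      a1 (M (cl t i (u (j + 1))) - M (cl t i (u j))) ≤ Vr M (Icc a b) := by
  classical
  set w : ℕ → ℝ := fun l => min b (cl t (l / m) (u (l % m))) with hw
  have hab : a ≤ b := hpt.le
  have hw1 : ∀ i < k, ∀ j < m, w (i * m + j) = cl t i (u j) := by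
    intro i hi j hj
    have hd : (i * m + j) / m = i := by
      rw [add_comm, Nat.add_mul_div_right _ _ hm, Nat.div_eq_of_lt hj]; omega
    have hmo : (i * m + j) % m = j := by
      rw [add_comm, Nat.add_mul_mod_self_right, Nat.mod_eq_of_lt hj]
    rw [hw]; simp only [hd, hmo]
    exact min_eq_right ((cl_mem (hpt.2.2 i hi) _).2.trans (hpt.mem hi).2)
  have hw3 : ∀ i < k, w (i * m + m) = t (i + 1) := by
    intro i hi
    have h1 : i * m + m = (i + 1) * m + 0 := by ring
    have hd : ((i + 1) * m + 0) / m = i + 1 := by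
      rw [add_comm, Nat.add_mul_div_right _ _ hm]; simp [Nat.div_eq_of_lt hm]
    have hmo : ((i + 1) * m + 0) % m = 0 := by
      rw [add_comm, Nat.add_mul_mod_self_right]; simp [Nat.mod_eq_of_lt hm]
    rw [h1, hw]; simp only [hd, hmo]
    have hu0 : u 0 = a := hpu.1
    rcases Nat.lt_or_ge (i + 1) k with hik | hik
    · rw [hu0, cl_left (hpt.mem hik.le).1]
      exact min_eq_right (hpt.mem hik.le).2
    · have : i + 1 = k := le_antisymm hi hik
      rw [this, hu0, cl_left ?ha]
      · rw [hpt.2.1]; exact min_self b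
      · rw [hpt.2.1]; exact hab
  have hwsucc : ∀ i < k, ∀ j < m, w (i * m + j + 1) = cl t i (u (j + 1)) := by
    intro i hi j hj
    rcases Nat.lt_or_ge (j + 1) m with hj1 | hj1
    · have : i * m + j + 1 = i * m + (j + 1) := by ring
      rw [this, hw1 i hi (j + 1) hj1]
    · have hjm : j + 1 = m := le_antisymm hj hj1
      have : i * m + j + 1 = i * m + m := by omega
      rw [this, hw3 i hi, hjm, hpu.2.1]
      exact (cl_right (hpt.2.2 i hi) (hpt.mem hi).2).symm
  have hmono : ∀ l < k * m, w l ≤ w (l + 1) := by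
    intro l hl
    have hi : l / m < k := (Nat.div_lt_iff_lt_mul hm).2 hl
    have hj : l % m < m := Nat.mod_lt _ hm
    have hlm : l = (l / m) * m + (l % m) := (Nat.div_add_mod' l m).symm
    rw [hlm, hw1 _ hi _ hj, hwsucc _ hi _ hj]
    exact cl_mono (hpu.2.2 _ hj)
  have hmem : ∀ l ≤ k * m, w l ∈ Icc a b := by
    intro l hl
    rcases Nat.lt_or_ge l (k * m) with hl' | hl'
    · have hi : l / m < k := (Nat.div_lt_iff_lt_mul hm).2 hl'
      have hj : l % m < m := Nat.mod_lt _ hm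
      have hlm : l = (l / m) * m + (l % m) := (Nat.div_add_mod' l m).symm
      rw [hlm, hw1 _ hi _ hj]
      have h1 := cl_mem (hpt.2.2 _ hi) (u (l % m))
      exact ⟨(hpt.mem (le_of_lt hi)).1.trans h1.1, h1.2.trans (hpt.mem hi).2⟩
    · have : l = k * m := le_antisymm hl hl'
      subst this
      rcases Nat.eq_zero_or_pos k with hk | hk
      · subst hk
        simp only [Nat.zero_mul, hw]
        simp only [Nat.zero_div, Nat.zero_mod]
        refine ⟨le_min hab ?_, min_le_left _ _⟩
        calc a = t 0 := hpt.1.symm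
          _ ≤ cl t 0 (u 0) := le_max_left _ _
      · have hk1 : k - 1 < k := Nat.sub_lt hk Nat.one_pos
        have : k * m = (k - 1) * m + m := by
          have : k = (k - 1) + 1 := by omega
          nth_rewrite 1 [this]; ring
        rw [this, hw3 _ hk1]
        have : k - 1 + 1 = k := by omega
        rw [this, hpt.2.1]
        exact ⟨hab, le_rfl⟩
  have key := sum_a1_le hBV (k * m) hmono hmem
  rw [sum_range_mul_eq (fun l => a1 (M (w (l + 1)) - M (w l))) k m] at key
  refine le_trans (le_of_eq ?_) key
  refine Finset.sum_congr rfl fun i hi => Finset.sum_congr rfl fun j hj => ?_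
  rw [hw1 _ (Finset.mem_range.mp hi) _ (Finset.mem_range.mp hj),
    hwsucc _ (Finset.mem_range.mp hi) _ (Finset.mem_range.mp hj)]


lemma abs_sub_le_of_mem {lo hi x y : ℝ} (hx : x ∈ Icc lo hi) (hy : y ∈ Icc lo hi) :
    |x - y| ≤ hi - lo := by
  rw [abs_sub_le_iff]
  constructor <;> [skip; skip] <;>
    · obtain ⟨h1, h2⟩ := hx; obtain ⟨h3, h4⟩ := hy; linarith

lemma side_P {M : ℝ → Matrix (Fin n) (Fin n) ℝ} {g : ℝ → Fin n → ℝ} {a b δ ω : ℝ}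
    {k m : ℕ} {t ξ u : ℕ → ℝ}
    (hBV : BVo M (Icc a b)) (hpt : IsPart a b k t) (hpu : IsPart a b m u) (hm : 0 < m)
    (hmesh : ∀ i < k, t (i + 1) - t i ≤ δ) (hξ : ∀ i < k, ξ i ∈ Icc (t i) (t (i + 1)))
    (hmod : ∀ x ∈ Icc a b, ∀ y ∈ Icc a b, |x - y| ≤ δ → ‖g x - g y‖ ≤ ω) (hω : 0 ≤ ω) :
    ‖RSsum M g k t ξ - ∑ i ∈ Finset.range k, ∑ j ∈ Finset.range m,
        (M (cl t i (u (j + 1))) - M (cl t i (u j))).mulVec (g (cl t i (u j)))‖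
      ≤ Vr M (Icc a b) * ω := by
  have hsub : ∀ i, i < k → Icc (t i) (t (i + 1)) ⊆ Icc a b := by
    intro i hi
    exact Icc_subset_Icc (hpt.mem hi.le).1 (hpt.mem hi).2
  have hstep : RSsum M g k t ξ = ∑ i ∈ Finset.range k, ∑ j ∈ Finset.range m,
      (M (cl t i (u (j + 1))) - M (cl t i (u j))).mulVec (g (ξ i)) := by
    refine Finset.sum_congr rfl fun i hi => ?_
    have hi' := Finset.mem_range.mp hi
    have telI : ∑ j ∈ Finset.range m, (M (cl t i (u (j + 1))) - M (cl t i (u j)))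
        = M (t (i + 1)) - M (t i) := by
      rw [Finset.sum_range_sub (fun j => M (cl t i (u j)))]
      have e1 : cl t i (u m) = t (i + 1) := by
        rw [hpu.2.1]; exact cl_right (hpt.2.2 i hi') (hpt.mem hi').2
      have e2 : cl t i (u 0) = t i := by
        rw [hpu.1]; exact cl_left (hpt.mem hi'.le).1
      rw [e1, e2]
    rw [← telI, sum_mulVec]
  rw [hstep, ← Finset.sum_sub_distrib]
  have h1 : ∀ i ∈ Finset.range k,
      ‖(∑ j ∈ Finset.range m, (M (cl t i (u (j + 1))) - M (cl t i (u j))).mulVec (g (ξ i)))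
        - ∑ j ∈ Finset.range m, (M (cl t i (u (j + 1))) - M (cl t i (u j))).mulVec (g (cl t i (u j)))‖
      ≤ ∑ j ∈ Finset.range m, a1 (M (cl t i (u (j + 1))) - M (cl t i (u j))) * ω := by
    intro i hi
    have hi' := Finset.mem_range.mp hi
    rw [← Finset.sum_sub_distrib]
    refine (norm_sum_le _ _).trans (Finset.sum_le_sum fun j hj => ?_)
    rw [← Matrix.mulVec_sub]
    refine (norm_mulVec_le _ _).trans ?_
    refine mul_le_mul_of_nonneg_left ?_ (a1_nonneg _)
    have hti := hpt.2.2 i hi'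
    have hclm := cl_mem hti (u j)
    refine hmod _ (hsub i hi' (hξ i hi')) _ (hsub i hi' hclm) ?_
    exact (abs_sub_le_of_mem (hξ i hi') hclm).trans (hmesh i hi')
  refine (norm_sum_le _ _).trans ((Finset.sum_le_sum h1).trans ?_)
  simp only [← Finset.sum_mul]
  exact mul_le_mul_of_nonneg_right (sum_double_a1_le hBV hpt hpu hm) hω

lemma side_Q {M : ℝ → Matrix (Fin n) (Fin n) ℝ} {g : ℝ → Fin n → ℝ} {a b δ' ω' : ℝ}
    {k m : ℕ} {t u η : ℕ → ℝ}
    (hBV : BVo M (Icc a b)) (hpt : IsPart a b k t) (hpu : IsPart a b m u) (hm : 0 < m)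
    (hmesh' : ∀ j < m, u (j + 1) - u j ≤ δ') (hη : ∀ j < m, η j ∈ Icc (u j) (u (j + 1)))
    (hmod' : ∀ x ∈ Icc a b, ∀ y ∈ Icc a b, |x - y| ≤ δ' → ‖g x - g y‖ ≤ ω') (hω' : 0 ≤ ω') :
    ‖RSsum M g m u η - ∑ i ∈ Finset.range k, ∑ j ∈ Finset.range m,
        (M (cl t i (u (j + 1))) - M (cl t i (u j))).mulVec (g (cl t i (u j)))‖
      ≤ Vr M (Icc a b) * ω' := by
  have hab : a ≤ b := hpt.le
  have humem : ∀ j, j ≤ m → u j ∈ Icc (t 0) (t k) := by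
    intro j hj
    rw [hpt.1, hpt.2.1]
    exact hpu.mem hj
  have hstep : RSsum M g m u η = ∑ j ∈ Finset.range m, ∑ i ∈ Finset.range k,
      (M (cl t i (u (j + 1))) - M (cl t i (u j))).mulVec (g (η j)) := by
    refine Finset.sum_congr rfl fun j hj => ?_
    have hj' := Finset.mem_range.mp hj
    have A := tel M hpt.2.2 (humem (j+1) hj').1 (humem (j+1) hj').2
    have B := tel M hpt.2.2 (humem j hj'.le).1 (humem j hj'.le).2
    have telJ : ∑ i ∈ Finset.range k, (M (cl t i (u (j + 1))) - M (cl t i (u j)))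
        = M (u (j + 1)) - M (u j) := by
      have : ∑ i ∈ Finset.range k, (M (cl t i (u (j + 1))) - M (cl t i (u j)))
          = ∑ i ∈ Finset.range k, ((M (cl t i (u (j + 1))) - M (t i)) - (M (cl t i (u j)) - M (t i))) := by
        refine Finset.sum_congr rfl fun i _ => ?_
        abel
      rw [this, Finset.sum_sub_distrib, A, B]
      abel
    rw [← telJ, sum_mulVec]
  rw [hstep, Finset.sum_comm (s := Finset.range k), ← Finset.sum_sub_distrib]
  have h1 : ∀ j ∈ Finset.range m,
      ‖(∑ i ∈ Finset.range k, (M (cl t i (u (j + 1))) - M (cl t i (u j))).mulVec (g (η j)))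
        - ∑ i ∈ Finset.range k, (M (cl t i (u (j + 1))) - M (cl t i (u j))).mulVec (g (cl t i (u j)))‖
      ≤ ∑ i ∈ Finset.range k, a1 (M (cl t i (u (j + 1))) - M (cl t i (u j))) * ω' := by
    intro j hj
    have hj' := Finset.mem_range.mp hj
    rw [← Finset.sum_sub_distrib]
    refine (norm_sum_le _ _).trans (Finset.sum_le_sum fun i hi => ?_)
    have hi' := Finset.mem_range.mp hi
    have hti := hpt.2.2 i hi'
    rw [← Matrix.mulVec_sub]
    by_cases hdeg : cl t i (u j) = cl t i (u (j + 1))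
    · rw [hdeg, sub_self, Matrix.zero_mulVec, norm_zero]
      exact mul_nonneg (a1_nonneg _) hω'
    · have hjj : u j ≤ u (j + 1) := hpu.2.2 j hj'
      have h1' : u j ≤ cl t i (u j) := by
        by_contra hc
        push_neg at hc
        have h2' : t (i + 1) < u j := by
          by_contra hc2
          push_neg at hc2
          have : u j ≤ cl t i (u j) := by
            refine le_trans (le_of_eq ?_) (le_max_right _ _)
            exact (min_eq_right hc2).symm
          linarith
        have e1 : cl t i (u j) = t (i + 1) := cl_right hti h2'.le
        have e2 : cl t i (u (j + 1)) = t (i + 1) := cl_right hti (h2'.le.trans hjj)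
        exact hdeg (e1.trans e2.symm)
      have h2' : cl t i (u (j + 1)) ≤ u (j + 1) := by
        by_contra hc
        push_neg at hc
        have h3' : u (j + 1) < t i := by
          by_contra hc2
          push_neg at hc2
          have : cl t i (u (j + 1)) ≤ u (j + 1) := by
            apply max_le ?_ (min_le_right _ _)
            exact hc2
          linarith
        have e1 : cl t i (u (j + 1)) = t i := cl_left h3'.le
        have e2 : cl t i (u j) = t i := cl_left ((hjj.trans_lt h3').le)
        exact hdeg (e2.trans e1.symm)
      have hclmem : cl t i (u j) ∈ Icc (u j) (u (j + 1)) :=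
        ⟨h1', (cl_mono hjj).trans h2'⟩
      have hclab : cl t i (u j) ∈ Icc a b := by
        have h4 := cl_mem hti (u j)
        exact ⟨(hpt.mem hi'.le).1.trans h4.1, h4.2.trans (hpt.mem hi').2⟩
      have hηab : η j ∈ Icc a b := by
        have h5 := hη j hj'
        exact ⟨(hpu.mem hj'.le).1.trans h5.1, h5.2.trans (hpu.mem hj').2⟩
      refine (norm_mulVec_le _ _).trans ?_
      refine mul_le_mul_of_nonneg_left ?_ (a1_nonneg _)
      refine hmod' _ hηab _ hclab ?_
      exact (abs_sub_le_of_mem (hη j hj') hclmem).trans (hmesh' j hj')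
  refine (norm_sum_le _ _).trans ((Finset.sum_le_sum h1).trans ?_)
  simp only [← Finset.sum_mul]
  rw [Finset.sum_comm]
  exact mul_le_mul_of_nonneg_right (sum_double_a1_le hBV hpt hpu hm) hω'

/-- comparison of Riemann–Stieltjes sums of two tagged partitions -/
lemma core {M : ℝ → Matrix (Fin n) (Fin n) ℝ} {g : ℝ → Fin n → ℝ} {a b δ ω δ' ω' : ℝ}
    {k m : ℕ} {t ξ u η : ℕ → ℝ}
    (hBV : BVo M (Icc a b)) (hpt : IsPart a b k t) (hpu : IsPart a b m u) (hm : 0 < m)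
    (hmesh : ∀ i < k, t (i + 1) - t i ≤ δ) (hξ : ∀ i < k, ξ i ∈ Icc (t i) (t (i + 1)))
    (hmesh' : ∀ j < m, u (j + 1) - u j ≤ δ') (hη : ∀ j < m, η j ∈ Icc (u j) (u (j + 1)))
    (hmod : ∀ x ∈ Icc a b, ∀ y ∈ Icc a b, |x - y| ≤ δ → ‖g x - g y‖ ≤ ω) (hω : 0 ≤ ω)
    (hmod' : ∀ x ∈ Icc a b, ∀ y ∈ Icc a b, |x - y| ≤ δ' → ‖g x - g y‖ ≤ ω') (hω' : 0 ≤ ω') :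
    ‖RSsum M g k t ξ - RSsum M g m u η‖ ≤ Vr M (Icc a b) * (ω + ω') := by
  have hP := side_P hBV hpt hpu hm hmesh hξ hmod hω
  have hQ := side_Q hBV hpt hpu hm hmesh' hη hmod' hω'
  have : RSsum M g k t ξ - RSsum M g m u η
      = (RSsum M g k t ξ - ∑ i ∈ Finset.range k, ∑ j ∈ Finset.range m,
          (M (cl t i (u (j + 1))) - M (cl t i (u j))).mulVec (g (cl t i (u j))))
        - (RSsum M g m u η - ∑ i ∈ Finset.range k, ∑ j ∈ Finset.range m,
          (M (cl t i (u (j + 1))) - M (cl t i (u j))).mulVec (g (cl t i (u j)))) := by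
    abel
  rw [this, mul_add]
  exact (norm_sub_le _ _).trans (add_le_add hP hQ)


/-- uniform partition of `[a,b]` into `N+1` pieces -/
noncomputable def up (a b : ℝ) (N : ℕ) : ℕ → ℝ := fun i => a + (b - a) * i / (N + 1)

lemma up_diff (a b : ℝ) (N i : ℕ) : up a b N (i + 1) - up a b N i = (b - a) / (N + 1) := by
  unfold up
  push_cast
  field_simp
  ring

lemma up_isPart {a b : ℝ} (hab : a ≤ b) (N : ℕ) : IsPart a b (N + 1) (up a b N) := by
  refine ⟨by simp [up], ?_, ?_⟩
  · unfold up
    have hN : ((N:ℝ) + 1) ≠ 0 := by positivity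
    field_simp
    push_cast; ring
  · intro i _
    have := up_diff a b N i
    have h2 : (0:ℝ) ≤ (b - a) / (N + 1) := div_nonneg (by linarith) (by positivity)
    linarith

lemma up_pack {a b δ : ℝ} (hab : a ≤ b) {N : ℕ} (hδ : (b - a) / (N + 1) ≤ δ) :
    ∀ i < N + 1, up a b N i ≤ up a b N (i + 1) ∧ up a b N (i + 1) - up a b N i ≤ δ ∧
      up a b N i ∈ Icc (up a b N i) (up a b N (i + 1)) := by
  intro i hi
  have h1 := (up_isPart hab N).2.2 i hi
  exact ⟨h1, by rw [up_diff]; exact hδ, ⟨le_rfl, h1⟩⟩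

lemma exists_N {a b δ : ℝ} (hδ : 0 < δ) : ∃ N : ℕ, (b - a) / (N + 1) ≤ δ := by
  obtain ⟨N, hN⟩ := exists_nat_gt ((b - a) / δ)
  refine ⟨N, ?_⟩
  rw [div_le_iff₀ (by positivity)]
  rw [div_lt_iff₀ hδ] at hN
  nlinarith [hδ.le]

/-- uniform-continuity modulus -/
lemma exists_modulus {g : ℝ → Fin n → ℝ} {a b : ℝ} (hg : ContinuousOn g (Icc a b))
    {ε : ℝ} (hε : 0 < ε) : ∃ δ > 0, ∀ x ∈ Icc a b, ∀ y ∈ Icc a b, |x - y| ≤ δ →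
      ‖g x - g y‖ ≤ ε := by
  have hu : UniformContinuousOn g (Icc a b) :=
    isCompact_Icc.uniformContinuousOn_of_continuous hg
  rw [Metric.uniformContinuousOn_iff] at hu
  obtain ⟨δ, hδ, H⟩ := hu ε hε
  refine ⟨δ / 2, by positivity, fun x hx y hy hxy => ?_⟩
  have : dist x y < δ := by
    rw [Real.dist_eq]; linarith
  have := H x hx y hy this
  rw [dist_eq_norm] at this
  exact this.le

/-- existence of the Riemann–Stieltjes integral of a continuous function
against a matrix function of bounded variation -/
theorem RS_exists {M : ℝ → Matrix (Fin n) (Fin n) ℝ} {g : ℝ → Fin n → ℝ} {a b : ℝ}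
    (hab : a < b) (hBV : BVo M (Icc a b)) (hg : ContinuousOn g (Icc a b)) :
    ∃ v, IsRSIntegral M g a b v := by
  classical
  set V := Vr M (Icc a b) with hV
  have hV0 : 0 ≤ V := Vr_nonneg _ _
  set S : ℕ → (Fin n → ℝ) := fun N => RSsum M g (N + 1) (up a b N) (up a b N) with hS
  -- the basic comparison estimate between any fine partition and `S N`
  have main : ∀ δ > (0:ℝ), ∀ ω ≥ (0:ℝ),
      (∀ x ∈ Icc a b, ∀ y ∈ Icc a b, |x - y| ≤ δ → ‖g x - g y‖ ≤ ω) →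
      ∀ (k : ℕ) (t ξ : ℕ → ℝ), t 0 = a → t k = b →
      (∀ i < k, t i ≤ t (i + 1) ∧ t (i + 1) - t i ≤ δ ∧ ξ i ∈ Icc (t i) (t (i + 1))) →
      ∀ N : ℕ, (b - a) / (N + 1) ≤ δ →
      ‖RSsum M g k t ξ - S N‖ ≤ V * (ω + ω) := by
    intro δ hδ ω hω hmod k t ξ ht0 htk hpk N hN
    have hpt : IsPart a b k t := ⟨ht0, htk, fun i hi => (hpk i hi).1⟩
    refine core hBV hpt (up_isPart hab.le N) (Nat.succ_pos N)
      (fun i hi => (hpk i hi).2.1) (fun i hi => (hpk i hi).2.2)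
      (fun j hj => by rw [up_diff]; exact hN)
      (fun j hj => ⟨le_rfl, (up_isPart hab.le N).2.2 j hj⟩) hmod hω hmod hω
  have hcauchy : CauchySeq S := by
    rw [Metric.cauchySeq_iff]
    intro ε hε
    set ε' := ε / (4 * (V + 1)) with hε'
    have hε'0 : 0 < ε' := by positivity
    obtain ⟨δ, hδ, hmod⟩ := exists_modulus hg hε'0
    obtain ⟨K, hK⟩ := exists_N (a := a) (b := b) hδ
    refine ⟨K, fun p hp q hq => ?_⟩
    have hmesh : ∀ r : ℕ, K ≤ r → (b - a) / (r + 1) ≤ δ := by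
      intro r hr
      refine le_trans ?_ hK
      apply div_le_div_of_nonneg_left (by linarith) (by positivity)
      push_cast; linarith [(Nat.cast_le (α := ℝ)).mpr hr]
    have h1 := main δ hδ ε' hε'0.le hmod (p + 1) (up a b p) (up a b p)
      (up_isPart hab.le p).1 (up_isPart hab.le p).2.1 (up_pack hab.le (hmesh p hp))
      q (hmesh q hq)
    rw [dist_eq_norm]
    calc ‖S p - S q‖ ≤ V * (ε' + ε') := h1
      _ < ε := by
        rw [hε']
        have : V * (ε / (4 * (V + 1)) + ε / (4 * (V + 1))) = ε * (V / (2 * (V + 1))) := by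
          field_simp; ring
        rw [this]
        have h2 : V / (2 * (V + 1)) < 1 := by
          rw [div_lt_one (by positivity)]; linarith
        nlinarith
  obtain ⟨v, hv⟩ := cauchySeq_tendsto_of_complete hcauchy
  refine ⟨v, ?_⟩
  intro ε hε
  set ε' := ε / (4 * (V + 1)) with hε'
  have hε'0 : 0 < ε' := by positivity
  obtain ⟨δ, hδ, hmod⟩ := exists_modulus hg hε'0
  refine ⟨δ, hδ, fun k t ξ ht0 htk hpk => ?_⟩
  have hbound : ∀ᶠ N in Filter.atTop, dist (RSsum M g k t ξ) (S N) ≤ V * (ε' + ε') := by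
    obtain ⟨K, hK⟩ := exists_N (a := a) (b := b) hδ
    refine Filter.eventually_atTop.2 ⟨K, fun N hN => ?_⟩
    have hmesh : (b - a) / (N + 1) ≤ δ := by
      refine le_trans ?_ hK
      apply div_le_div_of_nonneg_left (by linarith) (by positivity)
      push_cast; linarith [(Nat.cast_le (α := ℝ)).mpr hN]
    rw [dist_eq_norm]
    exact main δ hδ ε' hε'0.le hmod k t ξ ht0 htk hpk N hmesh
  have hlim : Filter.Tendsto (fun N => dist (RSsum M g k t ξ) (S N)) Filter.atTop
      (nhds (dist (RSsum M g k t ξ) v)) := (tendsto_const_nhds.dist hv)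
  have h3 : dist (RSsum M g k t ξ) v ≤ V * (ε' + ε') := le_of_tendsto hlim hbound
  refine h3.trans ?_
  rw [hε']
  have : V * (ε / (4 * (V + 1)) + ε / (4 * (V + 1))) = ε * (V / (2 * (V + 1))) := by
    field_simp; ring
  rw [this]
  have h2 : V / (2 * (V + 1)) ≤ 1 := by
    rw [div_le_one (by positivity)]; linarith
  nlinarith

theorem RS_unique {M : ℝ → Matrix (Fin n) (Fin n) ℝ} {g : ℝ → Fin n → ℝ} {a b : ℝ}
    (hab : a < b) {v w : Fin n → ℝ}
    (hv : IsRSIntegral M g a b v) (hw : IsRSIntegral M g a b w) : v = w := by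
  apply eq_of_forall_dist_le
  intro ε hε
  obtain ⟨δ1, hδ1, H1⟩ := hv (ε / 2) (by positivity)
  obtain ⟨δ2, hδ2, H2⟩ := hw (ε / 2) (by positivity)
  obtain ⟨K, hK⟩ := exists_N (a := a) (b := b) (lt_min hδ1 hδ2)
  have hp := up_isPart hab.le K
  have h1 := H1 (K + 1) (up a b K) (up a b K) hp.1 hp.2.1
    (up_pack hab.le (hK.trans (min_le_left _ _)))
  have h2 := H2 (K + 1) (up a b K) (up a b K) hp.1 hp.2.1
    (up_pack hab.le (hK.trans (min_le_right _ _)))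
  calc dist v w ≤ dist v (∑ i ∈ Finset.range (K + 1),
        (M (up a b K (i + 1)) - M (up a b K i)).mulVec (g (up a b K i))) + dist _ w := dist_triangle _ _ _
    _ ≤ ε / 2 + ε / 2 := add_le_add (by rw [dist_comm]; exact h1) h2
    _ = ε := by ring

theorem RS_congr {M : ℝ → Matrix (Fin n) (Fin n) ℝ} {f g : ℝ → Fin n → ℝ} {a b : ℝ}
    {v : Fin n → ℝ} (hfg : ∀ s ∈ Icc a b, f s = g s)
    (hf : IsRSIntegral M f a b v) : IsRSIntegral M g a b v := by
  intro ε hε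
  obtain ⟨δ, hδ, H⟩ := hf ε hε
  refine ⟨δ, hδ, fun k t ξ ht0 htk hpk => ?_⟩
  have hpt : IsPart a b k t := ⟨ht0, htk, fun i hi => (hpk i hi).1⟩
  have : ∑ i ∈ Finset.range k, (M (t (i + 1)) - M (t i)).mulVec (g (ξ i))
      = ∑ i ∈ Finset.range k, (M (t (i + 1)) - M (t i)).mulVec (f (ξ i)) := by
    refine Finset.sum_congr rfl fun i hi => ?_
    have hi' := Finset.mem_range.mp hi
    have hξ : ξ i ∈ Icc a b := by
      have h1 := (hpk i hi').2.2
      exact ⟨(hpt.mem hi'.le).1.trans h1.1, h1.2.trans (hpt.mem hi').2⟩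
    rw [hfg _ hξ]
  rw [this]
  exact H k t ξ ht0 htk hpk

theorem RS_sub {M : ℝ → Matrix (Fin n) (Fin n) ℝ} {f g : ℝ → Fin n → ℝ} {a b : ℝ}
    {v w : Fin n → ℝ} (hf : IsRSIntegral M f a b v) (hg : IsRSIntegral M g a b w) :
    IsRSIntegral M (fun s => f s - g s) a b (v - w) := by
  intro ε hε
  obtain ⟨δ1, hδ1, H1⟩ := hf (ε / 2) (by positivity)
  obtain ⟨δ2, hδ2, H2⟩ := hg (ε / 2) (by positivity)
  refine ⟨min δ1 δ2, lt_min hδ1 hδ2, fun k t ξ ht0 htk hpk => ?_⟩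
  have hpk1 : ∀ i < k, t i ≤ t (i + 1) ∧ t (i + 1) - t i ≤ δ1 ∧ ξ i ∈ Icc (t i) (t (i + 1)) :=
    fun i hi => ⟨(hpk i hi).1, (hpk i hi).2.1.trans (min_le_left _ _), (hpk i hi).2.2⟩
  have hpk2 : ∀ i < k, t i ≤ t (i + 1) ∧ t (i + 1) - t i ≤ δ2 ∧ ξ i ∈ Icc (t i) (t (i + 1)) :=
    fun i hi => ⟨(hpk i hi).1, (hpk i hi).2.1.trans (min_le_right _ _), (hpk i hi).2.2⟩
  have h1 := H1 k t ξ ht0 htk hpk1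
  have h2 := H2 k t ξ ht0 htk hpk2
  have hsum : ∑ i ∈ Finset.range k, (M (t (i + 1)) - M (t i)).mulVec (f (ξ i) - g (ξ i))
      = (∑ i ∈ Finset.range k, (M (t (i + 1)) - M (t i)).mulVec (f (ξ i)))
        - ∑ i ∈ Finset.range k, (M (t (i + 1)) - M (t i)).mulVec (g (ξ i)) := by
    rw [← Finset.sum_sub_distrib]
    exact Finset.sum_congr rfl fun i _ => Matrix.mulVec_sub _ _ _
  rw [show (fun s => f s - g s) = fun s => f s - g s from rfl]
  calc dist (∑ i ∈ Finset.range k, (M (t (i + 1)) - M (t i)).mulVec ((fun s => f s - g s) (ξ i))) (v - w)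
      = ‖(∑ i ∈ Finset.range k, (M (t (i + 1)) - M (t i)).mulVec (f (ξ i)) - v)
        - (∑ i ∈ Finset.range k, (M (t (i + 1)) - M (t i)).mulVec (g (ξ i)) - w)‖ := by
        rw [dist_eq_norm]
        congr 1
        simp only
        rw [hsum]
        abel
    _ ≤ ε / 2 + ε / 2 := by
        refine (norm_sub_le _ _).trans (add_le_add ?_ ?_)
        · rw [← dist_eq_norm]; exact h1
        · rw [← dist_eq_norm]; exact h2
    _ = ε := by ring

theorem RS_zero {M : ℝ → Matrix (Fin n) (Fin n) ℝ} {f : ℝ → Fin n → ℝ} {a b : ℝ}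
    {v : Fin n → ℝ} (hab : a < b) (h0 : ∀ s ∈ Icc a b, f s = 0)
    (hf : IsRSIntegral M f a b v) : v = 0 := by
  apply eq_of_forall_dist_le
  intro ε hε
  obtain ⟨δ, hδ, H⟩ := hf ε hε
  obtain ⟨K, hK⟩ := exists_N (a := a) (b := b) hδ
  have hp := up_isPart hab.le K
  have h1 := H (K + 1) (up a b K) (up a b K) hp.1 hp.2.1 (up_pack hab.le hK)
  have h2 : ∑ i ∈ Finset.range (K + 1),
      (M (up a b K (i + 1)) - M (up a b K i)).mulVec (f (up a b K i)) = 0 := by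
    refine Finset.sum_eq_zero fun i hi => ?_
    rw [h0 _ (hp.mem (Finset.mem_range.mp hi).le), Matrix.mulVec_zero]
  rw [h2] at h1
  rw [dist_comm]
  exact h1

theorem RS_norm_le {M : ℝ → Matrix (Fin n) (Fin n) ℝ} {f : ℝ → Fin n → ℝ} {a b C : ℝ}
    {v : Fin n → ℝ} (hab : a < b) (hBV : BVo M (Icc a b))
    (hC : ∀ s ∈ Icc a b, ‖f s‖ ≤ C) (hf : IsRSIntegral M f a b v) :
    ‖v‖ ≤ Vr M (Icc a b) * C := by
  have hC0 : 0 ≤ C := le_trans (norm_nonneg _) (hC a ⟨le_rfl, hab.le⟩)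
  refine le_of_forall_pos_le_add fun ε hε => ?_
  obtain ⟨δ, hδ, H⟩ := hf ε hε
  obtain ⟨K, hK⟩ := exists_N (a := a) (b := b) hδ
  have hp := up_isPart hab.le K
  have h1 := H (K + 1) (up a b K) (up a b K) hp.1 hp.2.1 (up_pack hab.le hK)
  have h2 : ‖∑ i ∈ Finset.range (K + 1),
      (M (up a b K (i + 1)) - M (up a b K i)).mulVec (f (up a b K i))‖
      ≤ Vr M (Icc a b) * C := by
    refine (norm_sum_le _ _).trans ?_
    have h3 : ∀ i ∈ Finset.range (K + 1),
        ‖(M (up a b K (i + 1)) - M (up a b K i)).mulVec (f (up a b K i))‖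
        ≤ a1 (M (up a b K (i + 1)) - M (up a b K i)) * C := by
      intro i hi
      refine (norm_mulVec_le _ _).trans ?_
      exact mul_le_mul_of_nonneg_left (hC _ (hp.mem (Finset.mem_range.mp hi).le)) (a1_nonneg _)
    refine (Finset.sum_le_sum h3).trans ?_
    rw [← Finset.sum_mul]
    exact mul_le_mul_of_nonneg_right
      (sum_a1_le hBV (K + 1) hp.2.2 (fun i hi => hp.mem hi)) hC0
  have hvS : v = (∑ i ∈ Finset.range (K + 1),
      (M (up a b K (i + 1)) - M (up a b K i)).mulVec (f (up a b K i)))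
      + (v - ∑ i ∈ Finset.range (K + 1),
      (M (up a b K (i + 1)) - M (up a b K i)).mulVec (f (up a b K i))) := by abel
  rw [hvS]
  refine (norm_add_le _ _).trans (add_le_add h2 ?_)
  rw [← dist_eq_norm, dist_comm]
  exact h1


/-- bound for the integral of a function vanishing on `[-1,c]` -/
theorem RS_support {M' : ℝ → Matrix (Fin n) (Fin n) ℝ} {f : ℝ → Fin n → ℝ} {v : Fin n → ℝ}
    {c C : ℝ} (hBV : BVo M' (Icc (-1) 0)) (hc1 : -1 ≤ c) (hc0 : c ≤ 0)
    (h0 : ∀ s ∈ Icc (-1:ℝ) c, f s = 0) (hC : ∀ s ∈ Icc c (0:ℝ), ‖f s‖ ≤ C) (hC0 : 0 ≤ C)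
    (hf : IsRSIntegral M' f (-1) 0 v) : ‖v‖ ≤ Vr M' (Icc c 0) * C := by
  classical
  rcases eq_or_lt_of_le hc0 with hceq | hclt
  · subst hceq
    have hv0 : v = 0 := RS_zero (by norm_num) h0 hf
    rw [hv0, norm_zero]
    exact mul_nonneg (Vr_nonneg _ _) hC0
  · refine le_of_forall_pos_le_add fun ε hε => ?_
    obtain ⟨δ, hδ, H⟩ := hf ε hε
    obtain ⟨K, hK⟩ := exists_N (a := (-1:ℝ)) (b := 0) hδ
    set t := up (-1) 0 K with htdef
    have hp : IsPart (-1) 0 (K + 1) t := up_isPart (by norm_num) K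
    have h1 := H (K + 1) t t hp.1 hp.2.1 (up_pack (by norm_num) hK)
    have hex : ∃ i, c < t i := ⟨K + 1, by rw [hp.2.1]; exact hclt⟩
    set i₀ := Nat.find hex with hi₀def
    have hi₀ : c < t i₀ := Nat.find_spec hex
    have hi₀le : i₀ ≤ K + 1 := Nat.find_le (by rw [hp.2.1]; exact hclt)
    set S := ∑ i ∈ Finset.range (K + 1), (M' (t (i + 1)) - M' (t i)).mulVec (f (t i)) with hSdef
    have hred : S = ∑ i ∈ Finset.Ico i₀ (K + 1), (M' (t (i + 1)) - M' (t i)).mulVec (f (t i)) := by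
      rw [hSdef]
      symm
      apply Finset.sum_subset
      · intro x hx
        rw [Finset.mem_Ico] at hx
        exact Finset.mem_range.mpr hx.2
      · intro x hx hx'
        rw [Finset.mem_range] at hx
        rw [Finset.mem_Ico] at hx'
        have hxi : x < i₀ := by omega
        have htx : t x ≤ c := by
          by_contra hcon
          push_neg at hcon
          exact absurd (Nat.find_min hex hxi) (by simp [hcon])
        rw [h0 (t x) ⟨(hp.mem hx.le).1, htx⟩, Matrix.mulVec_zero]
    have hbd : ‖S‖ ≤ Vr M' (Icc c 0) * C := by
      rw [hred]
      refine (norm_sum_le _ _).trans ?_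
      have h3 : ∀ i ∈ Finset.Ico i₀ (K + 1),
          ‖(M' (t (i + 1)) - M' (t i)).mulVec (f (t i))‖
          ≤ a1 (M' (t (i + 1)) - M' (t i)) * C := by
        intro i hi
        rw [Finset.mem_Ico] at hi
        refine (norm_mulVec_le _ _).trans (mul_le_mul_of_nonneg_left ?_ (a1_nonneg _))
        refine hC _ ⟨?_, (hp.mem hi.2.le).2⟩
        exact hi₀.le.trans (chain_mono hp.2.2 i₀ i hi.1 hi.2.le)
      refine (Finset.sum_le_sum h3).trans ?_
      rw [← Finset.sum_mul]
      refine mul_le_mul_of_nonneg_right ?_ hC0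
      rw [Finset.sum_Ico_eq_sum_range]
      refine sum_a1_le (hBV.mono (Icc_subset_Icc hc1 le_rfl)) (K + 1 - i₀)
        (t := fun j => t (i₀ + j)) ?_ ?_
      · intro i hi
        show t (i₀ + i) ≤ t (i₀ + (i + 1))
        have h9 : i₀ + (i + 1) = (i₀ + i) + 1 := by omega
        rw [h9]
        exact hp.2.2 (i₀ + i) (by omega)
      · intro i hi
        show t (i₀ + i) ∈ Icc c 0
        refine ⟨hi₀.le.trans (chain_mono hp.2.2 i₀ (i₀ + i) (by omega) (by omega)), ?_⟩
        exact (hp.mem (by omega : i₀ + i ≤ K + 1)).2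
    have hvS : v = S + (v - S) := by abel
    rw [hvS]
    refine (norm_add_le _ _).trans (add_le_add hbd ?_)
    rw [← dist_eq_norm, dist_comm]
    exact h1

/-- changing the integrator at the right endpoint changes the integral by the jump term -/
theorem RS_jump {M₁ M₂ : ℝ → Matrix (Fin n) (Fin n) ℝ} {g : ℝ → Fin n → ℝ} {v : Fin n → ℝ}
    (hagree : ∀ s, -1 ≤ s → s < 0 → M₁ s = M₂ s)
    (hg : ContinuousWithinAt g (Icc (-1) 0) 0)
    (h : IsRSIntegral M₁ g (-1) 0 v) :
    IsRSIntegral M₂ g (-1) 0 (v - (M₁ 0 - M₂ 0).mulVec (g 0)) := by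
  classical
  set B₀ := M₁ 0 - M₂ 0 with hB₀
  set E : ℝ → Matrix (Fin n) (Fin n) ℝ := fun s => M₁ s - M₂ s with hE
  have hE0 : ∀ s, -1 ≤ s → s < 0 → E s = 0 := by
    intro s h1 h2
    rw [hE]; simp only
    rw [hagree s h1 h2, sub_self]
  intro ε hε
  obtain ⟨δ₁, hδ₁, H₁⟩ := h (ε / 2) (by positivity)
  have hgc : ∃ δ₂ > (0:ℝ), ∀ s ∈ Icc (-1:ℝ) 0, dist s 0 < δ₂ →
      ‖g s - g 0‖ ≤ ε / (2 * (a1 B₀ + 1)) := by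
    rw [Metric.continuousWithinAt_iff] at hg
    obtain ⟨δ₂, hδ₂, H₂⟩ := hg (ε / (2 * (a1 B₀ + 1)))
      (by have := a1_nonneg B₀; positivity)
    refine ⟨δ₂, hδ₂, fun s hs hds => ?_⟩
    have := H₂ hs hds
    rw [dist_eq_norm] at this
    exact this.le
  obtain ⟨δ₂, hδ₂, H₂⟩ := hgc
  refine ⟨min δ₁ (δ₂ / 2), lt_min hδ₁ (by positivity), fun k t ξ ht0 htk hpk => ?_⟩
  have hpt : IsPart (-1) 0 k t := ⟨ht0, htk, fun i hi => (hpk i hi).1⟩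
  have hpk1 : ∀ i < k, t i ≤ t (i + 1) ∧ t (i + 1) - t i ≤ δ₁ ∧ ξ i ∈ Icc (t i) (t (i + 1)) :=
    fun i hi => ⟨(hpk i hi).1, (hpk i hi).2.1.trans (min_le_left _ _), (hpk i hi).2.2⟩
  have h1 := H₁ k t ξ ht0 htk hpk1
  -- rewrite the M₂-sum in terms of the M₁-sum
  have hsum : ∑ i ∈ Finset.range k, (M₂ (t (i + 1)) - M₂ (t i)).mulVec (g (ξ i))
      = (∑ i ∈ Finset.range k, (M₁ (t (i + 1)) - M₁ (t i)).mulVec (g (ξ i)))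
        - ∑ i ∈ Finset.range k, (E (t (i + 1)) - E (t i)).mulVec (g (ξ i)) := by
    rw [← Finset.sum_sub_distrib]
    refine Finset.sum_congr rfl fun i _ => ?_
    rw [← Matrix.sub_mulVec]
    congr 1
    rw [hE]; simp only; abel
  have hTel : ∑ i ∈ Finset.range k, (E (t (i + 1)) - E (t i)) = B₀ := by
    rw [Finset.sum_range_sub (fun i => E (t i)), htk, ht0,
      hE0 (-1) le_rfl (by norm_num), sub_zero]
  have hDB : (∑ i ∈ Finset.range k, (E (t (i + 1)) - E (t i)).mulVec (g (ξ i)))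
      - B₀.mulVec (g 0)
      = ∑ i ∈ Finset.range k, (E (t (i + 1)) - E (t i)).mulVec (g (ξ i) - g 0) := by
    rw [← hTel, sum_mulVec, ← Finset.sum_sub_distrib]
    exact Finset.sum_congr rfl fun i _ => (Matrix.mulVec_sub _ _ _).symm
  have hzero : ∀ i ∈ Finset.range k,
      (E (t (i + 1)) - E (t i)).mulVec (g (ξ i) - g 0) ≠ 0 → t i < 0 ∧ t (i + 1) = 0 := by
    intro i hi hne
    rw [Finset.mem_range] at hi
    have hti1 : t (i + 1) ≤ 0 := (hpt.mem hi).2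
    rcases lt_or_eq_of_le hti1 with hlt | heq
    · exfalso
      apply hne
      rw [hE0 _ (hpt.mem hi).1 hlt, hE0 _ (hpt.mem hi.le).1 ((hpk i hi).1.trans_lt hlt),
        sub_self, Matrix.zero_mulVec]
    · refine ⟨?_, heq⟩
      by_contra hcon
      push_neg at hcon
      have hti0 : t i = 0 := le_antisymm ((hpk i hi).1.trans_eq heq) hcon
      apply hne
      rw [hti0, heq, sub_self, Matrix.zero_mulVec]
  set s' := (Finset.range k).filter (fun i => t i < 0 ∧ t (i + 1) = 0) with hs'
  have hDfil : ∑ i ∈ Finset.range k, (E (t (i + 1)) - E (t i)).mulVec (g (ξ i) - g 0)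
      = ∑ i ∈ s', (E (t (i + 1)) - E (t i)).mulVec (g (ξ i) - g 0) := by
    rw [hs']
    exact (Finset.sum_filter_of_ne hzero).symm
  have hcard : ∀ a ∈ s', ∀ b ∈ s', a = b := by
    intro p hp q hq
    rw [hs', Finset.mem_filter, Finset.mem_range] at hp hq
    by_contra hne
    rcases Nat.lt_or_ge p q with hpq | hpq
    · have : t (p + 1) ≤ t q := chain_mono hpt.2.2 (p + 1) q hpq hq.1.le
      rw [hp.2.2] at this
      linarith [hq.2.1]
    · have hqp : q < p := by omega
      have : t (q + 1) ≤ t p := chain_mono hpt.2.2 (q + 1) p hqp hp.1.le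
      rw [hq.2.2] at this
      linarith [hp.2.1]
  have hDbound : ‖∑ i ∈ s', (E (t (i + 1)) - E (t i)).mulVec (g (ξ i) - g 0)‖ ≤ ε / 2 := by
    rcases s'.eq_empty_or_nonempty with hemp | ⟨i, hi⟩
    · rw [hemp, Finset.sum_empty, norm_zero]
      positivity
    · have hsing : s' = {i} :=
        Finset.eq_singleton_iff_unique_mem.mpr ⟨hi, fun b hb => hcard b hb i hi⟩
      rw [hsing, Finset.sum_singleton]
      have hif := hi
      rw [hs', Finset.mem_filter, Finset.mem_range] at hif
      obtain ⟨hik, hti, hti1⟩ := hif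
      rw [hti1, hE0 _ (hpt.mem hik.le).1 hti, sub_zero]
      have hξi := (hpk i hik).2.2
      have hξm : ξ i ∈ Icc (-1:ℝ) 0 :=
        ⟨(hpt.mem hik.le).1.trans hξi.1, hξi.2.trans (hpt.mem hik).2⟩
      have hdist : dist (ξ i) 0 < δ₂ := by
        rw [Real.dist_eq, sub_zero, abs_of_nonpos (hξi.2.trans_eq hti1)]
        have h5 := (hpk i hik).2.1
        have h6 : t (i + 1) - t i ≤ δ₂ / 2 := h5.trans (min_le_right _ _)
        have h7 : -ξ i ≤ t (i + 1) - t i := by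
          have := hξi.1
          linarith [hti1.ge, hti1.le]
        linarith
      have h8 := H₂ (ξ i) hξm hdist
      refine (norm_mulVec_le _ _).trans ?_
      have ha1 := a1_nonneg B₀
      calc a1 B₀ * ‖g (ξ i) - g 0‖ ≤ a1 B₀ * (ε / (2 * (a1 B₀ + 1))) :=
            mul_le_mul_of_nonneg_left h8 ha1
        _ = ε * (a1 B₀ / (2 * (a1 B₀ + 1))) := by ring
        _ ≤ ε * (1 / 2) := by
            refine mul_le_mul_of_nonneg_left ?_ hε.le
            rw [div_le_div_iff₀ (by positivity) (by norm_num)]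
            nlinarith
        _ = ε / 2 := by ring
  rw [hE] at hsum hDB
  rw [dist_eq_norm, hsum]
  have heq2 : (∑ i ∈ Finset.range k, (M₁ (t (i + 1)) - M₁ (t i)).mulVec (g (ξ i)))
      - (∑ i ∈ Finset.range k,
          ((fun s => M₁ s - M₂ s) (t (i + 1)) - (fun s => M₁ s - M₂ s) (t i)).mulVec (g (ξ i)))
      - (v - B₀.mulVec (g 0))
      = ((∑ i ∈ Finset.range k, (M₁ (t (i + 1)) - M₁ (t i)).mulVec (g (ξ i))) - v)
        - ((∑ i ∈ Finset.range k,
          ((fun s => M₁ s - M₂ s) (t (i + 1)) - (fun s => M₁ s - M₂ s) (t i)).mulVec (g (ξ i)))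
          - B₀.mulVec (g 0)) := by abel
  rw [heq2, hDB]
  rw [hE] at hDfil
  rw [hDfil]
  refine (norm_sub_le _ _).trans ?_
  rw [hE] at hDbound
  have h1' : ‖(∑ i ∈ Finset.range k, (M₁ (t (i + 1)) - M₁ (t i)).mulVec (g (ξ i))) - v‖ ≤ ε / 2 := by
    rw [← dist_eq_norm]; exact h1
  linarith

lemma sum_edist_toReal (f : ℝ → ℝ) (m : ℕ) (u : ℕ → ℝ) :
    (∑ i ∈ Finset.range m, edist (f (u (i + 1))) (f (u i)))
      = ENNReal.ofReal (∑ i ∈ Finset.range m, |f (u (i + 1)) - f (u i)|) := by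
  rw [ENNReal.ofReal_sum_of_nonneg (fun i _ => abs_nonneg _)]
  exact Finset.sum_congr rfl fun i _ => by rw [edist_dist, Real.dist_eq]

lemma real_sum_le {f : ℝ → ℝ} {s : Set ℝ} (hfin : eVariationOn f s ≠ ⊤) {m : ℕ} {u : ℕ → ℝ}
    (hu : MonotoneOn u (Set.Iic m)) (hus : ∀ i ≤ m, u i ∈ s) :
    ∑ i ∈ Finset.range m, |f (u (i + 1)) - f (u i)| ≤ (eVariationOn f s).toReal := by
  have h := eVariationOn.sum_le_of_monotoneOn_Iic (f := f) hu hus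
  rw [← ENNReal.toReal_ofReal (Finset.sum_nonneg fun i _ => abs_nonneg _),
    ← sum_edist_toReal]
  exact ENNReal.toReal_mono hfin h

lemma evar_split {f : ℝ → ℝ} {s : ℝ} (hs : s ∈ Icc (-1:ℝ) 0) :
    eVariationOn f (Icc (-1) s) + eVariationOn f (Icc s 0) = eVariationOn f (Icc (-1) 0) := by
  have h := eVariationOn.Icc_add_Icc f (s := Icc (-1:ℝ) 0) hs.1 hs.2 hs
  rw [inter_eq_self_of_subset_right (Icc_subset_Icc le_rfl hs.2),
      inter_eq_self_of_subset_right (Icc_subset_Icc hs.1 le_rfl),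
      inter_self] at h
  exact h

lemma small_var {f : ℝ → ℝ} (hBV : BoundedVariationOn f (Icc (-1) 0))
    (hlim : Filter.Tendsto f (nhdsWithin 0 (Iio 0)) (nhds (f 0))) {ε : ℝ} (hε : 0 < ε) :
    ∃ c, -1 < c ∧ c < 0 ∧ (eVariationOn f (Icc c 0)).toReal ≤ ε := by
  classical
  set W : ℝ → ℝ := fun x => (eVariationOn f (Icc (-1) x)).toReal with hW
  have hfin : ∀ x, x ≤ 0 → eVariationOn f (Icc (-1) x) ≠ ⊤ :=
    fun x hx => ne_top_of_le_ne_top hBV (eVariationOn.mono f (Icc_subset_Icc le_rfl hx))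
  have hWmono : ∀ x y, x ≤ y → y ≤ 0 → W x ≤ W y := fun x y hxy hy =>
    ENNReal.toReal_mono (hfin y hy) (eVariationOn.mono f (Icc_subset_Icc le_rfl hxy))
  have hfin2 : ∀ c, -1 ≤ c → eVariationOn f (Icc c 0) ≠ ⊤ :=
    fun c hc => ne_top_of_le_ne_top hBV (eVariationOn.mono f (Icc_subset_Icc hc le_rfl))
  have hsplit : ∀ c, c ∈ Icc (-1:ℝ) 0 → W c + (eVariationOn f (Icc c 0)).toReal = W 0 := by
    intro c hc
    rw [hW]; simp only
    rw [← ENNReal.toReal_add (hfin c hc.2) (hfin2 c hc.1), evar_split hc]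
  set σ := sSup (W '' Ico (-1:ℝ) 0) with hσ
  have hbdd : BddAbove (W '' Ico (-1:ℝ) 0) := by
    refine ⟨W 0, fun w hw => ?_⟩
    obtain ⟨x, hx, rfl⟩ := hw
    exact hWmono x 0 hx.2.le le_rfl
  have hne : (W '' Ico (-1:ℝ) 0).Nonempty := ⟨W (-1), ⟨-1, ⟨le_rfl, by norm_num⟩, rfl⟩⟩
  obtain ⟨w, hwmem, hwgt⟩ := exists_lt_of_lt_csSup hne (show σ - ε / 3 < σ by linarith)
  obtain ⟨s₁, hs₁, rfl⟩ := hwmem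
  rw [Metric.tendsto_nhdsWithin_nhds] at hlim
  obtain ⟨δ₀, hδ₀, Hδ⟩ := hlim (ε / 3) (by positivity)
  set c := max s₁ (max (-(1:ℝ) / 2) (-δ₀ / 2)) with hcdef
  have hc1 : -1 < c :=
    lt_of_lt_of_le (by norm_num) ((le_max_left (-(1:ℝ)/2) (-δ₀/2)).trans (le_max_right s₁ _))
  have hc0 : c < 0 := max_lt hs₁.2 (max_lt (by norm_num) (by linarith))
  have hcδ : -δ₀ / 2 ≤ c := (le_max_right (-(1:ℝ)/2) (-δ₀/2)).trans (le_max_right s₁ _)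
  have hWc : σ - ε / 3 < W c := hwgt.trans_le (hWmono s₁ c (le_max_left _ _) hc0.le)
  have hW0 : ∀ x, 0 ≤ W x := fun x => ENNReal.toReal_nonneg
  have hnear : ∀ x, c ≤ x → x < 0 → |f x - f 0| ≤ ε / 3 := by
    intro x h1 h2
    have hd : dist x 0 < δ₀ := by
      rw [Real.dist_eq, sub_zero, abs_of_neg h2]; linarith
    have := Hδ (mem_Iio.mpr h2) hd
    rw [Real.dist_eq] at this
    exact this.le
  have hkey : eVariationOn f (Icc (-1) 0) ≤ ENNReal.ofReal (W c + 2 * ε / 3) := by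
    apply iSup_le
    rintro ⟨m, u, hu, hus⟩
    simp only
    rw [sum_edist_toReal]
    apply ENNReal.ofReal_le_ofReal
    have hum := hus m
    rcases lt_or_eq_of_le hum.2 with humlt | hume
    · -- u m < 0
      rcases le_or_gt (u m) c with hcase | hcase
      · have h1 : ∑ i ∈ Finset.range m, |f (u (i + 1)) - f (u i)| ≤ W c := by
          refine real_sum_le (hfin c hc0.le) (hu.monotoneOn (Set.Iic _)) fun i hi => ?_
          exact ⟨(hus i).1, (hu hi).trans hcase⟩
        linarith
      · have h1 : ∑ i ∈ Finset.range m, |f (u (i + 1)) - f (u i)| ≤ W (u m) := by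
          refine real_sum_le (hfin (u m) humlt.le) (hu.monotoneOn (Set.Iic _)) fun i hi => ?_
          exact ⟨(hus i).1, hu hi⟩
        have h2 : W (u m) ≤ σ := le_csSup hbdd ⟨u m, ⟨hum.1, humlt⟩, rfl⟩
        linarith
    · -- u m = 0
      rcases lt_or_eq_of_le (hus 0).2 with h0lt | h0e
      · -- u 0 < 0 = u m
        have hexz : ∃ j, u j = 0 := ⟨m, hume⟩
        set j₀ := Nat.find hexz with hj₀def
        have hj₀0 : u j₀ = 0 := Nat.find_spec hexz
        have hj₀m : j₀ ≤ m := Nat.find_min' hexz hume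
        have hj₀pos : 1 ≤ j₀ := by
          rcases Nat.eq_zero_or_pos j₀ with h | h
          · rw [h] at hj₀0; exact absurd hj₀0 (ne_of_lt h0lt)
          · exact h
        have hneg : ∀ i < j₀, u i < 0 :=
          fun i hi => lt_of_le_of_ne (hus i).2 (Nat.find_min hexz hi)
        have htail : ∑ i ∈ Finset.range m, |f (u (i + 1)) - f (u i)|
            = ∑ i ∈ Finset.range j₀, |f (u (i + 1)) - f (u i)| := by
          symm
          apply Finset.sum_subset (Finset.range_subset_range.mpr hj₀m)
          intro x hx hx'
          rw [Finset.mem_range] at hx hx'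
          push_neg at hx'
          have h1 : u x = 0 := le_antisymm (hus x).2 (hj₀0 ▸ hu hx')
          have h2 : u (x + 1) = 0 := le_antisymm (hus (x + 1)).2 (hj₀0 ▸ hu (hx'.trans (Nat.le_succ x)))
          rw [h1, h2, sub_self, abs_zero]
        rw [htail]
        have hj₀split : j₀ = (j₀ - 1) + 1 := by omega
        rw [hj₀split, Finset.sum_range_succ, ← hj₀split, hj₀0]
        set u' := u (j₀ - 1) with hu'def
        have hu'neg : u' < 0 := hneg _ (by omega)
        have hu'mem : u' ∈ Icc (-1:ℝ) 0 := hus (j₀ - 1)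
        rcases le_or_gt u' c with hcase | hcase
        · -- insert c
          set w : ℕ → ℝ := fun i => if i ≤ j₀ - 1 then u i else c with hwdef
          have hwmono : MonotoneOn w (Set.Iic j₀) := by
            intro i hi j hj hij
            rw [hwdef]; simp only
            by_cases h1 : j ≤ j₀ - 1
            · rw [if_pos (hij.trans h1), if_pos h1]; exact hu hij
            · rw [if_neg h1]
              by_cases h2 : i ≤ j₀ - 1
              · rw [if_pos h2]; exact (hu h2).trans hcase
              · rw [if_neg h2]
          have hwmem : ∀ i ≤ j₀, w i ∈ Icc (-1:ℝ) c := by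
            intro i hi
            rw [hwdef]; simp only
            by_cases h1 : i ≤ j₀ - 1
            · rw [if_pos h1]; exact ⟨(hus i).1, (hu h1).trans hcase⟩
            · rw [if_neg h1]; exact ⟨hc1.le, le_rfl⟩
          have hfront := real_sum_le (hfin c hc0.le) hwmono hwmem
          have hsum_eq : ∑ i ∈ Finset.range j₀, |f (w (i + 1)) - f (w i)|
              = (∑ i ∈ Finset.range (j₀ - 1), |f (u (i + 1)) - f (u i)|) + |f c - f u'| := by
            rw [hj₀split, Finset.sum_range_succ, ← hj₀split]
            congr 1
            · refine Finset.sum_congr rfl fun i hi => ?_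
              rw [Finset.mem_range] at hi
              rw [hwdef]; simp only
              rw [if_pos (by omega : i + 1 ≤ j₀ - 1), if_pos (by omega : i ≤ j₀ - 1)]
            · rw [hwdef]; simp only
              rw [if_neg (by omega : ¬ j₀ ≤ j₀ - 1), if_pos (le_refl (j₀ - 1))]
          rw [hsum_eq] at hfront
          have hlast : |f 0 - f u'| ≤ |f c - f u'| + ε / 3 := by
            have h1 := abs_sub_le (f 0) (f c) (f u')
            have h2 : |f 0 - f c| ≤ ε / 3 := by
              rw [abs_sub_comm]; exact hnear c le_rfl hc0
            linarith
          linarith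
        · -- c < u' < 0
          have hfront : ∑ i ∈ Finset.range (j₀ - 1), |f (u (i + 1)) - f (u i)| ≤ W u' := by
            refine real_sum_le (hfin u' hu'neg.le) (hu.monotoneOn (Set.Iic _)) fun i hi => ?_
            exact ⟨(hus i).1, hu hi⟩
          have h2 : W u' ≤ σ := le_csSup hbdd ⟨u', ⟨hu'mem.1, hu'neg⟩, rfl⟩
          have hlast : |f 0 - f u'| ≤ ε / 3 := by
            rw [abs_sub_comm]; exact hnear u' hcase.le hu'neg
          linarith
      · -- u 0 = 0 : everything collapses
        have hall : ∀ i, u i = 0 := fun i => le_antisymm (hus i).2 (h0e ▸ hu (Nat.zero_le i))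
        have : ∑ i ∈ Finset.range m, |f (u (i + 1)) - f (u i)| = 0 := by
          refine Finset.sum_eq_zero fun i _ => ?_
          rw [hall i, hall (i + 1), sub_self, abs_zero]
        rw [this]
        have := hW0 c
        linarith
  have hW0c : W 0 ≤ W c + 2 * ε / 3 := by
    have h1 : (eVariationOn f (Icc (-1) 0)).toReal ≤ (ENNReal.ofReal (W c + 2 * ε / 3)).toReal :=
      ENNReal.toReal_mono ENNReal.ofReal_ne_top hkey
    rw [ENNReal.toReal_ofReal (by have := ENNReal.toReal_nonneg (a := eVariationOn f (Icc (-1) c)); positivity)] at h1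
    exact h1
  have hlast := hsplit c ⟨hc1.le, hc0.le⟩
  exact ⟨c, hc1, hc0, by linarith⟩

lemma bv_update {f : ℝ → ℝ} {d : ℝ} (hBV : BoundedVariationOn f (Icc (-1) 0)) :
    BoundedVariationOn (fun s => if s = 0 then d else f s) (Icc (-1) 0) := by
  classical
  set g : ℝ → ℝ := fun s => if s = 0 then d else f s with hg
  have hgf : ∀ x : ℝ, x < 0 → g x = f x := by
    intro x hx
    rw [hg]; simp only
    rw [if_neg (ne_of_lt hx)]
  have key : eVariationOn g (Icc (-1) 0)
      ≤ eVariationOn f (Icc (-1) 0) + (eVariationOn f (Icc (-1) 0) + edist d (f 0)) := by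
    apply iSup_le
    rintro ⟨m, u, hu, hus⟩
    simp only
    have hum := hus m
    rcases lt_or_eq_of_le hum.2 with humlt | hume
    · have h1 : ∑ i ∈ Finset.range m, edist (g (u (i + 1))) (g (u i))
          = ∑ i ∈ Finset.range m, edist (f (u (i + 1))) (f (u i)) := by
        refine Finset.sum_congr rfl fun i hi => ?_
        rw [Finset.mem_range] at hi
        rw [hgf _ ((hu (Nat.succ_le_of_lt hi)).trans_lt humlt),
          hgf _ ((hu hi.le).trans_lt humlt)]
      rw [h1]
      refine le_trans (eVariationOn.sum_le_of_monotoneOn_Iic (f := f) (hu.monotoneOn (Set.Iic _))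
        (fun i _ => hus i)) ?_
      exact le_add_of_nonneg_right zero_le
    · rcases lt_or_eq_of_le (hus 0).2 with h0lt | h0e
      · have hexz : ∃ j, u j = 0 := ⟨m, hume⟩
        set j₀ := Nat.find hexz with hj₀def
        have hj₀0 : u j₀ = 0 := Nat.find_spec hexz
        have hj₀m : j₀ ≤ m := Nat.find_min' hexz hume
        have hj₀pos : 1 ≤ j₀ := by
          rcases Nat.eq_zero_or_pos j₀ with h | h
          · rw [h] at hj₀0; exact absurd hj₀0 (ne_of_lt h0lt)
          · exact h
        have hneg : ∀ i < j₀, u i < 0 :=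
          fun i hi => lt_of_le_of_ne (hus i).2 (Nat.find_min hexz hi)
        have htail : ∑ i ∈ Finset.range m, edist (g (u (i + 1))) (g (u i))
            = ∑ i ∈ Finset.range j₀, edist (g (u (i + 1))) (g (u i)) := by
          symm
          apply Finset.sum_subset (Finset.range_subset_range.mpr hj₀m)
          intro x hx hx'
          rw [Finset.mem_range] at hx hx'
          push_neg at hx'
          have h1 : u x = 0 := le_antisymm (hus x).2 (hj₀0 ▸ hu hx')
          have h2 : u (x + 1) = 0 :=
            le_antisymm (hus (x + 1)).2 (hj₀0 ▸ hu (hx'.trans (Nat.le_succ x)))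
          rw [h1, h2, edist_self]
        rw [htail]
        have hj₀split : j₀ = (j₀ - 1) + 1 := by omega
        rw [hj₀split, Finset.sum_range_succ, ← hj₀split, hj₀0]
        have hfront : ∑ i ∈ Finset.range (j₀ - 1), edist (g (u (i + 1))) (g (u i))
            ≤ eVariationOn f (Icc (-1) 0) := by
          have h1 : ∑ i ∈ Finset.range (j₀ - 1), edist (g (u (i + 1))) (g (u i))
              = ∑ i ∈ Finset.range (j₀ - 1), edist (f (u (i + 1))) (f (u i)) := by
            refine Finset.sum_congr rfl fun i hi => ?_
            rw [Finset.mem_range] at hi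
            rw [hgf _ (hneg _ (by omega)), hgf _ (hneg _ (by omega))]
          rw [h1]
          exact eVariationOn.sum_le_of_monotoneOn_Iic (f := f) (hu.monotoneOn (Set.Iic _)) (fun i _ => hus i)
        have hlast : edist (g 0) (g (u (j₀ - 1)))
            ≤ eVariationOn f (Icc (-1) 0) + edist d (f 0) := by
          have h1 : g 0 = d := by rw [hg]; simp
          have h2 : g (u (j₀ - 1)) = f (u (j₀ - 1)) := hgf _ (hneg _ (by omega))
          rw [h1, h2]
          refine (edist_triangle d (f 0) (f (u (j₀ - 1)))).trans ?_
          rw [add_comm (eVariationOn f (Icc (-1) 0)) (edist d (f 0))]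
          exact add_le_add le_rfl
            (eVariationOn.edist_le f (by norm_num : (0:ℝ) ∈ Icc (-1:ℝ) 0) (hus (j₀ - 1)))
        exact add_le_add hfront hlast
      · have hall : ∀ i, u i = 0 := fun i => le_antisymm (hus i).2 (h0e ▸ hu (Nat.zero_le i))
        have : ∑ i ∈ Finset.range m, edist (g (u (i + 1))) (g (u i)) = 0 := by
          refine Finset.sum_eq_zero fun i _ => ?_
          rw [hall i, hall (i + 1), edist_self]
        rw [this]
        exact zero_le
  exact ne_top_of_le_ne_top
    (ENNReal.add_ne_top.mpr ⟨hBV, ENNReal.add_ne_top.mpr ⟨hBV, edist_ne_top _ _⟩⟩) key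

/-- one-step extension of a solution from `[ -1, T]` to `[-1, T+α]` via the
Banach fixed point theorem. -/
lemma step_extend {M Mt : ℝ → Matrix (Fin n) (Fin n) ℝ} {Ainv : Matrix (Fin n) (Fin n) ℝ}
    {α : ℝ}
    (hBVt : BVo Mt (Icc (-1) 0))
    (hagree : ∀ s, -1 ≤ s → s < 0 → M s = Mt s)
    (hAl : ∀ w : Fin n → ℝ, Ainv.mulVec (w - (M 0 - Mt 0).mulVec w) = w)
    (hAr : ∀ w : Fin n → ℝ, Ainv.mulVec w - (M 0 - Mt 0).mulVec (Ainv.mulVec w) = w)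
    (hα0 : 0 < α) (hα1 : α ≤ 1)
    (hcontr : a1 Ainv * Vr Mt (Icc (-α) 0) ≤ 1 / 4)
    {T : ℝ} (hT : 0 ≤ T) {xo : ℝ → Fin n → ℝ} (hxoc : Continuous xo)
    (heq : ∀ t, 0 ≤ t → t ≤ T → IsRSIntegral M (fun θ => xo (t + θ)) (-1) 0 (xo t)) :
    ∃ x1 : ℝ → Fin n → ℝ, Continuous x1 ∧ (∀ s, s ≤ T → x1 s = xo s) ∧
      (∀ t, 0 ≤ t → t ≤ T + α → IsRSIntegral M (fun θ => x1 (t + θ)) (-1) 0 (x1 t)) := by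
  classical
  have hTα : T ≤ T + α := by linarith
  haveI : CompactSpace (Icc T (T + α)) := isCompact_iff_compactSpace.mp isCompact_Icc
  set CA := a1 Ainv with hCA
  have hCA0 : 0 ≤ CA := a1_nonneg _
  set V0 := Vr Mt (Icc (-1) 0) with hV0
  have hV00 : 0 ≤ V0 := Vr_nonneg _ _
  have hBVα : BVo Mt (Icc (-α) 0) := hBVt.mono (Icc_subset_Icc (by linarith) le_rfl)
  set Vα := Vr Mt (Icc (-α) 0) with hVα
  have hVα0 : 0 ≤ Vα := Vr_nonneg _ _
  -- the Riemann–Stieltjes value map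
  set RSv : (ℝ → Fin n → ℝ) → (Fin n → ℝ) :=
    fun g => if h : ∃ v, IsRSIntegral Mt g (-1) 0 v then h.choose else 0 with hRSv
  have RSv_spec : ∀ g : ℝ → Fin n → ℝ, ContinuousOn g (Icc (-1) 0) →
      IsRSIntegral Mt g (-1) 0 (RSv g) := by
    intro g hg
    rw [hRSv]; simp only
    rw [dif_pos (RS_exists (by norm_num) hBVt hg)]
    exact (RS_exists (by norm_num) hBVt hg).choose_spec
  -- the extension operator
  set ext : C(Icc T (T + α), Fin n → ℝ) → ℝ → Fin n → ℝ :=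
    fun y s => xo (min s T) + (y (projIcc T (T + α) hTα s) - y (projIcc T (T + α) hTα T))
    with hext
  have hextc : ∀ y, Continuous (ext y) := by
    intro y
    exact (hxoc.comp (continuous_id.min continuous_const)).add
      ((y.continuous.comp continuous_projIcc).sub continuous_const)
  have hext_le : ∀ y s, s ≤ T → ext y s = xo s := by
    intro y s hs
    rw [hext]; simp only
    rw [min_eq_left hs, projIcc_of_le_left _ hs, projIcc_left, sub_self, add_zero]
  have hext_mem : ∀ y s (hs : s ∈ Icc T (T + α)),
      ext y s = xo T + (y ⟨s, hs⟩ - y (projIcc T (T + α) hTα T)) := by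
    intro y s hs
    rw [hext]; simp only
    rw [min_eq_right hs.1, projIcc_of_mem _ hs]
  have hext_lip : ∀ y y' s, ‖ext y s - ext y' s‖ ≤ 2 * dist y y' := by
    intro y y' s
    have h1 : ext y s - ext y' s
        = (y (projIcc T (T + α) hTα s) - y' (projIcc T (T + α) hTα s))
          - (y (projIcc T (T + α) hTα T) - y' (projIcc T (T + α) hTα T)) := by
      rw [hext]; simp only; abel
    rw [h1]
    refine (norm_sub_le _ _).trans ?_
    have h2 := ContinuousMap.dist_apply_le_dist (f := y) (g := y') (projIcc T (T + α) hTα s)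
    have h3 := ContinuousMap.dist_apply_le_dist (f := y) (g := y') (projIcc T (T + α) hTα T)
    rw [dist_eq_norm] at h2 h3
    linarith
  have hext_diff0 : ∀ (y y' : C(Icc T (T + α), Fin n → ℝ)) (s : ℝ), s ≤ T →
      ext y s - ext y' s = 0 := by
    intro y y' s hs
    rw [hext_le y s hs, hext_le y' s hs, sub_self]
  have hgc : ∀ y (τ : ℝ), ContinuousOn (fun θ => ext y (τ + θ)) (Icc (-1) 0) :=
    fun y τ => ((hextc y).comp (continuous_const.add continuous_id)).continuousOn
  -- the iteration map on ℝ, then on the function space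
  set H : C(Icc T (T + α), Fin n → ℝ) → ℝ → (Fin n → ℝ) :=
    fun y τ => Ainv.mulVec (RSv (fun θ => ext y (τ + θ))) with hH
  have hval_diff : ∀ (g h : ℝ → Fin n → ℝ), ContinuousOn g (Icc (-1) 0) →
      ContinuousOn h (Icc (-1) 0) → ∀ C : ℝ, (∀ θ ∈ Icc (-1:ℝ) 0, ‖g θ - h θ‖ ≤ C) →
      ‖RSv g - RSv h‖ ≤ V0 * C := by
    intro g h hg hh C hC
    exact RS_norm_le (by norm_num) hBVt hC (RS_sub (RSv_spec g hg) (RSv_spec h hh))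
  have hHcont : ∀ y, ContinuousOn (H y) (Icc T (T + α)) := by
    intro y
    rw [Metric.continuousOn_iff]
    intro τ₀ hτ₀ ε hε
    set ε' := ε / (2 * (CA + 1) * (V0 + 1)) with hε'
    have hε'0 : 0 < ε' := by positivity
    obtain ⟨δ, hδ, Hmod⟩ := exists_modulus (a := T - 2) (b := T + α + 2)
      ((hextc y).continuousOn) hε'0
    refine ⟨min δ 1, lt_min hδ one_pos, fun τ hτ hdist => ?_⟩
    have hdd : dist (H y τ) (H y τ₀) = ‖Ainv.mulVec (RSv (fun θ => ext y (τ + θ))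
        - RSv (fun θ => ext y (τ₀ + θ)))‖ := by
      rw [hH]; simp only
      rw [dist_eq_norm, Matrix.mulVec_sub]
    have hptw : ∀ θ ∈ Icc (-1:ℝ) 0, ‖ext y (τ + θ) - ext y (τ₀ + θ)‖ ≤ ε' := by
      intro θ hθ
      refine Hmod (τ + θ) ⟨by linarith [hτ.1, hθ.1], by linarith [hτ.2, hθ.2]⟩
        (τ₀ + θ) ⟨by linarith [hτ₀.1, hθ.1], by linarith [hτ₀.2, hθ.2]⟩ ?_
      have h5 : |τ - τ₀| < min δ 1 := by rw [← Real.dist_eq]; exact hdist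
      have h6 : |τ + θ - (τ₀ + θ)| = |τ - τ₀| := by ring_nf
      rw [h6]
      exact ((lt_min_iff.mp h5).1).le
    have hb1 : ‖RSv (fun θ => ext y (τ + θ)) - RSv (fun θ => ext y (τ₀ + θ))‖ ≤ V0 * ε' :=
      hval_diff _ _ (hgc y τ) (hgc y τ₀) ε' hptw
    rw [hdd]
    have hD : (0:ℝ) < 2 * (CA + 1) * (V0 + 1) := by positivity
    calc ‖Ainv.mulVec (RSv (fun θ => ext y (τ + θ)) - RSv (fun θ => ext y (τ₀ + θ)))‖
        ≤ CA * ‖RSv (fun θ => ext y (τ + θ)) - RSv (fun θ => ext y (τ₀ + θ))‖ :=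
          norm_mulVec_le _ _
      _ ≤ CA * (V0 * ε') := mul_le_mul_of_nonneg_left hb1 hCA0
      _ < ε := by
          have hkey : CA * V0 < 2 * (CA + 1) * (V0 + 1) := by nlinarith
          have h8 : CA * (V0 * ε') = ε * ((CA * V0) / (2 * (CA + 1) * (V0 + 1))) := by
            rw [hε']; field_simp
          have h9 : (CA * V0) / (2 * (CA + 1) * (V0 + 1)) < 1 := (div_lt_one hD).mpr hkey
          have h10 : 0 ≤ (CA * V0) / (2 * (CA + 1) * (V0 + 1)) := by positivity
          rw [h8]
          nlinarith
  set Φ : C(Icc T (T + α), Fin n → ℝ) → C(Icc T (T + α), Fin n → ℝ) :=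
    fun y => ⟨fun τ => H y τ.1,
      (hHcont y).comp_continuous continuous_subtype_val (fun τ => τ.2)⟩ with hΦ
  have hΦlip : ∀ y y', dist (Φ y) (Φ y') ≤ (1 / 2) * dist y y' := by
    intro y y'
    rw [ContinuousMap.dist_le (by positivity)]
    intro τ
    have hd : dist (Φ y τ) (Φ y' τ) = ‖Ainv.mulVec (RSv (fun θ => ext y (τ.1 + θ))
        - RSv (fun θ => ext y' (τ.1 + θ)))‖ := by
      rw [hΦ]; simp only [ContinuousMap.coe_mk]
      rw [hH]; simp only
      rw [dist_eq_norm, Matrix.mulVec_sub]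
    rw [hd]
    refine (norm_mulVec_le _ _).trans ?_
    have hsupbd : ‖RSv (fun θ => ext y (τ.1 + θ)) - RSv (fun θ => ext y' (τ.1 + θ))‖
        ≤ Vα * (2 * dist y y') := by
      have hsub := RS_sub (RSv_spec _ (hgc y τ.1)) (RSv_spec _ (hgc y' τ.1))
      have hτm := τ.2
      have hs := RS_support (c := T - τ.1) (C := 2 * dist y y') hBVt
        (by linarith [hτm.2]) (by linarith [hτm.1]) ?_ ?_ (by positivity) hsub
      · refine hs.trans (mul_le_mul_of_nonneg_right ?_ (by positivity))
        exact Vr_mono hBVα (Icc_subset_Icc (by linarith [hτm.2]) le_rfl)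
      · intro θ hθ
        exact hext_diff0 y y' (τ.1 + θ) (by linarith [hθ.2])
      · intro θ hθ
        exact hext_lip y y' (τ.1 + θ)
    calc CA * ‖RSv (fun θ => ext y (τ.1 + θ)) - RSv (fun θ => ext y' (τ.1 + θ))‖
        ≤ CA * (Vα * (2 * dist y y')) := mul_le_mul_of_nonneg_left hsupbd hCA0
      _ ≤ (1 / 2) * dist y y' := by nlinarith [dist_nonneg (x := y) (y := y')]
  have hΦcontr : ContractingWith (1 / 2 : ℝ≥0) Φ := by
    refine ⟨by rw [← NNReal.coe_lt_coe]; norm_num, LipschitzWith.of_dist_le_mul fun y y' => ?_⟩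
    calc dist (Φ y) (Φ y') ≤ (1 / 2) * dist y y' := hΦlip y y'
      _ = ((1 / 2 : ℝ≥0) : ℝ) * dist y y' := by norm_num
  haveI : Nonempty C(Icc T (T + α), Fin n → ℝ) := ⟨ContinuousMap.const _ 0⟩
  set y₀ := hΦcontr.fixedPoint Φ with hy₀
  have hfix : Φ y₀ = y₀ := hΦcontr.fixedPoint_isFixedPt
  have memT : T ∈ Icc T (T + α) := ⟨le_rfl, hTα⟩
  -- the fixed point is pinned at T
  have hP1 : y₀ ⟨T, memT⟩ = xo T := by
    have h1 : y₀ ⟨T, memT⟩ = H y₀ T := by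
      conv_lhs => rw [← hfix]
      rw [hΦ]
      simp only [ContinuousMap.coe_mk]
    rw [h1, hH]; simp only
    have hgx : ∀ θ ∈ Icc (-1:ℝ) 0, (fun θ => ext y₀ (T + θ)) θ = xo (T + θ) :=
      fun θ hθ => hext_le y₀ (T + θ) (by linarith [hθ.2])
    have h2 : IsRSIntegral Mt (fun θ => xo (T + θ)) (-1) 0
        (RSv (fun θ => ext y₀ (T + θ))) := RS_congr hgx (RSv_spec _ (hgc y₀ T))
    have hc9 : Continuous (fun θ : ℝ => xo (T + θ)) := by
      have h11 : Continuous (fun θ : ℝ => T + θ) := continuous_const.add continuous_id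
      have h10 := hxoc.comp h11
      exact h10
    have hcwa : ContinuousWithinAt (fun θ => xo (T + θ)) (Icc (-1) 0) 0 :=
      hc9.continuousWithinAt
    have h4 := RS_jump (g := fun θ => xo (T + θ)) hagree hcwa (heq T hT le_rfl)
    simp only [add_zero] at h4
    have h5 : RSv (fun θ => ext y₀ (T + θ)) = xo T - (M 0 - Mt 0).mulVec (xo T) :=
      RS_unique (by norm_num) h2 h4
    rw [h5]
    exact hAl (xo T)
  set x1 : ℝ → Fin n → ℝ := ext y₀ with hx1
  have hP4 : ∀ s (hs : s ∈ Icc T (T + α)), x1 s = y₀ ⟨s, hs⟩ := by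
    intro s hs
    rw [hx1, hext_mem y₀ s hs, projIcc_left, hP1]
    abel
  refine ⟨x1, hextc y₀, fun s hs => hext_le y₀ s hs, ?_⟩
  intro t ht0 htT1
  rcases le_or_gt t T with hcase | hcase
  · have h1 := heq t ht0 hcase
    have h2 : IsRSIntegral M (fun θ => x1 (t + θ)) (-1) 0 (xo t) :=
      RS_congr (fun θ hθ => (hext_le y₀ (t + θ) (by linarith [hθ.2])).symm) h1
    have hxt : x1 t = xo t := hext_le y₀ t hcase
    rw [hxt]
    exact h2
  · have htm : t ∈ Icc T (T + α) := ⟨hcase.le, htT1⟩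
    have hEq : x1 t = H y₀ t := by
      rw [hP4 t htm]
      conv_lhs => rw [← hfix]
      rw [hΦ]
      simp only [ContinuousMap.coe_mk]
    have hspec : IsRSIntegral Mt (fun θ => x1 (t + θ)) (-1) 0
        (RSv (fun θ => ext y₀ (t + θ))) := RSv_spec _ (hgc y₀ t)
    have hkeyv : RSv (fun θ => ext y₀ (t + θ)) = x1 t - (M 0 - Mt 0).mulVec (x1 t) := by
      rw [hEq, hH]; simp only
      exact (hAr _).symm
    rw [hkeyv] at hspec
    have hc9 : Continuous (fun θ : ℝ => x1 (t + θ)) := by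
      have h11 : Continuous (fun θ : ℝ => t + θ) := continuous_const.add continuous_id
      have h10 := (hextc y₀).comp h11
      exact h10
    have hcwa2 : ContinuousWithinAt (fun θ => x1 (t + θ)) (Icc (-1) 0) 0 :=
      hc9.continuousWithinAt
    have h7 := RS_jump (g := fun θ => x1 (t + θ)) (fun s h1 h2 => (hagree s h1 h2).symm)
      hcwa2 hspec
    simp only [add_zero] at h7
    have hval : x1 t - (M 0 - Mt 0).mulVec (x1 t) - (Mt 0 - M 0).mulVec (x1 t) = x1 t := by
      rw [← neg_sub (M 0) (Mt 0), Matrix.neg_mulVec]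
      abel
    rw [hval] at h7
    exact h7

lemma small_Vr {M' : ℝ → Matrix (Fin n) (Fin n) ℝ} (hBV' : BVo M' (Icc (-1) 0))
    (hlim' : ∀ p q, Filter.Tendsto (fun s => M' s p q) (nhdsWithin 0 (Iio 0))
      (nhds (M' 0 p q)))
    {ε : ℝ} (hε : 0 < ε) : ∃ c, -1 < c ∧ c < 0 ∧ Vr M' (Icc c 0) ≤ ε := by
  classical
  rcases isEmpty_or_nonempty (Fin n) with hemp | hne
  · haveI := hemp
    refine ⟨-1/2, by norm_num, by norm_num, ?_⟩
    unfold Vr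
    rw [Finset.univ_eq_empty, Finset.sum_empty]
    exact hε.le
  · have hn0 : 0 < n := Fin.pos_iff_nonempty.mpr hne
    have hnR : (0:ℝ) < n := by exact_mod_cast hn0
    set ε' := ε / (n * n) with hε'
    have hε'0 : 0 < ε' := by positivity
    have H : ∀ pq : Fin n × Fin n, ∃ c, -1 < c ∧ c < 0 ∧
        (eVariationOn (fun s => M' s pq.1 pq.2) (Icc c 0)).toReal ≤ ε' :=
      fun pq => small_var (hBV' pq.1 pq.2) (hlim' pq.1 pq.2) hε'0
    choose cf h1 h2 h3 using H
    have hne2 : (Finset.univ : Finset (Fin n × Fin n)).Nonempty := Finset.univ_nonempty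
    set c := Finset.univ.sup' hne2 cf with hc
    obtain ⟨pq₀, _, hpq₀⟩ := Finset.exists_mem_eq_sup' hne2 cf
    have hc1 : -1 < c := by rw [hc, hpq₀]; exact h1 pq₀
    have hc0 : c < 0 := by
      rw [hc, Finset.sup'_lt_iff]
      exact fun pq _ => h2 pq
    refine ⟨c, hc1, hc0, ?_⟩
    unfold Vr
    have hstep : ∀ p q : Fin n,
        (eVariationOn (fun s => M' s p q) (Icc c 0)).toReal ≤ ε' := by
      intro p q
      refine le_trans ?_ (h3 (p, q))
      refine ENNReal.toReal_mono ?_ (eVariationOn.mono _ (Icc_subset_Icc ?_ le_rfl))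
      · exact (hBV' p q).mono (Icc_subset_Icc (h1 (p, q)).le le_rfl)
      · exact Finset.le_sup' cf (Finset.mem_univ (p, q))
    calc ∑ p, ∑ q, (eVariationOn (fun s => M' s p q) (Icc c 0)).toReal
        ≤ ∑ p : Fin n, ∑ q : Fin n, ε' := by
          exact Finset.sum_le_sum fun p _ => Finset.sum_le_sum fun q _ => hstep p q
      _ = (n : ℝ) * ((n : ℝ) * ε') := by
          rw [Finset.sum_const, Finset.sum_const]
          simp [Finset.card_univ, mul_assoc]
      _ = ε := by
          rw [hε']
          field_simp

end RSP

open Set RSP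

/-- let `M : [-1,0] → ℝ^{n×n}` be of bounded variation with
`det(I − (M(0) − M(0⁻))) ≠ 0`. For every continuous `φ : [-1,0] → ℝ^n` with
`φ(0) = ∫_{-1}^0 dM(θ) φ(θ)`, there is a continuous `x : [-1,∞) → ℝ^n`, unique on
`[-1,∞)`, restricting to `φ` on `[-1,0]` and satisfying
`x(t) = ∫_{-1}^0 dM(θ) x(t+θ)` for all `t ≥ 0`. -/
theorem stmt0 {n : ℕ} (M : ℝ → Matrix (Fin n) (Fin n) ℝ)
    (hBV : ∀ i j, BoundedVariationOn (fun s => M s i j) (Set.Icc (-1) 0))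
    (Mleft : Matrix (Fin n) (Fin n) ℝ)
    (hlim : ∀ i j, Filter.Tendsto (fun s => M s i j) (nhdsWithin 0 (Set.Iio 0))
      (nhds (Mleft i j)))
    (hdet : (1 - (M 0 - Mleft)).det ≠ 0)
    (φ : ℝ → Fin n → ℝ) (hφc : ContinuousOn φ (Set.Icc (-1) 0))
    (hcompat : IsRSIntegral M φ (-1) 0 (φ 0)) :
    (∃ x : ℝ → Fin n → ℝ, ContinuousOn x (Set.Ici (-1)) ∧
      (∀ s ∈ Set.Icc (-1:ℝ) 0, x s = φ s) ∧
      (∀ t ≥ (0:ℝ), IsRSIntegral M (fun θ => x (t + θ)) (-1) 0 (x t))) ∧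
    (∀ x y : ℝ → Fin n → ℝ,
      (ContinuousOn x (Set.Ici (-1)) ∧ (∀ s ∈ Set.Icc (-1:ℝ) 0, x s = φ s) ∧
        (∀ t ≥ (0:ℝ), IsRSIntegral M (fun θ => x (t + θ)) (-1) 0 (x t))) →
      (ContinuousOn y (Set.Ici (-1)) ∧ (∀ s ∈ Set.Icc (-1:ℝ) 0, y s = φ s) ∧
        (∀ t ≥ (0:ℝ), IsRSIntegral M (fun θ => y (t + θ)) (-1) 0 (y t))) →
      ∀ t ≥ (-1:ℝ), x t = y t) := by
  classical
  set B := M 0 - Mleft with hB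
  set Mt : ℝ → Matrix (Fin n) (Fin n) ℝ := fun s => if s = 0 then Mleft else M s with hMt
  have hMt0 : Mt 0 = Mleft := by rw [hMt]; simp
  have hagree : ∀ s, -1 ≤ s → s < 0 → M s = Mt s := by
    intro s _ h2
    rw [hMt]; simp only
    rw [if_neg (ne_of_lt h2)]
  have hBVM : BVo M (Icc (-1) 0) := hBV
  have hBVt : BVo Mt (Icc (-1) 0) := by
    intro p q
    have h1 : (fun u => Mt u p q) = fun u => if u = 0 then Mleft p q else M u p q := by
      funext u; rw [hMt]; simp only; split_ifs <;> rfl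
    rw [h1]
    exact bv_update (hBV p q)
  have hMtlim : ∀ p q, Filter.Tendsto (fun s => Mt s p q) (nhdsWithin 0 (Iio 0))
      (nhds (Mt 0 p q)) := by
    intro p q
    rw [hMt0]
    refine Filter.Tendsto.congr' ?_ (hlim p q)
    filter_upwards [self_mem_nhdsWithin] with s hs
    rw [hMt]; simp only
    rw [if_neg (ne_of_lt hs)]
  set A := 1 - B with hA
  have hAu : IsUnit A.det := isUnit_iff_ne_zero.mpr hdet
  set Ai := A⁻¹ with hAi
  have hAlin : ∀ w : Fin n → ℝ, w - B.mulVec w = A.mulVec w := by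
    intro w
    rw [hA, Matrix.sub_mulVec (1 : Matrix (Fin n) (Fin n) ℝ) B w, Matrix.one_mulVec]
  have hMMt : M 0 - Mt 0 = B := by rw [hMt0, hB]
  have hAl : ∀ w : Fin n → ℝ, Ai.mulVec (w - (M 0 - Mt 0).mulVec w) = w := by
    intro w
    rw [hMMt, hAlin, Matrix.mulVec_mulVec, Matrix.nonsing_inv_mul A hAu, Matrix.one_mulVec]
  have hAr : ∀ w : Fin n → ℝ, Ai.mulVec w - (M 0 - Mt 0).mulVec (Ai.mulVec w) = w := by
    intro w
    rw [hMMt, hAlin, Matrix.mulVec_mulVec, Matrix.mul_nonsing_inv A hAu, Matrix.one_mulVec]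
  set CA := a1 Ai with hCA
  have hCA0 : 0 ≤ CA := a1_nonneg _
  obtain ⟨c₀, hc₀1, hc₀0, hc₀v⟩ := small_Vr hBVt hMtlim (ε := 1 / (8 * (CA + 1)))
    (by positivity)
  set α := -c₀ with hα
  have hα0 : 0 < α := by rw [hα]; linarith
  have hα1 : α ≤ 1 := by rw [hα]; linarith
  have hcontr : CA * Vr Mt (Icc (-α) 0) ≤ 1 / 4 := by
    have hcc : -α = c₀ := by rw [hα]; ring
    rw [hcc]
    calc CA * Vr Mt (Icc c₀ 0) ≤ CA * (1 / (8 * (CA + 1))) :=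
          mul_le_mul_of_nonneg_left hc₀v hCA0
      _ = CA / (8 * (CA + 1)) := by ring
      _ ≤ 1 / 4 := by
          rw [div_le_div_iff₀ (by positivity) (by norm_num)]
          nlinarith
  -- base solution
  set x₀ : ℝ → Fin n → ℝ := fun s => φ (min 0 (max (-1) s)) with hx₀
  have hclamp : Continuous fun s : ℝ => min 0 (max (-1) s) :=
    continuous_const.min (continuous_const.max continuous_id)
  have hclmem : ∀ s : ℝ, min 0 (max (-1) s) ∈ Icc (-1:ℝ) 0 :=
    fun s => ⟨le_min (by norm_num) (le_max_left _ _), min_le_left _ _⟩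
  have hx₀c : Continuous x₀ := hφc.comp_continuous hclamp hclmem
  have hx₀φ : ∀ s ∈ Icc (-1:ℝ) 0, x₀ s = φ s := by
    intro s hs
    rw [hx₀]; simp only
    rw [max_eq_right hs.1, min_eq_right hs.2]
  have hx₀eq : IsRSIntegral M (fun θ => x₀ (0 + θ)) (-1) 0 (x₀ 0) := by
    have h1 : IsRSIntegral M (fun θ => x₀ (0 + θ)) (-1) 0 (φ 0) :=
      RS_congr (fun s hs => by rw [zero_add]; exact (hx₀φ s hs).symm) hcompat
    rw [show x₀ 0 = φ 0 from hx₀φ 0 ⟨by norm_num, le_rfl⟩]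
    exact h1
  -- partial uniqueness
  have puniq : ∀ (T T' : ℝ) (x y : ℝ → Fin n → ℝ),
      ContinuousOn x (Ici (-1)) → (∀ s ∈ Icc (-1:ℝ) 0, x s = φ s) →
      (∀ t, 0 ≤ t → t ≤ T → IsRSIntegral M (fun θ => x (t + θ)) (-1) 0 (x t)) →
      ContinuousOn y (Ici (-1)) → (∀ s ∈ Icc (-1:ℝ) 0, y s = φ s) →
      (∀ t, 0 ≤ t → t ≤ T' → IsRSIntegral M (fun θ => y (t + θ)) (-1) 0 (y t)) →
      ∀ t, -1 ≤ t → t ≤ T → t ≤ T' → x t = y t := by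
    intro T T' x y hxc hxφ hxeq hyc hyφ hyeq
    have hblock : ∀ m : ℕ, ∀ t, -1 ≤ t → t ≤ (m:ℝ) * α → t ≤ T → t ≤ T' → x t = y t := by
      intro m
      induction m with
      | zero =>
        intro t h1 h2 _ _
        have h2' : t ≤ 0 := by simpa using h2
        rw [hxφ t ⟨h1, h2'⟩, hyφ t ⟨h1, h2'⟩]
      | succ m ih =>
        intro t h1 h2 hT hT'
        rcases le_or_gt t ((m:ℝ) * α) with hcs | hcs
        · exact ih t h1 hcs hT hT'
        · have hmα0 : (0:ℝ) ≤ (m:ℝ) * α := mul_nonneg (Nat.cast_nonneg m) hα0.le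
          have h2' : t ≤ (m:ℝ) * α + α := by
            push_cast at h2; linarith
          set J := Icc ((m:ℝ) * α) (min ((m:ℝ) * α + α) (min T T')) with hJ
          have htJ : t ∈ J := ⟨hcs.le, le_min h2' (le_min hT hT')⟩
          have hJne : J.Nonempty := ⟨t, htJ⟩
          have hJsub : J ⊆ Ici (-1:ℝ) := fun s hs => le_trans (by linarith) hs.1
          have hzc : ContinuousOn (fun s => ‖x s - y s‖) J :=
            (((hxc.mono hJsub).sub (hyc.mono hJsub)).norm)
          obtain ⟨tm, htmJ, htmax'⟩ := isCompact_Icc.exists_isMaxOn hJne hzc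
          have htmax : ∀ s ∈ J, ‖x s - y s‖ ≤ ‖x tm - y tm‖ := fun s hs => htmax' hs
          set S := ‖x tm - y tm‖ with hS
          have hS0 : 0 ≤ S := norm_nonneg _
          have hkey : ∀ τ ∈ J, ‖x τ - y τ‖ ≤ (1/4) * S := by
            intro τ hτ
            have hτ0 : 0 ≤ τ := le_trans hmα0 hτ.1
            have hτT : τ ≤ T := le_trans hτ.2 ((min_le_right _ _).trans (min_le_left _ _))
            have hτT' : τ ≤ T' := le_trans hτ.2 ((min_le_right _ _).trans (min_le_right _ _))
            have hτα : τ ≤ (m:ℝ) * α + α := le_trans hτ.2 (min_le_left _ _)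
            have hsub := RS_sub (hxeq τ hτ0 hτT) (hyeq τ hτ0 hτT')
            have hmapsx : ∀ θ ∈ Icc (-1:ℝ) 0, τ + θ ∈ Ici (-1:ℝ) :=
              fun θ hθ => Set.mem_Ici.mpr (by linarith [hθ.1])
            have haddc : Continuous (fun θ : ℝ => τ + θ) := continuous_const.add continuous_id
            have hxint : ContinuousOn (fun θ => x (τ + θ)) (Icc (-1) 0) :=
              hxc.comp haddc.continuousOn hmapsx
            have hyint : ContinuousOn (fun θ => y (τ + θ)) (Icc (-1) 0) :=
              hyc.comp haddc.continuousOn hmapsx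
            have hzint : ContinuousOn (fun θ => x (τ + θ) - y (τ + θ)) (Icc (-1) 0) :=
              hxint.sub hyint
            have h7 := RS_jump (g := fun θ => x (τ + θ) - y (τ + θ)) hagree
              (hzint.continuousWithinAt ⟨by norm_num, le_rfl⟩) hsub
            simp only [add_zero] at h7
            have hsupp := RS_support (c := (m:ℝ) * α - τ) (C := S) hBVt
              (by linarith) (by linarith [hτ.1]) ?_ ?_ hS0 h7
            · have hmono2 : Vr Mt (Icc ((m:ℝ) * α - τ) 0) ≤ Vr Mt (Icc (-α) 0) :=
                Vr_mono (hBVt.mono (Icc_subset_Icc (by linarith) le_rfl))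
                  (Icc_subset_Icc (by linarith) le_rfl)
              have h8 : x τ - y τ
                  = Ai.mulVec ((x τ - y τ) - (M 0 - Mt 0).mulVec (x τ - y τ)) :=
                (hAl _).symm
              calc ‖x τ - y τ‖
                  = ‖Ai.mulVec ((x τ - y τ) - (M 0 - Mt 0).mulVec (x τ - y τ))‖ := by
                    rw [← h8]
                _ ≤ CA * ‖(x τ - y τ) - (M 0 - Mt 0).mulVec (x τ - y τ)‖ :=
                    norm_mulVec_le _ _
                _ ≤ CA * (Vr Mt (Icc ((m:ℝ) * α - τ) 0) * S) :=
                    mul_le_mul_of_nonneg_left hsupp hCA0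
                _ = (CA * Vr Mt (Icc ((m:ℝ) * α - τ) 0)) * S := by ring
                _ ≤ (1/4) * S := by
                    refine mul_le_mul_of_nonneg_right ?_ hS0
                    exact (mul_le_mul_of_nonneg_left hmono2 hCA0).trans hcontr
            · intro θ hθ
              have hxy := ih (τ + θ) (by linarith [hθ.1]) (by linarith [hθ.2])
                (by linarith [hθ.2, hτ.1]) (by linarith [hθ.2, hτ.1])
              rw [hxy, sub_self]
            · intro θ hθ
              have hmem : τ + θ ∈ J :=
                ⟨by linarith [hθ.1], le_trans (by linarith [hθ.2]) hτ.2⟩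
              exact htmax (τ + θ) hmem
          have hSz : S ≤ (1/4) * S := hkey tm htmJ
          have hfin := hkey t htJ
          have h9 : ‖x t - y t‖ ≤ 0 := by linarith
          have h10 : x t - y t = 0 := norm_le_zero_iff.mp h9
          exact sub_eq_zero.mp h10
    intro t h1 h2 h3
    obtain ⟨m, hm⟩ := exists_nat_ge (t / α)
    have h4 : t ≤ (m:ℝ) * α := by
      rw [div_le_iff₀ hα0] at hm
      linarith
    exact hblock m t h1 h4 h2 h3
  -- existence chain
  have hchain : ∀ m : ℕ, ∃ f : ℝ → Fin n → ℝ, Continuous f ∧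
      (∀ s ∈ Icc (-1:ℝ) 0, f s = φ s) ∧
      (∀ t, 0 ≤ t → t ≤ (m:ℝ) * α → IsRSIntegral M (fun θ => f (t + θ)) (-1) 0 (f t)) := by
    intro m
    induction m with
    | zero =>
      refine ⟨x₀, hx₀c, hx₀φ, ?_⟩
      intro t ht0 ht1
      have h5 : t = 0 := le_antisymm (by simpa using ht1) ht0
      subst h5
      exact hx₀eq
    | succ m ih =>
      obtain ⟨f, hfc, hfφ, hfeq⟩ := ih
      obtain ⟨x1, hx1c, hx1a, hx1eq⟩ := step_extend hBVt hagree hAl hAr hα0 hα1 hcontr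
        (T := (m:ℝ) * α) (mul_nonneg (Nat.cast_nonneg m) hα0.le) hfc hfeq
      refine ⟨x1, hx1c, ?_, ?_⟩
      · intro s hs
        rw [hx1a s (hs.2.trans (mul_nonneg (Nat.cast_nonneg m) hα0.le)), hfφ s hs]
      · intro t ht0 ht1
        apply hx1eq t ht0
        push_cast at ht1
        linarith
  set X : ℕ → ℝ → Fin n → ℝ := fun m => (hchain m).choose with hX
  have hXs : ∀ m : ℕ, Continuous (X m) ∧ (∀ s ∈ Icc (-1:ℝ) 0, X m s = φ s) ∧
      (∀ t, 0 ≤ t → t ≤ (m:ℝ) * α → IsRSIntegral M (fun θ => X m (t + θ)) (-1) 0 (X m t)) :=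
    fun m => (hchain m).choose_spec
  set mf : ℝ → ℕ := fun t => ⌈(t + 1) / α⌉₊ with hmf
  have hmf_le : ∀ t : ℝ, t ≤ (mf t : ℝ) * α := by
    intro t
    rcases le_or_gt (t + 1) 0 with h | h
    · have : (0:ℝ) ≤ (mf t : ℝ) * α := mul_nonneg (Nat.cast_nonneg _) hα0.le
      linarith
    · have h5 := Nat.le_ceil ((t + 1) / α)
      rw [div_le_iff₀ hα0] at h5
      have : t + 1 ≤ (mf t : ℝ) * α := by
        rw [hmf]
        exact h5
      linarith
  set x : ℝ → Fin n → ℝ := fun t => X (mf t) t with hx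
  have hglue : ∀ (m : ℕ) (s : ℝ), -1 ≤ s → s ≤ (m:ℝ) * α → x s = X m s := by
    intro m s h1 h2
    rw [hx]; simp only
    exact puniq ((mf s : ℝ) * α) ((m:ℝ) * α) (X (mf s)) (X m)
      (hXs (mf s)).1.continuousOn (hXs (mf s)).2.1 (hXs (mf s)).2.2
      (hXs m).1.continuousOn (hXs m).2.1 (hXs m).2.2 s h1 (hmf_le s) h2
  constructor
  · refine ⟨x, ?_, ?_, ?_⟩
    · intro t₀ ht₀
      set m := mf t₀ + 1 with hm
      have hlt : t₀ < (m:ℝ) * α := by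
        have h5 := hmf_le t₀
        rw [hm]
        push_cast
        nlinarith
      have hev : x =ᶠ[nhdsWithin t₀ (Ici (-1))] X m := by
        have h5 : Iio ((m:ℝ) * α) ∈ nhdsWithin t₀ (Ici (-1)) :=
          mem_nhdsWithin_of_mem_nhds (Iio_mem_nhds hlt)
        have h6 : Ici (-1:ℝ) ∈ nhdsWithin t₀ (Ici (-1)) := self_mem_nhdsWithin
        filter_upwards [h5, h6] with s hs5 hs6
        exact hglue m s hs6 (le_of_lt hs5)
      have hx0 : x t₀ = X m t₀ := hglue m t₀ ht₀ hlt.le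
      exact ContinuousWithinAt.congr_of_eventuallyEq
        ((hXs m).1.continuousWithinAt) hev hx0
    · intro s hs
      rw [hglue 0 s hs.1 (by simpa using hs.2)]
      exact (hXs 0).2.1 s hs
    · intro t ht0
      have h2 := (hXs (mf t)).2.2 t ht0 (hmf_le t)
      have h3 : IsRSIntegral M (fun θ => x (t + θ)) (-1) 0 (X (mf t) t) := by
        refine RS_congr (fun θ hθ => ?_) h2
        exact (hglue (mf t) (t + θ) (by linarith [hθ.1]) (by linarith [hmf_le t, hθ.2])).symm
      rw [show x t = X (mf t) t from hglue (mf t) t (by linarith) (hmf_le t)]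
      exact h3
  · rintro x' y' ⟨hx'c, hx'φ, hx'eq⟩ ⟨hy'c, hy'φ, hy'eq⟩ t ht
    exact puniq t t x' y' hx'c hx'φ (fun τ h0 _ => hx'eq τ h0)
      hy'c hy'φ (fun τ h0 _ => hy'eq τ h0) t ht le_rfl le_rfl
end

section
/- Let M : [-1,0] → ℝ^{n×n} be of bounded variation with lim_{s→0⁻} Var M on [s,0] equal to 0. Then there exists α ∈ (0,1] such that Var M on [−α,0] < 1, and for any continuous initial condition φ satisfying φ(0) = ∫_{-1}^0 dM(θ)φ(θ), the map S on {x ∈ C([-1,α];ℝ^n) : x|_{[-1,0]} = φ} defined by S(x)(t) = φ(t) for t ∈ [-1,0] and S(x)(t) = ∫_{-1}^0 dM(θ) x(t+θ) for t ∈ (0,α] is a contraction with Lipschitz constant Var M on [−α,0] in the supremum norm. -/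
open scoped ENNReal

attribute [local instance] Matrix.linftyOpNormedAddCommGroup

/-- Total variation of a matrix-valued function on `[a,b]`, with respect to the operator
norm induced by the sup norm on `ℝ^n`. -/
noncomputable def MatVarOn {n : ℕ} (M : ℝ → Matrix (Fin n) (Fin n) ℝ) (a b : ℝ) : ℝ≥0∞ :=
  ⨆ (k : ℕ) (t : Fin (k + 1) → ℝ)
    (_ : Monotone t ∧ t 0 = a ∧ t (Fin.last k) = b),
      ENNReal.ofReal (∑ i : Fin k, ‖M (t i.succ) - M (t i.castSucc)‖)

/-- local-to-global monotonicity for `ℕ`-indexed partitions. -/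
lemma chain_mono (p : ℕ → ℝ) (K : ℕ) (h : ∀ i < K, p i ≤ p (i + 1)) :
    ∀ j ≤ K, ∀ i ≤ j, p i ≤ p j := by
  intro j
  induction j with
  | zero =>
    intro _ i hi
    have : i = 0 := Nat.le_zero.mp hi
    simp [this]
  | succ m ih =>
    intro hj i hi
    rcases Nat.eq_or_lt_of_le hi with rfl | hlt
    · exact le_refl _
    · exact le_trans (ih (by omega) i (by omega)) (h m (by omega))

/-- A `ℕ`-indexed partition sum of norms is at most the total variation. -/
lemma sum_le_matVarOn {n : ℕ} (M : ℝ → Matrix (Fin n) (Fin n) ℝ) {a b : ℝ}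
    (N : ℕ) (p : ℕ → ℝ) (h0 : p 0 = a) (hN : p N = b)
    (hstep : ∀ i < N, p i ≤ p (i + 1)) :
    ENNReal.ofReal (∑ i ∈ Finset.range N, ‖M (p (i + 1)) - M (p i)‖) ≤ MatVarOn M a b := by
  have hglob := chain_mono p N hstep
  refine le_iSup_of_le N (le_iSup_of_le (fun i : Fin (N + 1) => p i) (le_iSup_of_le ⟨?_, ?_, ?_⟩ ?_))
  · intro i j hij
    exact hglob (j : ℕ) (Nat.lt_succ_iff.mp j.isLt) (i : ℕ) hij
  · simpa using h0
  · simpa using hN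
  · apply le_of_eq
    congr 1
    rw [← Fin.sum_univ_eq_sum_range (fun i => ‖M (p (i + 1)) - M (p i)‖) N]
    apply Finset.sum_congr rfl
    intro i _
    simp [Fin.val_succ, Fin.coe_castSucc]

/-- Main contraction estimate, for any suitable `α`. -/
lemma key_estimate {n : ℕ} (M : ℝ → Matrix (Fin n) (Fin n) ℝ) {α : ℝ}
    (hα0 : 0 < α) (hα1 : α ≤ 1) (hfin : MatVarOn M (-α) 0 ≠ ⊤) :
    ∀ φ : ℝ → Fin n → ℝ, ContinuousOn φ (Set.Icc (-1) 0) →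
        IsRSIntegral M φ (-1) 0 (φ 0) →
        ∀ x y Sx Sy : ℝ → Fin n → ℝ,
          ContinuousOn x (Set.Icc (-1) α) → ContinuousOn y (Set.Icc (-1) α) →
          (∀ s ∈ Set.Icc (-1:ℝ) 0, x s = φ s) → (∀ s ∈ Set.Icc (-1:ℝ) 0, y s = φ s) →
          (∀ s ∈ Set.Icc (-1:ℝ) 0, Sx s = φ s) →
          (∀ t ∈ Set.Ioc (0:ℝ) α, IsRSIntegral M (fun θ => x (t + θ)) (-1) 0 (Sx t)) →
          (∀ s ∈ Set.Icc (-1:ℝ) 0, Sy s = φ s) →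
          (∀ t ∈ Set.Ioc (0:ℝ) α, IsRSIntegral M (fun θ => y (t + θ)) (-1) 0 (Sy t)) →
          ∀ t ∈ Set.Icc (-1:ℝ) α,
            dist (Sx t) (Sy t) ≤
              (MatVarOn M (-α) 0).toReal *
                sSup ((fun s => dist (x s) (y s)) '' Set.Icc (-1) α) := by
  intro φ hφc hφRS x y Sx Sy hx hy hxφ hyφ hSxφ hSxI hSyφ hSyI t ht
  set D := sSup ((fun s => dist (x s) (y s)) '' Set.Icc (-1) α) with hDdef
  have h1α : (-1:ℝ) ≤ α := by linarith
  have hbdd : BddAbove ((fun s => dist (x s) (y s)) '' Set.Icc (-1) α) :=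
    (isCompact_Icc.image_of_continuousOn (continuous_dist.comp_continuousOn (hx.prodMk hy))).bddAbove
  have hmem : ∀ s ∈ Set.Icc (-1:ℝ) α, dist (x s) (y s) ≤ D :=
    fun s hs => le_csSup hbdd ⟨s, hs, rfl⟩
  have hD0 : 0 ≤ D := le_trans dist_nonneg (hmem (-1) ⟨le_refl _, h1α⟩)
  have hV0 : 0 ≤ (MatVarOn M (-α) 0).toReal := ENNReal.toReal_nonneg
  rcases le_or_gt t 0 with hle | hpos
  · rw [hSxφ t ⟨ht.1, hle⟩, hSyφ t ⟨ht.1, hle⟩, dist_self]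
    exact mul_nonneg hV0 hD0
  · apply le_of_forall_pos_le_add
    intro ε hε
    obtain ⟨δx, hδx, hRx⟩ := hSxI t ⟨hpos, ht.2⟩ (ε / 2) (by linarith)
    obtain ⟨δy, hδy, hRy⟩ := hSyI t ⟨hpos, ht.2⟩ (ε / 2) (by linarith)
    obtain ⟨m, hm⟩ := exists_nat_one_div_lt (lt_min hδx hδy)
    set N := m + 1 with hNdef
    have hNR : (0:ℝ) < N := by positivity
    have hδ : 1 / (N : ℝ) ≤ min δx δy := by
      have : ((N : ℕ) : ℝ) = (m : ℝ) + 1 := by rw [hNdef]; push_cast; ring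
      rw [this]; exact le_of_lt hm
    have ht1 : t ≤ 1 := le_trans ht.2 hα1
    set p : ℕ → ℝ := fun i => if i ≤ N then -1 + (i : ℝ) * ((1 - t) / N)
      else -t + ((i : ℝ) - N) * (t / N) with hpdef
    have hpfst : ∀ i, i ≤ N → p i = -1 + (i : ℝ) * ((1 - t) / N) := by
      intro i hi; simp [hpdef, hi]
    have hpsnd : ∀ i, N ≤ i → p i = -t + ((i : ℝ) - N) * (t / N) := by
      intro i hi
      rcases Nat.eq_or_lt_of_le hi with rfl | hlt
      · rw [hpfst N le_rfl]; field_simp; ring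
      · have : ¬ i ≤ N := by omega
        simp [hpdef, this]
    have hp0 : p 0 = -1 := by rw [hpfst 0 (by omega)]; simp
    have hpN : p N = -t := by rw [hpsnd N le_rfl]; simp
    have hp2N : p (2 * N) = 0 := by
      rw [hpsnd (2 * N) (by omega)]
      push_cast
      field_simp
      ring
    have hstep : ∀ i < 2 * N, p i ≤ p (i + 1) ∧ p (i + 1) - p i ≤ min δx δy := by
      intro i hi
      rcases Nat.lt_or_ge i N with h | h
      · have e1 := hpfst i (by omega)
        have e2 := hpfst (i + 1) (by omega)
        have hdiff : p (i + 1) - p i = (1 - t) / N := by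
          rw [e1, e2]; push_cast; ring
        have h1 : (0:ℝ) ≤ (1 - t) / N := div_nonneg (by linarith) hNR.le
        refine ⟨by linarith [hdiff], ?_⟩
        rw [hdiff]
        refine le_trans ?_ hδ
        gcongr
        · linarith
      · have e1 := hpsnd i h
        have e2 := hpsnd (i + 1) (by omega)
        have hdiff : p (i + 1) - p i = t / N := by
          rw [e1, e2]; push_cast; ring
        have h1 : (0:ℝ) ≤ t / N := div_nonneg hpos.le hNR.le
        refine ⟨by linarith [hdiff], ?_⟩
        rw [hdiff]
        refine le_trans ?_ hδ
        gcongr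
    have hmono := chain_mono p (2 * N) (fun i hi => (hstep i hi).1)
    have hcond : ∀ i < 2 * N, p i ≤ p (i + 1) ∧ p (i + 1) - p i ≤ min δx δy ∧
        p i ∈ Set.Icc (p i) (p (i + 1)) :=
      fun i hi => ⟨(hstep i hi).1, (hstep i hi).2, le_refl _, (hstep i hi).1⟩
    have hRx' := hRx (2 * N) p p hp0 hp2N
      (fun i hi => ⟨(hcond i hi).1, le_trans (hcond i hi).2.1 (min_le_left _ _), (hcond i hi).2.2⟩)
    have hRy' := hRy (2 * N) p p hp0 hp2N
      (fun i hi => ⟨(hcond i hi).1, le_trans (hcond i hi).2.1 (min_le_right _ _), (hcond i hi).2.2⟩)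
    set Rx := ∑ i ∈ Finset.range (2 * N), (M (p (i + 1)) - M (p i)).mulVec (x (t + p i)) with hRxdef
    set Ry := ∑ i ∈ Finset.range (2 * N), (M (p (i + 1)) - M (p i)).mulVec (y (t + p i)) with hRydef
    have hdiffsum : Rx - Ry =
        ∑ i ∈ Finset.Ico N (2 * N), (M (p (i + 1)) - M (p i)).mulVec (x (t + p i) - y (t + p i)) := by
      rw [hRxdef, hRydef, ← Finset.sum_sub_distrib]
      rw [Finset.sum_congr rfl (fun i _ => (Matrix.mulVec_sub (M (p (i + 1)) - M (p i))
        (x (t + p i)) (y (t + p i))).symm)]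
      rw [Finset.range_eq_Ico, ← Finset.sum_Ico_consecutive _ (Nat.zero_le N) (by omega : N ≤ 2 * N)]
      have hzero : ∑ i ∈ Finset.Ico 0 N,
          (M (p (i + 1)) - M (p i)).mulVec (x (t + p i) - y (t + p i)) = 0 := by
        apply Finset.sum_eq_zero
        intro i hi
        have hiN : i < N := (Finset.mem_Ico.mp hi).2
        have hple : p i ≤ -t := by
          have := hmono N (by omega) i (by omega)
          rw [hpN] at this; exact this
        have hpge : -1 ≤ p i := by
          have := hmono i (by omega) 0 (Nat.zero_le _)
          rw [hp0] at this; exact this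
        have hmem' : t + p i ∈ Set.Icc (-1:ℝ) 0 := ⟨by linarith, by linarith⟩
        rw [hxφ _ hmem', hyφ _ hmem', sub_self, Matrix.mulVec_zero]
      rw [hzero, zero_add]
    have hvarsum : ∑ i ∈ Finset.Ico N (2 * N), ‖M (p (i + 1)) - M (p i)‖ ≤
        (MatVarOn M (-α) 0).toReal := by
      set r : ℕ → ℝ := fun j => if j = 0 then -α else p (N + (j - 1)) with hrdef
      have hr0 : r 0 = -α := by simp [hrdef]
      have hrs : ∀ j, 1 ≤ j → r j = p (N + (j - 1)) := by
        intro j hj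
        have : j ≠ 0 := by omega
        simp [hrdef, this]
      have hrN : r (N + 1) = 0 := by
        rw [hrs _ (by omega)]
        have : N + (N + 1 - 1) = 2 * N := by omega
        rw [this, hp2N]
      have hrstep : ∀ j < N + 1, r j ≤ r (j + 1) := by
        intro j hj
        rcases Nat.eq_zero_or_pos j with rfl | hjpos
        · rw [hr0, hrs 1 le_rfl]
          have : N + (1 - 1) = N := by omega
          rw [this, hpN]
          linarith [ht.2]
        · rw [hrs j (by omega), hrs (j + 1) (by omega)]
          have e1 : N + (j + 1 - 1) = (N + (j - 1)) + 1 := by omega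
          rw [e1]
          exact (hstep (N + (j - 1)) (by omega)).1
      have h1 := sum_le_matVarOn M (N + 1) r hr0 hrN hrstep
      have hsum_le : ∑ i ∈ Finset.Ico N (2 * N), ‖M (p (i + 1)) - M (p i)‖ ≤
          ∑ j ∈ Finset.range (N + 1), ‖M (r (j + 1)) - M (r j)‖ := by
        rw [Finset.sum_Ico_eq_sum_range]
        have h2N : 2 * N - N = N := by omega
        rw [h2N, Finset.sum_range_succ' (fun j => ‖M (r (j + 1)) - M (r j)‖) N]
        have heq : ∀ j ∈ Finset.range N,
            ‖M (p (N + j + 1)) - M (p (N + j))‖ = ‖M (r (j + 1 + 1)) - M (r (j + 1))‖ := by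
          intro j _
          rw [hrs (j + 1 + 1) (by omega), hrs (j + 1) (by omega)]
          have e1 : N + (j + 1 + 1 - 1) = N + j + 1 := by omega
          have e2 : N + (j + 1 - 1) = N + j := by omega
          rw [e1, e2]
        rw [Finset.sum_congr rfl heq]
        exact le_add_of_nonneg_right (norm_nonneg _)
      have hnn : (0:ℝ) ≤ ∑ j ∈ Finset.range (N + 1), ‖M (r (j + 1)) - M (r j)‖ :=
        Finset.sum_nonneg (fun j _ => norm_nonneg _)
      calc ∑ i ∈ Finset.Ico N (2 * N), ‖M (p (i + 1)) - M (p i)‖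
          ≤ ∑ j ∈ Finset.range (N + 1), ‖M (r (j + 1)) - M (r j)‖ := hsum_le
        _ = (ENNReal.ofReal (∑ j ∈ Finset.range (N + 1), ‖M (r (j + 1)) - M (r j)‖)).toReal :=
            (ENNReal.toReal_ofReal hnn).symm
        _ ≤ (MatVarOn M (-α) 0).toReal := ENNReal.toReal_mono hfin h1
    have hRxRy : dist Rx Ry ≤ (MatVarOn M (-α) 0).toReal * D := by
      rw [dist_eq_norm, hdiffsum]
      calc ‖∑ i ∈ Finset.Ico N (2 * N),
              (M (p (i + 1)) - M (p i)).mulVec (x (t + p i) - y (t + p i))‖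
          ≤ ∑ i ∈ Finset.Ico N (2 * N),
              ‖(M (p (i + 1)) - M (p i)).mulVec (x (t + p i) - y (t + p i))‖ :=
            norm_sum_le _ _
        _ ≤ ∑ i ∈ Finset.Ico N (2 * N), ‖M (p (i + 1)) - M (p i)‖ * D := by
            apply Finset.sum_le_sum
            intro i hi
            obtain ⟨hiN, hi2N⟩ := Finset.mem_Ico.mp hi
            refine le_trans (Matrix.linfty_opNorm_mulVec _ _) ?_
            apply mul_le_mul_of_nonneg_left ?_ (norm_nonneg _)
            have hple : p i ≤ 0 := by
              have := hmono (2 * N) le_rfl i (by omega)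
              rw [hp2N] at this; exact this
            have hpge : -t ≤ p i := by
              have := hmono i (by omega) N hiN
              rw [hpN] at this; exact this
            have hmem' : t + p i ∈ Set.Icc (-1:ℝ) α := ⟨by linarith, by linarith [ht.2]⟩
            rw [← dist_eq_norm]
            exact hmem _ hmem'
        _ = (∑ i ∈ Finset.Ico N (2 * N), ‖M (p (i + 1)) - M (p i)‖) * D :=
            (Finset.sum_mul _ _ _).symm
        _ ≤ (MatVarOn M (-α) 0).toReal * D := mul_le_mul_of_nonneg_right hvarsum hD0
    calc dist (Sx t) (Sy t) ≤ dist (Sx t) Rx + dist Rx Ry + dist Ry (Sy t) :=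
          dist_triangle4 _ _ _ _
      _ ≤ ε / 2 + (MatVarOn M (-α) 0).toReal * D + ε / 2 := by
          refine add_le_add (add_le_add ?_ hRxRy) hRy'
          rw [dist_comm]; exact hRx'
      _ = (MatVarOn M (-α) 0).toReal * D + ε := by ring

/-- if `M : [-1,0] → ℝ^{n×n}` is of bounded variation with
`Var M|_{[s,0]} → 0` as `s → 0⁻`, then there is `α ∈ (0,1]` with `Var M|_{[-α,0]} < 1`
such that for every continuous compatible initial condition `φ`, the fixed-point operator
`S` (equal to `φ` on `[-1,0]`, and to `t ↦ ∫_{-1}^0 dM(θ) x(t+θ)` on `(0,α]`) is a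
contraction on `{x ∈ C([-1,α];ℝ^n) : x|_{[-1,0]} = φ}` with Lipschitz constant
`Var M|_{[-α,0]}` in the supremum norm. -/
theorem stmt1 {n : ℕ} (M : ℝ → Matrix (Fin n) (Fin n) ℝ)
    (hBV : MatVarOn M (-1) 0 < ⊤)
    (hvar : Filter.Tendsto (fun s => MatVarOn M s 0) (nhdsWithin 0 (Set.Iio 0)) (nhds 0)) :
    ∃ α : ℝ, α ∈ Set.Ioc (0:ℝ) 1 ∧ MatVarOn M (-α) 0 < 1 ∧
      ∀ φ : ℝ → Fin n → ℝ, ContinuousOn φ (Set.Icc (-1) 0) →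
        IsRSIntegral M φ (-1) 0 (φ 0) →
        ∀ x y Sx Sy : ℝ → Fin n → ℝ,
          ContinuousOn x (Set.Icc (-1) α) → ContinuousOn y (Set.Icc (-1) α) →
          (∀ s ∈ Set.Icc (-1:ℝ) 0, x s = φ s) → (∀ s ∈ Set.Icc (-1:ℝ) 0, y s = φ s) →
          (∀ s ∈ Set.Icc (-1:ℝ) 0, Sx s = φ s) →
          (∀ t ∈ Set.Ioc (0:ℝ) α, IsRSIntegral M (fun θ => x (t + θ)) (-1) 0 (Sx t)) →
          (∀ s ∈ Set.Icc (-1:ℝ) 0, Sy s = φ s) →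
          (∀ t ∈ Set.Ioc (0:ℝ) α, IsRSIntegral M (fun θ => y (t + θ)) (-1) 0 (Sy t)) →
          ∀ t ∈ Set.Icc (-1:ℝ) α,
            dist (Sx t) (Sy t) ≤
              (MatVarOn M (-α) 0).toReal *
                sSup ((fun s => dist (x s) (y s)) '' Set.Icc (-1) α) := by
  have h1 : ∀ᶠ s in nhdsWithin (0:ℝ) (Set.Iio 0), MatVarOn M s 0 < 1 :=
    hvar.eventually_lt_const (by norm_num)
  have h2 : ∀ᶠ s in nhdsWithin (0:ℝ) (Set.Iio 0), -1 < s :=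
    (eventually_gt_nhds (by norm_num : (-1:ℝ) < 0)).filter_mono nhdsWithin_le_nhds
  have h3 : ∀ᶠ s in nhdsWithin (0:ℝ) (Set.Iio 0), s < 0 :=
    eventually_mem_nhdsWithin.mono (fun s hs => hs)
  obtain ⟨s, hs1, hs2, hs3⟩ := (h1.and (h2.and h3)).exists
  have hns : -(-s) = s := neg_neg s
  refine ⟨-s, ⟨by linarith, by linarith⟩, by rw [hns]; exact hs1, ?_⟩
  exact key_estimate M (by linarith) (by linarith)
    (by rw [hns]; exact (hs1.trans ENNReal.one_lt_top).ne)
end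

section
/- Let x : [-1,∞) → ℝ be continuous and suppose there exists L ∈ [0,1) such that |x(t)| ≤ L · sup_{s ∈ [t-1,t]} |x(s)| for all t ≥ 0. Then there exist constants K > 0 and α > 0, depending only on L, such that sup_{s∈[t-1,t]} |x(s)| ≤ K e^{−αt} sup_{s∈[-1,0]} |x(s)| for all t ≥ 0. -/
/-- If a continuous `x : [-1,∞) → ℝ` satisfies
`|x(t)| ≤ L · sup_{s∈[t-1,t]} |x(s)|` for all `t ≥ 0` with `L ∈ [0,1)`, then the running
sup of `|x|` over windows of length one decays exponentially, with constants depending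
only on `L`. -/
theorem stmt5 (L : ℝ) (hL0 : 0 ≤ L) (hL1 : L < 1) :
    ∃ K > (0:ℝ), ∃ α > (0:ℝ),
      ∀ x : ℝ → ℝ, ContinuousOn x (Set.Ici (-1)) →
        (∀ t ≥ (0:ℝ), |x t| ≤ L * sSup ((fun s => |x s|) '' Set.Icc (t - 1) t)) →
        ∀ t ≥ (0:ℝ),
          sSup ((fun s => |x s|) '' Set.Icc (t - 1) t) ≤
            K * Real.exp (-α * t) * sSup ((fun s => |x s|) '' Set.Icc (-1) 0) := by
  set L' : ℝ := max L (1/2) with hL'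
  have hL'0 : (0:ℝ) < L' := lt_of_lt_of_le one_half_pos (le_max_right _ _)
  have hL'1 : L' < 1 := max_lt hL1 (by norm_num)
  have hLL' : L ≤ L' := le_max_left _ _
  refine ⟨Real.exp (-Real.log L'), Real.exp_pos _, -Real.log L',
    neg_pos.mpr (Real.log_neg hL'0 hL'1), ?_⟩
  intro x hc hx t ht
  set M : ℝ → ℝ := fun u => sSup ((fun s => |x s|) '' Set.Icc (u - 1) u) with hM
  have hM0eq : sSup ((fun s => |x s|) '' Set.Icc (-1:ℝ) 0) = M 0 := by
    rw [hM]; norm_num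
  have hsub : ∀ u ≥ (0:ℝ), Set.Icc (u-1) u ⊆ Set.Ici (-1 : ℝ) := by
    intro u hu s hs; exact le_trans (by linarith) hs.1
  have hbdd : ∀ u ≥ (0:ℝ), BddAbove ((fun s => |x s|) '' Set.Icc (u - 1) u) := by
    intro u hu
    exact (isCompact_Icc.image_of_continuousOn ((hc.mono (hsub u hu)).abs)).bddAbove
  have hne : ∀ u : ℝ, ((fun s => |x s|) '' Set.Icc (u - 1) u).Nonempty :=
    fun u => (Set.nonempty_Icc.mpr (by linarith)).image _
  have hle : ∀ u ≥ (0:ℝ), ∀ s ∈ Set.Icc (u-1) u, |x s| ≤ M u := by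
    intro u hu s hs; exact le_csSup (hbdd u hu) ⟨s, hs, rfl⟩
  have hM0 : ∀ u ≥ (0:ℝ), 0 ≤ M u := fun u hu =>
    le_trans (abs_nonneg _) (hle u hu u ⟨by linarith, le_refl u⟩)
  -- key estimate: the sup over [t₀-1, u] equals M t₀ for u ≥ t₀
  have key : ∀ t₀ ≥ (0:ℝ), ∀ u ≥ t₀, ∀ s ∈ Set.Icc (t₀ - 1) u, |x s| ≤ M t₀ := by
    intro t₀ ht₀ u hu s hs
    set S := sSup ((fun s => |x s|) '' Set.Icc (t₀ - 1) u) with hS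
    have hsub' : Set.Icc (t₀-1) u ⊆ Set.Ici (-1:ℝ) := fun r hr => le_trans (by linarith) hr.1
    have hbddS : BddAbove ((fun s => |x s|) '' Set.Icc (t₀ - 1) u) :=
      (isCompact_Icc.image_of_continuousOn ((hc.mono hsub').abs)).bddAbove
    have hsS : ∀ r ∈ Set.Icc (t₀-1) u, |x r| ≤ S := fun r hr => le_csSup hbddS ⟨r, hr, rfl⟩
    have hSmax : S ≤ max (M t₀) (L * S) := by
      apply csSup_le ((Set.nonempty_Icc.mpr (by linarith)).image _)
      rintro y ⟨r, hr, rfl⟩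
      rcases le_or_gt r t₀ with h | h
      · exact le_max_of_le_left (hle t₀ ht₀ r ⟨hr.1, h⟩)
      · have hr0 : (0:ℝ) ≤ r := le_trans ht₀ h.le
        have h1 : |x r| ≤ L * M r := hx r hr0
        have h2 : M r ≤ S := by
          apply csSup_le (hne r)
          rintro y ⟨p, hp, rfl⟩
          exact hsS p ⟨by linarith [hp.1, hr.1], le_trans hp.2 hr.2⟩
        calc |x r| ≤ L * M r := h1
          _ ≤ L * S := mul_le_mul_of_nonneg_left h2 hL0
          _ ≤ max (M t₀) (L * S) := le_max_right _ _
    have hSle : S ≤ M t₀ := by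
      rcases max_cases (M t₀) (L * S) with ⟨heq, _⟩ | ⟨heq, _⟩
      · rwa [heq] at hSmax
      · rw [heq] at hSmax
        have hS0 : S ≤ 0 := by nlinarith
        linarith [hM0 t₀ ht₀]
    exact le_trans (hsS s hs) hSle
  have hmono : ∀ t₀ ≥ (0:ℝ), ∀ u ≥ t₀, M u ≤ M t₀ := by
    intro t₀ ht₀ u hu
    apply csSup_le (hne u)
    rintro y ⟨s, hs, rfl⟩
    exact key t₀ ht₀ u hu s ⟨by linarith [hs.1], hs.2⟩
  have hstep : ∀ t₀ ≥ (0:ℝ), M (t₀ + 1) ≤ L' * M t₀ := by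
    intro t₀ ht₀
    apply csSup_le (hne _)
    rintro y ⟨s, hs, rfl⟩
    have hst : t₀ ≤ s := by linarith [hs.1]
    have hs0 : (0:ℝ) ≤ s := le_trans ht₀ hst
    calc |x s| ≤ L * M s := hx s hs0
      _ ≤ L' * M t₀ :=
        mul_le_mul hLL' (hmono t₀ ht₀ s hst) (hM0 s hs0) (le_of_lt hL'0)
  have hiter : ∀ n : ℕ, M n ≤ L'^n * M 0 := by
    intro n; induction n with
    | zero => simp
    | succ k ih =>
      have hk := hstep k (Nat.cast_nonneg k)
      push_cast
      calc M ((k:ℝ) + 1) ≤ L' * M k := hk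
        _ ≤ L' * (L'^k * M 0) := mul_le_mul_of_nonneg_left ih (le_of_lt hL'0)
        _ = L'^(k+1) * M 0 := by ring
  set n := ⌊t⌋₊ with hn
  have hnt : (n:ℝ) ≤ t := Nat.floor_le ht
  have htn : t < n + 1 := Nat.lt_floor_add_one t
  have h1 : M t ≤ M n := hmono n (Nat.cast_nonneg n) t hnt
  have h3 : L'^n ≤ Real.exp (-Real.log L') * Real.exp (-(-Real.log L') * t) := by
    rw [← Real.exp_add]
    have hpow : (L':ℝ)^n = Real.exp (n * Real.log L') := by
      rw [← Real.log_pow, Real.exp_log (pow_pos hL'0 n)]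
    rw [hpow]
    apply Real.exp_le_exp.mpr
    have hlog : Real.log L' < 0 := Real.log_neg hL'0 hL'1
    nlinarith
  rw [hM0eq]
  calc M t ≤ M n := h1
    _ ≤ L'^n * M 0 := hiter n
    _ ≤ (Real.exp (-Real.log L') * Real.exp (-(-Real.log L') * t)) * M 0 :=
        mul_le_mul_of_nonneg_right h3 (hM0 0 le_rfl)
    _ = _ := by ring
end

section
/- (Generalized Melvin Criterion, easy direction of equivalence) For a scalar delay-difference equation x(t) = ∫_{-1}^0 x(t+θ)dμ(θ) with μ a finite signed Borel measure on [-1,0]: if |μ|([-1,0]) < 1 then the equation is strongly stable (i.e., for every Borel-measurable φ:[-1,0]→[-1,0] with φ_*μ admissible, the perturbed system x(t) = ∫_{-1}^0 x(t+θ) d(φ_*μ)(θ) is exponentially stable); conversely, if |μ|([-1,0]) ≥ 1, then the equation is not locally strongly stable: for every ε > 0 there exists Borel-measurable φ with sup|φ − id| < ε such that the perturbed system is not exponentially stable. -/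
open MeasureTheory

/-- The integral of a function against a finite signed measure, via Jordan decomposition. -/
noncomputable def signedIntegral {α : Type*} [MeasurableSpace α]
    (μ : SignedMeasure α) (f : α → ℝ) : ℝ :=
  (∫ x, f x ∂μ.toJordanDecomposition.posPart) - ∫ x, f x ∂μ.toJordanDecomposition.negPart

/-- Exponential stability of the scalar delay-difference equation
`x(t) = ∫_{-1}^0 x(t+θ) dν(θ)`. -/
def ExpStable (ν : SignedMeasure ℝ) : Prop :=
  ∃ K > (0:ℝ), ∃ α > (0:ℝ),
    ∀ x : ℝ → ℝ, ContinuousOn x (Set.Ici (-1)) →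
      (∀ t ≥ (0:ℝ), x t = signedIntegral ν (fun θ => x (t + θ))) →
      ∀ t ≥ (0:ℝ), ∀ θ ∈ Set.Icc (-1:ℝ) 0,
        |x (t + θ)| ≤ K * Real.exp (-α * t) * sSup ((fun s => |x s|) '' Set.Icc (-1) 0)

/-- Admissibility of a scalar measure: the atom at `0` has mass different from `1`. -/
def Admissible (ν : SignedMeasure ℝ) : Prop := ν {0} ≠ 1


open scoped ENNReal

-- decomposition of map
lemma map_eq_sub (μ : SignedMeasure ℝ) (φ : ℝ → ℝ) (hφ : Measurable φ) :
    μ.map φ = (μ.toJordanDecomposition.posPart.map φ).toSignedMeasure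
            - (μ.toJordanDecomposition.negPart.map φ).toSignedMeasure := by
  ext i hi
  rw [VectorMeasure.map_apply _ hφ hi, VectorMeasure.sub_apply,
    Measure.toSignedMeasure_apply_measurable hi, Measure.toSignedMeasure_apply_measurable hi,
    map_measureReal_apply hφ hi, map_measureReal_apply hφ hi]
  conv_lhs => rw [← μ.toSignedMeasure_toJordanDecomposition]
  rw [JordanDecomposition.toSignedMeasure]
  rw [VectorMeasure.sub_apply,
    Measure.toSignedMeasure_apply_measurable (hφ hi), Measure.toSignedMeasure_apply_measurable (hφ hi)]


lemma balance (a b : Measure ℝ) [IsFiniteMeasure a] [IsFiniteMeasure b] :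
    a + (a.toSignedMeasure - b.toSignedMeasure).toJordanDecomposition.negPart
      = b + (a.toSignedMeasure - b.toSignedMeasure).toJordanDecomposition.posPart := by
  set s := a.toSignedMeasure - b.toSignedMeasure with hs
  have h1 : s = s.toJordanDecomposition.posPart.toSignedMeasure
      - s.toJordanDecomposition.negPart.toSignedMeasure := by
    conv_lhs => rw [← s.toSignedMeasure_toJordanDecomposition]
    rfl
  rw [← Measure.toSignedMeasure_eq_toSignedMeasure_iff, Measure.toSignedMeasure_add,
    Measure.toSignedMeasure_add]
  have := hs ▸ h1
  rw [sub_eq_sub_iff_add_eq_add] at this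
  linear_combination (norm := skip) this
  abel

lemma part_null (a b : Measure ℝ) [IsFiniteMeasure a] [IsFiniteMeasure b]
    {A : Set ℝ} (ha : a Aᶜ = 0) (hb : b Aᶜ = 0) :
    (a.toSignedMeasure - b.toSignedMeasure).toJordanDecomposition.posPart Aᶜ = 0 ∧
    (a.toSignedMeasure - b.toSignedMeasure).toJordanDecomposition.negPart Aᶜ = 0 := by
  set s := a.toSignedMeasure - b.toSignedMeasure with hs
  obtain ⟨v, hv, h1, h2⟩ := s.toJordanDecomposition.mutuallySingular
  have hbal := balance a b
  constructor
  · have e1 : s.toJordanDecomposition.posPart (Aᶜ ∩ v) = 0 :=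
      measure_mono_null Set.inter_subset_right h1
    have e2 : s.toJordanDecomposition.posPart (Aᶜ ∩ vᶜ) = 0 := by
      have := congrArg (fun m => m (Aᶜ ∩ vᶜ)) hbal
      simp only [Measure.add_apply] at this
      have ha' : a (Aᶜ ∩ vᶜ) = 0 := measure_mono_null Set.inter_subset_left ha
      have hn' : s.toJordanDecomposition.negPart (Aᶜ ∩ vᶜ) = 0 :=
        measure_mono_null Set.inter_subset_right h2
      rw [ha', hn'] at this
      rw [add_zero] at this; exact ((add_eq_zero).mp this.symm).2
    have : Aᶜ ⊆ (Aᶜ ∩ v) ∪ (Aᶜ ∩ vᶜ) := by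
      intro x hx; by_cases h : x ∈ v
      · exact Or.inl ⟨hx, h⟩
      · exact Or.inr ⟨hx, h⟩
    exact measure_mono_null this ((measure_union_null_iff).mpr ⟨e1, e2⟩ ▸
      (by rw [measure_union_null e1 e2] ))
  · have e1 : s.toJordanDecomposition.negPart (Aᶜ ∩ vᶜ) = 0 :=
      measure_mono_null Set.inter_subset_right h2
    have e2 : s.toJordanDecomposition.negPart (Aᶜ ∩ v) = 0 := by
      have := congrArg (fun m => m (Aᶜ ∩ v)) hbal
      simp only [Measure.add_apply] at this
      have hb' : b (Aᶜ ∩ v) = 0 := measure_mono_null Set.inter_subset_left hb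
      have hp' : s.toJordanDecomposition.posPart (Aᶜ ∩ v) = 0 :=
        measure_mono_null Set.inter_subset_right h1
      rw [hb', hp'] at this
      rw [add_zero] at this; exact ((add_eq_zero).mp this).2
    have hsub : Aᶜ ⊆ (Aᶜ ∩ v) ∪ (Aᶜ ∩ vᶜ) := by
      intro x hx; by_cases h : x ∈ v
      · exact Or.inl ⟨hx, h⟩
      · exact Or.inr ⟨hx, h⟩
    exact measure_mono_null hsub (by rw [measure_union_null e2 e1])

lemma signedIntegral_sub (a b : Measure ℝ) [IsFiniteMeasure a] [IsFiniteMeasure b]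
    {A : Set ℝ} (ha : a Aᶜ = 0) (hb : b Aᶜ = 0)
    {f g : ℝ → ℝ} (hgm : Measurable g) {C : ℝ} (hgb : ∀ θ, |g θ| ≤ C)
    (hfg : ∀ θ ∈ A, f θ = g θ) :
    signedIntegral (a.toSignedMeasure - b.toSignedMeasure) f
      = (∫ θ, g θ ∂a) - ∫ θ, g θ ∂b := by
  set s := a.toSignedMeasure - b.toSignedMeasure with hs
  obtain ⟨hp0, hn0⟩ := part_null a b ha hb
  set P := s.toJordanDecomposition.posPart with hP
  set Q := s.toJordanDecomposition.negPart with hQ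
  have hInt : ∀ (m : Measure ℝ) [IsFiniteMeasure m], Integrable g m := by
    intro m hm
    exact (integrable_const C).mono' hgm.aestronglyMeasurable
      (Filter.Eventually.of_forall (fun x => (Real.norm_eq_abs _).symm ▸ hgb x))
  have hsub : ∀ (m : Measure ℝ), m Aᶜ = 0 → f =ᵐ[m] g := by
    intro m hm
    refine measure_mono_null (fun x hx => ?_) hm
    simp only [Set.mem_setOf_eq] at hx
    intro hxA
    exact hx (hfg x hxA)
  have e1 : ∫ θ, f θ ∂P = ∫ θ, g θ ∂P := integral_congr_ae (hsub P hp0)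
  have e2 : ∫ θ, f θ ∂Q = ∫ θ, g θ ∂Q := integral_congr_ae (hsub Q hn0)
  have hbal := balance a b
  have key : (∫ θ, g θ ∂a) + ∫ θ, g θ ∂Q = (∫ θ, g θ ∂b) + ∫ θ, g θ ∂P := by
    rw [← integral_add_measure (hInt a) (hInt Q), ← integral_add_measure (hInt b) (hInt P)]
    have hbal' : a + Q = b + P := hbal
    rw [hbal']
  simp only [signedIntegral, ← hs, ← hP, ← hQ, e1, e2]
  linarith


noncomputable def cl (θ : ℝ) : ℝ := max (-1) (min 0 θ)

lemma cl_mem (θ : ℝ) : cl θ ∈ Set.Icc (-1:ℝ) 0 := by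
  constructor
  · exact le_max_left _ _
  · simp [cl]
lemma cl_eq {θ : ℝ} (h : θ ∈ Set.Icc (-1:ℝ) 0) : cl θ = θ := by
  obtain ⟨h1, h2⟩ := h
  simp [cl, min_eq_right h2, max_eq_right h1]
lemma cl_cont : Continuous cl := continuous_const.max (continuous_const.min continuous_id)

-- the clamped version of the history segment
lemma gbound (x : ℝ → ℝ) (hx : ContinuousOn x (Set.Ici (-1:ℝ))) (t : ℝ) (ht : 0 ≤ t) :
    Continuous (fun θ => x (t + cl θ)) ∧
    ∀ θ, |x (t + cl θ)| ≤ sSup ((fun s => |x s|) '' Set.Icc (t-1) t) := by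
  have hsub : Set.Icc (t-1) t ⊆ Set.Ici (-1:ℝ) := fun z hz => le_trans (by linarith) hz.1
  have hmem : ∀ θ, t + cl θ ∈ Set.Icc (t-1) t := by
    intro θ
    obtain ⟨h1, h2⟩ := cl_mem θ
    constructor <;> linarith
  constructor
  · apply hx.comp_continuous (continuous_const.add cl_cont)
    intro θ; exact hsub (hmem θ)
  · intro θ
    have hbdd : BddAbove ((fun s => |x s|) '' Set.Icc (t-1) t) :=
      isCompact_Icc.bddAbove_image ((continuous_abs.comp_continuousOn (hx.mono hsub)))
    exact le_csSup hbdd ⟨t + cl θ, hmem θ, rfl⟩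


noncomputable def je (m : ℕ) (θ : ℝ) : ℤ := max 1 (min (m:ℤ) ⌈-(m:ℝ) * θ⌉)
noncomputable def jo (m : ℕ) (θ : ℝ) : ℤ := max 0 (min ((m:ℤ)-1) ⌈(-(2*(m:ℝ)) * θ - 1)/2⌉)

lemma je_bounds (m : ℕ) (hm : 1 ≤ m) (θ : ℝ) : 1 ≤ je m θ ∧ je m θ ≤ (m:ℤ) := by
  refine ⟨le_max_left _ _, ?_⟩
  rw [je, max_le_iff]
  exact ⟨by exact_mod_cast hm, min_le_left _ _⟩

lemma jo_bounds (m : ℕ) (hm : 1 ≤ m) (θ : ℝ) : 0 ≤ jo m θ ∧ jo m θ ≤ (m:ℤ) - 1 := by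
  refine ⟨le_max_left _ _, ?_⟩
  rw [jo, max_le_iff]
  exact ⟨by omega, min_le_left _ _⟩

lemma round_err {θ a D : ℝ} (hD : 0 < D) (hl : -(D*θ) - 2 ≤ a) (hu : a ≤ -(D*θ) + 2) :
    |(-a)/D - θ| ≤ 2/D := by
  have h1 : (-a)/D - θ = -((a + D*θ)/D) := by field_simp; ring
  rw [h1, abs_neg, abs_div, abs_of_pos hD]
  gcongr
  rw [abs_le]; constructor <;> linarith

lemma je_err (m : ℕ) (hm : 1 ≤ m) {θ : ℝ} (hθ : θ ∈ Set.Icc (-1:ℝ) 0) :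
    |(-(2*(je m θ : ℝ)))/(2*m) - θ| ≤ 2/(2*m) := by
  obtain ⟨h1, h2⟩ := hθ
  have hm0 : (0:ℝ) < m := by exact_mod_cast hm
  set c : ℤ := ⌈-(m:ℝ) * θ⌉ with hc
  have hcle : c ≤ (m:ℤ) := by
    rw [hc]; apply Int.ceil_le.mpr; push_cast; nlinarith
  have hmin : min (m:ℤ) c = c := min_eq_right hcle
  have hlb : -(m:ℝ) * θ ≤ c := Int.le_ceil _
  have hub : (c:ℝ) < -(m:ℝ) * θ + 1 := Int.ceil_lt_add_one _
  rcases le_or_gt 1 c with hc1 | hc1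
  · have hje : je m θ = c := by rw [je, ← hc, hmin, max_eq_right hc1]
    rw [hje]
    apply round_err (by positivity)
    · push_cast; nlinarith
    · push_cast; nlinarith
  · have hcge : (0:ℤ) ≤ c := hc ▸ Int.ceil_nonneg (by nlinarith)
    have hc0 : c = 0 := by omega
    have hθ0' : -(m:ℝ) * θ ≤ 0 := by
      have := hlb; rw [hc0] at this; exact_mod_cast this
    have hje : je m θ = 1 := by rw [je, ← hc, hmin, hc0]; rfl
    rw [hje]
    apply round_err (by positivity)
    · push_cast; nlinarith
    · push_cast; nlinarith

lemma jo_err (m : ℕ) (hm : 1 ≤ m) {θ : ℝ} (hθ : θ ∈ Set.Icc (-1:ℝ) 0) :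
    |(-(2*(jo m θ : ℝ)+1))/(2*m) - θ| ≤ 2/(2*m) := by
  obtain ⟨h1, h2⟩ := hθ
  have hm0 : (0:ℝ) < m := by exact_mod_cast hm
  set d : ℤ := ⌈(-(2*(m:ℝ)) * θ - 1)/2⌉ with hd
  have hd0 : 0 ≤ d := by
    have : (-1:ℤ) < d := by
      rw [hd, Int.lt_ceil]; push_cast; nlinarith
    omega
  have hlb : (-(2*(m:ℝ)) * θ - 1)/2 ≤ d := Int.le_ceil _
  have hub : (d:ℝ) < (-(2*(m:ℝ)) * θ - 1)/2 + 1 := Int.ceil_lt_add_one _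
  rcases le_or_gt d ((m:ℤ)-1) with hdle | hdgt
  · have hjo : jo m θ = d := by
      rw [jo, ← hd, min_eq_right hdle, max_eq_right hd0]
    rw [hjo]
    have : (-(2*(d:ℝ)+1))/(2*m) - θ = (-(2*(d:ℝ)+1))/(2*(m:ℝ)) - θ := rfl
    apply round_err (by positivity : (0:ℝ) < 2*(m:ℝ))
    · push_cast; nlinarith
    · push_cast; nlinarith
  · have hjo : jo m θ = (m:ℤ) - 1 := by
      rw [jo, ← hd, min_eq_left (le_of_lt hdgt), max_eq_right (by omega)]
    have hub2 : ((m:ℝ) - 1) < (-(2*(m:ℝ)) * θ - 1)/2 := by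
      by_contra hcon
      push_neg at hcon
      have : d ≤ (m:ℤ) - 1 := by
        rw [hd]; apply Int.ceil_le.mpr; push_cast; exact hcon
      omega
    rw [hjo]
    apply round_err (by positivity : (0:ℝ) < 2*(m:ℝ))
    · push_cast; nlinarith
    · push_cast; nlinarith


lemma dir1 (μ : SignedMeasure ℝ) (hsupp : μ.totalVariation (Set.Icc (-1:ℝ) 0)ᶜ = 0)
    (hlt : μ.totalVariation (Set.Icc (-1:ℝ) 0) < 1)
    (φ : ℝ → ℝ) (hφm : Measurable φ)
    (hmaps : Set.MapsTo φ (Set.Icc (-1) 0) (Set.Icc (-1) 0)) : ExpStable (μ.map φ) := by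
  classical
  set pos := μ.toJordanDecomposition.posPart with hpos
  set neg := μ.toJordanDecomposition.negPart with hneg
  have htv : ∀ A, μ.totalVariation A = pos A + neg A := by
    intro A; rw [SignedMeasure.totalVariation, Measure.add_apply]
  -- total variation of universe
  have huniv : μ.totalVariation Set.univ = μ.totalVariation (Set.Icc (-1:ℝ) 0) := by
    rw [← measure_add_measure_compl (measurableSet_Icc), hsupp, add_zero]
  set c₀ : ℝ := (μ.totalVariation Set.univ).toReal with hc₀
  have hc₀0 : 0 ≤ c₀ := ENNReal.toReal_nonneg
  haveI : IsFiniteMeasure μ.totalVariation := by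
    rw [SignedMeasure.totalVariation]; infer_instance
  have hc₀1 : c₀ < 1 := by
    have h1 : μ.totalVariation Set.univ < 1 := huniv ▸ hlt
    calc c₀ < (1 : ENNReal).toReal :=
          (ENNReal.toReal_lt_toReal (measure_ne_top _ _) ENNReal.one_ne_top).mpr h1
      _ = 1 := ENNReal.toReal_one
  set q : ℝ := max c₀ 2⁻¹ with hqdef
  have hq0 : 0 < q := lt_of_lt_of_le (by norm_num) (le_max_right _ _)
  have hq1 : q < 1 := max_lt hc₀1 (by norm_num)
  have hc₀q : c₀ ≤ q := le_max_left _ _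
  -- measure prerequisites
  have hpOuter : pos (Set.Icc (-1:ℝ) 0)ᶜ = 0 ∧ neg (Set.Icc (-1:ℝ) 0)ᶜ = 0 := by
    have := hsupp; rw [htv] at this; exact add_eq_zero.mp this
  have hpre : φ ⁻¹' (Set.Icc (-1:ℝ) 0)ᶜ ⊆ (Set.Icc (-1:ℝ) 0)ᶜ := by
    intro θ hθ hθI; exact hθ (hmaps hθI)
  have hA : (pos.map φ) (Set.Icc (-1:ℝ) 0)ᶜ = 0 := by
    rw [Measure.map_apply hφm measurableSet_Icc.compl]
    exact measure_mono_null hpre hpOuter.1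
  have hB : (neg.map φ) (Set.Icc (-1:ℝ) 0)ᶜ = 0 := by
    rw [Measure.map_apply hφm measurableSet_Icc.compl]
    exact measure_mono_null hpre hpOuter.2
  have hsum : ((pos.map φ) Set.univ).toReal + ((neg.map φ) Set.univ).toReal = c₀ := by
    rw [Measure.map_apply hφm MeasurableSet.univ, Measure.map_apply hφm MeasurableSet.univ,
      Set.preimage_univ, hc₀, htv, ENNReal.toReal_add (measure_ne_top _ _) (measure_ne_top _ _)]
  refine ⟨2/q, by positivity, -Real.log q, by simpa using Real.log_neg hq0 hq1, ?_⟩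
  intro x hx hfe
  -- the window suprema
  set B : ℕ → ℝ := fun n => sSup ((fun s => |x s|) '' Set.Icc ((n:ℝ)-1) n) with hBdef
  have hwinsub : ∀ n : ℕ, Set.Icc ((n:ℝ)-1) n ⊆ Set.Ici (-1:ℝ) := by
    intro n z hz
    have : (0:ℝ) ≤ n := Nat.cast_nonneg n
    exact le_trans (by linarith) hz.1
  have hbddB : ∀ n : ℕ, BddAbove ((fun s => |x s|) '' Set.Icc ((n:ℝ)-1) n) := by
    intro n
    exact isCompact_Icc.bddAbove_image (continuous_abs.comp_continuousOn (hx.mono (hwinsub n)))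
  have hB0 : ∀ n, 0 ≤ B n := by
    intro n
    have : |x n| ≤ B n := le_csSup (hbddB n) ⟨n, ⟨by linarith, le_refl _⟩, rfl⟩
    exact le_trans (abs_nonneg _) this
  -- key step estimate
  have key : ∀ t : ℝ, 0 ≤ t → |x t| ≤ c₀ * sSup ((fun s => |x s|) '' Set.Icc (t-1) t) := by
    intro t ht
    obtain ⟨hgc, hgb⟩ := gbound x hx t ht
    have heq : x t = (∫ θ, x (t + cl θ) ∂(pos.map φ)) - ∫ θ, x (t + cl θ) ∂(neg.map φ) := by
      rw [hfe t ht, map_eq_sub μ φ hφm]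
      exact signedIntegral_sub (pos.map φ) (neg.map φ) hA hB hgc.measurable hgb
        (fun θ hθ => by rw [cl_eq hθ])
    set Mt := sSup ((fun s => |x s|) '' Set.Icc (t-1) t) with hMt
    have hMt0 : 0 ≤ Mt := le_trans (abs_nonneg _) (hgb 0)
    have h1 : |∫ θ, x (t + cl θ) ∂(pos.map φ)| ≤ Mt * ((pos.map φ) Set.univ).toReal := by
      rw [← Real.norm_eq_abs]
      exact norm_integral_le_of_norm_le_const
        (Filter.Eventually.of_forall (fun θ => (Real.norm_eq_abs _).symm ▸ hgb θ))
    have h2 : |∫ θ, x (t + cl θ) ∂(neg.map φ)| ≤ Mt * ((neg.map φ) Set.univ).toReal := by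
      rw [← Real.norm_eq_abs]
      exact norm_integral_le_of_norm_le_const
        (Filter.Eventually.of_forall (fun θ => (Real.norm_eq_abs _).symm ▸ hgb θ))
    calc |x t| ≤ |∫ θ, x (t + cl θ) ∂(pos.map φ)| + |∫ θ, x (t + cl θ) ∂(neg.map φ)| := by
          rw [heq]; exact abs_sub _ _
      _ ≤ Mt * (((pos.map φ) Set.univ).toReal + ((neg.map φ) Set.univ).toReal) := by
          rw [mul_add]; exact add_le_add h1 h2
      _ = c₀ * Mt := by rw [hsum]; ring
  -- window recursion
  have hstep : ∀ n : ℕ, B (n+1) ≤ q * B n := by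
    intro n
    have hmax : B (n+1) ≤ q * max (B n) (B (n+1)) := by
      apply csSup_le (Set.Nonempty.image _ (Set.nonempty_Icc.mpr (by push_cast; linarith)))
      rintro y ⟨s, hs, rfl⟩
      have hs0 : (0:ℝ) ≤ s := by
        have : ((n:ℝ)+1) - 1 ≤ s := by push_cast at hs ⊢; linarith [hs.1]
        have hn : (0:ℝ) ≤ n := Nat.cast_nonneg n
        linarith
      have h1 := key s hs0
      have hMs0 : 0 ≤ sSup ((fun s' => |x s'|) '' Set.Icc (s-1) s) := by
        have hsubw : Set.Icc (s-1) s ⊆ Set.Ici (-1:ℝ) := fun z hz => le_trans (by linarith) hz.1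
        refine le_trans (abs_nonneg (x s)) (le_csSup ?_ ⟨s, ⟨by linarith, le_refl s⟩, rfl⟩)
        exact isCompact_Icc.bddAbove_image (continuous_abs.comp_continuousOn (hx.mono hsubw))
      have h2 : sSup ((fun s' => |x s'|) '' Set.Icc (s-1) s) ≤ max (B n) (B (n+1)) := by
        apply csSup_le (Set.Nonempty.image _ (Set.nonempty_Icc.mpr (by linarith)))
        rintro y ⟨σ, hσ, rfl⟩
        push_cast at hs
        rcases le_total σ (n:ℝ) with hc | hc
        · refine le_trans (le_csSup (hbddB n) ⟨σ, ⟨?_, hc⟩, rfl⟩) (le_max_left _ _)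
          linarith [hσ.1, hs.1]
        · refine le_trans (le_csSup (hbddB (n+1)) ⟨σ, ⟨?_, ?_⟩, rfl⟩) (le_max_right _ _)
          · push_cast; linarith
          · push_cast; linarith [hσ.2, hs.2]
      calc |x s| ≤ c₀ * sSup ((fun s' => |x s'|) '' Set.Icc (s-1) s) := h1
        _ ≤ q * max (B n) (B (n+1)) := by
            exact mul_le_mul hc₀q h2 hMs0 (le_of_lt hq0)
    rcases le_total (B (n+1)) (B n) with hc | hc
    · rwa [max_eq_left hc] at hmax
    · rw [max_eq_right hc] at hmax
      have h0 : B (n+1) ≤ 0 := by nlinarith [hmax, hq1]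
      exact le_trans h0 (mul_nonneg (le_of_lt hq0) (hB0 n))
  have hgeo : ∀ n : ℕ, B n ≤ q ^ n * B 0 := by
    intro n
    induction n with
    | zero => simp
    | succ k ih =>
      calc B (k+1) ≤ q * B k := hstep k
        _ ≤ q * (q ^ k * B 0) := by
            exact mul_le_mul_of_nonneg_left ih (le_of_lt hq0)
        _ = q ^ (k+1) * B 0 := by ring
  -- conclusion
  intro t ht θ hθ
  set u := t + θ with hu
  have hu1 : -1 ≤ u := by have := hθ.1; linarith
  have hut : u ≤ t := by have := hθ.2; linarith
  set n : ℕ := ⌈u⌉₊ with hn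
  have humem : u ∈ Set.Icc ((n:ℝ)-1) n := by
    constructor
    · rcases le_or_gt u 0 with hc | hc
      · have : n = 0 := Nat.ceil_eq_zero.mpr hc
        rw [this]; push_cast; linarith
      · have := Nat.ceil_lt_add_one (le_of_lt hc)
        linarith
    · exact Nat.le_ceil u
  have hnt : (t:ℝ) - 1 ≤ n := by
    rcases le_or_gt u 0 with hc | hc
    · have hnn : (0:ℝ) ≤ n := Nat.cast_nonneg n
      have : t ≤ u + 1 := by rw [hu]; have := hθ.1; linarith
      linarith
    · have h1 : u ≤ (n:ℝ) := Nat.le_ceil u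
      have h2 := hθ.1
      have h3 : t ≤ u + 1 := by rw [hu]; linarith
      linarith
  have hxu : |x u| ≤ B n := le_csSup (hbddB n) ⟨u, humem, rfl⟩
  have hqn : q ^ n ≤ q⁻¹ * Real.exp (-(-Real.log q) * t) := by
    have h1 : (q:ℝ) ^ n = Real.exp ((n:ℝ) * Real.log q) := by
      rw [← Real.log_pow, Real.exp_log (by positivity)]
    have h2 : Real.exp ((n:ℝ) * Real.log q) ≤ Real.exp ((t-1) * Real.log q) := by
      apply Real.exp_le_exp.mpr
      have hlq : Real.log q < 0 := Real.log_neg hq0 hq1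
      nlinarith
    have h3 : Real.exp ((t-1) * Real.log q) = q⁻¹ * Real.exp (-(-Real.log q) * t) := by
      rw [neg_neg]
      rw [show (t-1) * Real.log q = (- Real.log q) + t * Real.log q by ring, Real.exp_add,
        Real.exp_neg, Real.exp_log hq0]
      ring_nf
    rw [h1]; rw [← h3]; exact h2
  have hB0' : B 0 = sSup ((fun s => |x s|) '' Set.Icc (-1:ℝ) 0) := by
    rw [hBdef]; norm_num
  calc |x (t+θ)| = |x u| := rfl
    _ ≤ B n := hxu
    _ ≤ q ^ n * B 0 := hgeo n
    _ ≤ (q⁻¹ * Real.exp (-(-Real.log q) * t)) * B 0 := by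
        exact mul_le_mul_of_nonneg_right hqn (hB0 0)
    _ ≤ 2/q * Real.exp (-(-Real.log q) * t) * sSup ((fun s => |x s|) '' Set.Icc (-1:ℝ) 0) := by
        rw [← hB0']
        have hle : q⁻¹ ≤ 2/q := by rw [div_eq_mul_inv]; nlinarith [inv_pos.mpr hq0]
        have he : (0:ℝ) ≤ Real.exp (-(-Real.log q) * t) := le_of_lt (Real.exp_pos _)
        exact mul_le_mul_of_nonneg_right (mul_le_mul_of_nonneg_right hle he) (hB0 0)


set_option maxHeartbeats 1000000 in
lemma dir2 (μ : SignedMeasure ℝ) (hsupp : μ.totalVariation (Set.Icc (-1:ℝ) 0)ᶜ = 0)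
    (hge : 1 ≤ μ.totalVariation (Set.Icc (-1:ℝ) 0)) (ε : ℝ) (hε : 0 < ε) :
    ∃ φ : ℝ → ℝ, Measurable φ ∧
      Set.MapsTo φ (Set.Icc (-1) 0) (Set.Icc (-1) 0) ∧
      (∀ θ ∈ Set.Icc (-1:ℝ) 0, |φ θ - θ| < ε) ∧
      Admissible (μ.map φ) ∧ ¬ ExpStable (μ.map φ) := by
  classical
  obtain ⟨m, hm, herr2⟩ : ∃ m : ℕ, 1 ≤ m ∧ 2/(2*(m:ℝ)) < ε := by
    refine ⟨⌈2/ε⌉₊ + 1, Nat.le_add_left 1 _, ?_⟩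
    have hce : 2/ε ≤ ((⌈2/ε⌉₊ + 1 : ℕ):ℝ) := by
      push_cast; linarith [Nat.le_ceil (2/ε)]
    have hm0 : (0:ℝ) < ((⌈2/ε⌉₊ + 1 : ℕ):ℝ) := by positivity
    rw [div_lt_iff₀ (by positivity)]
    have h1 : ε * (2/ε) = 2 := by field_simp
    nlinarith [mul_le_mul_of_nonneg_left hce (le_of_lt hε)]
  have hm0 : (0:ℝ) < m := by exact_mod_cast hm
  set pos := μ.toJordanDecomposition.posPart with hposd
  set neg := μ.toJordanDecomposition.negPart with hnegd
  obtain ⟨u, hum, hu1, hu2⟩ := μ.toJordanDecomposition.mutuallySingular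
  -- the perturbation
  set φe : ℝ → ℝ := fun θ => (-(2*(je m θ : ℝ)))/(2*m) with hφed
  set φo : ℝ → ℝ := fun θ => (-(2*(jo m θ : ℝ)+1))/(2*m) with hφod
  set φ : ℝ → ℝ := fun θ => if θ ∈ u then φo θ else φe θ with hφd
  have hjem : Measurable (je m) := by
    apply Measurable.max measurable_const
    apply Measurable.min measurable_const
    exact Int.measurable_ceil.comp (by fun_prop)
  have hjom : Measurable (jo m) := by
    apply Measurable.max measurable_const
    apply Measurable.min measurable_const
    exact Int.measurable_ceil.comp (by fun_prop)
  have hφm : Measurable φ := by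
    apply Measurable.ite hum
    · exact (show Measurable (fun z : ℤ => (-(2*(z:ℝ)+1))/(2*(m:ℝ))) from
        measurable_from_top).comp hjom
    · exact (show Measurable (fun z : ℤ => (-(2*(z:ℝ)))/(2*(m:ℝ))) from
        measurable_from_top).comp hjem
  -- range facts
  have hφe_rng : ∀ θ, φe θ ∈ Set.Icc (-1:ℝ) (-(1:ℝ)/(2*m)) := by
    intro θ
    obtain ⟨hb1, hb2⟩ := je_bounds m hm θ
    have c1 : (1:ℝ) ≤ (je m θ : ℝ) := by exact_mod_cast hb1
    have c2 : ((je m θ : ℝ)) ≤ (m:ℝ) := by exact_mod_cast hb2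
    rw [hφed]
    constructor
    · rw [le_div_iff₀ (by positivity : (0:ℝ) < 2*(m:ℝ))]; nlinarith
    · rw [div_le_div_iff₀ (by positivity : (0:ℝ) < 2*(m:ℝ)) (by positivity : (0:ℝ) < 2*(m:ℝ))]
      nlinarith
  have hφo_rng : ∀ θ, φo θ ∈ Set.Icc (-1:ℝ) (-(1:ℝ)/(2*m)) := by
    intro θ
    obtain ⟨hb1, hb2⟩ := jo_bounds m hm θ
    have c1 : (0:ℝ) ≤ (jo m θ : ℝ) := by exact_mod_cast hb1
    have c2 : ((jo m θ : ℝ)) ≤ (m:ℝ) - 1 := by exact_mod_cast hb2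
    rw [hφod]
    constructor
    · rw [le_div_iff₀ (by positivity : (0:ℝ) < 2*(m:ℝ))]; nlinarith
    · rw [div_le_div_iff₀ (by positivity : (0:ℝ) < 2*(m:ℝ)) (by positivity : (0:ℝ) < 2*(m:ℝ))]
      nlinarith
  have hφ_rng : ∀ θ, φ θ ∈ Set.Icc (-1:ℝ) (-(1:ℝ)/(2*m)) := by
    intro θ; rw [hφd]; by_cases h : θ ∈ u
    · simp only [h, if_true]; exact hφo_rng θ
    · simp only [h, if_false]; exact hφe_rng θ
  have hgridneg : -(1:ℝ)/(2*(m:ℝ)) < 0 := by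
    have : (0:ℝ) < 1/(2*(m:ℝ)) := by positivity
    rw [neg_div]; linarith
  have hmaps : Set.MapsTo φ (Set.Icc (-1) 0) (Set.Icc (-1) 0) := by
    intro θ _
    obtain ⟨r1, r2⟩ := hφ_rng θ
    exact ⟨r1, le_trans r2 (le_of_lt hgridneg)⟩
  have hne0 : ∀ θ, φ θ ≠ 0 := by
    intro θ h
    have h2 := (hφ_rng θ).2
    rw [h] at h2
    linarith
  have herr : ∀ θ ∈ Set.Icc (-1:ℝ) 0, |φ θ - θ| < ε := by
    intro θ hθ
    by_cases h : θ ∈ u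
    · have he : φ θ = φo θ := by rw [hφd]; simp [h]
      rw [he, hφod]
      exact lt_of_le_of_lt (jo_err m hm hθ) herr2
    · have he : φ θ = φe θ := by rw [hφd]; simp [h]
      rw [he, hφed]
      exact lt_of_le_of_lt (je_err m hm hθ) herr2
  have hadm : Admissible (μ.map φ) := by
    rw [Admissible, VectorMeasure.map_apply _ hφm (measurableSet_singleton 0)]
    have hpe : φ ⁻¹' {0} = ∅ := by
      ext θ
      simp only [Set.mem_preimage, Set.mem_singleton_iff, Set.mem_empty_iff_false, iff_false]
      exact hne0 θ
    rw [hpe]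
    simp
  -- grid points
  set p : ℕ → ℝ := fun j => -(j:ℝ)/(2*m) with hpd
  set Js : Finset ℕ := Finset.Icc 1 (2*m) with hJsd
  have hpinj : ∀ i ∈ Js, ∀ j ∈ Js, p i = p j → i = j := by
    intro i _ j _ hij
    rw [hpd] at hij
    simp only at hij
    have h2m : (2*(m:ℝ)) ≠ 0 := by positivity
    have : (i:ℝ) = (j:ℝ) := by
      field_simp at hij
      linarith
    exact_mod_cast this
  have hpIcc : ∀ j ∈ Js, p j ∈ Set.Icc (-1:ℝ) 0 := by
    intro j hj
    rw [hJsd, Finset.mem_Icc] at hj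
    have h1 : (1:ℝ) ≤ j := by exact_mod_cast hj.1
    have h2 : (j:ℝ) ≤ 2*m := by exact_mod_cast hj.2
    rw [hpd]
    constructor
    · rw [le_div_iff₀ (by positivity : (0:ℝ) < 2*(m:ℝ))]; nlinarith
    · apply div_nonpos_of_nonpos_of_nonneg (by linarith) (by positivity)
  have hvalu : ∀ θ ∈ u, ∃ j ∈ Js, Odd j ∧ φ θ = p j := by
    intro θ hθ
    obtain ⟨hb1, hb2⟩ := jo_bounds m hm θ
    refine ⟨(2*(jo m θ)+1).toNat, ?_, ?_, ?_⟩
    · rw [hJsd, Finset.mem_Icc]; omega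
    · rw [Nat.odd_iff]; omega
    · have he : φ θ = φo θ := by rw [hφd]; simp [hθ]
      rw [he, hφod, hpd]
      simp only
      have hc : (((2*(jo m θ)+1).toNat : ℕ) : ℝ) = 2*((jo m θ : ℤ):ℝ)+1 := by
        have h1 : (((2*(jo m θ)+1).toNat : ℤ) : ℝ) = ((2*(jo m θ)+1 : ℤ) : ℝ) := by
          rw [Int.toNat_of_nonneg (by omega)]
        push_cast at h1 ⊢
        linarith
      rw [hc]
  have hvalc : ∀ θ ∉ u, ∃ j ∈ Js, Even j ∧ φ θ = p j := by
    intro θ hθ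
    obtain ⟨hb1, hb2⟩ := je_bounds m hm θ
    refine ⟨(2*(je m θ)).toNat, ?_, ?_, ?_⟩
    · rw [hJsd, Finset.mem_Icc]; omega
    · rw [Nat.even_iff]; omega
    · have he : φ θ = φe θ := by rw [hφd]; simp [hθ]
      rw [he, hφed, hpd]
      simp only
      have hc : (((2*(je m θ)).toNat : ℕ) : ℝ) = 2*((je m θ : ℤ):ℝ) := by
        have h1 : (((2*(je m θ)).toNat : ℤ) : ℝ) = ((2*(je m θ) : ℤ) : ℝ) := by
          rw [Int.toNat_of_nonneg (by omega)]
        push_cast at h1 ⊢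
        linarith
      rw [hc]
  have hpinjN : Function.Injective p := by
    intro i j hij
    rw [hpd] at hij
    simp only at hij
    have : (i:ℝ) = (j:ℝ) := by
      field_simp at hij
      linarith
    exact_mod_cast this
  have hprepos : ∀ j, Odd j → (Measure.map φ pos) {p j} = 0 := by
    intro j hodd
    rw [Measure.map_apply hφm (measurableSet_singleton _)]
    refine measure_mono_null (fun θ hθ => ?_) hu1
    simp only [Set.mem_preimage, Set.mem_singleton_iff] at hθ
    by_contra hnu
    obtain ⟨j', _, heven, heq⟩ := hvalc θ hnu
    rw [heq] at hθ
    have : j' = j := hpinjN hθ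
    rw [this] at heven
    exact (Nat.not_even_iff_odd.mpr hodd) heven
  have hpreneg : ∀ j, Even j → (Measure.map φ neg) {p j} = 0 := by
    intro j hev
    rw [Measure.map_apply hφm (measurableSet_singleton _)]
    refine measure_mono_null (fun θ hθ => ?_) hu2
    simp only [Set.mem_preimage, Set.mem_singleton_iff] at hθ
    simp only [Set.mem_compl_iff]
    intro hnu
    obtain ⟨j', _, hodd, heq⟩ := hvalu θ hnu
    rw [heq] at hθ
    have : j' = j := hpinjN hθ
    rw [this] at hodd
    exact (Nat.not_even_iff_odd.mpr hodd) hev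
  -- coefficients
  set Ac : ℕ → ℝ := fun j => ((Measure.map φ pos) {p j}).toReal with hAcd
  set Bc : ℕ → ℝ := fun j => ((Measure.map φ neg) {p j}).toReal with hBcd
  have hA0 : ∀ j, 0 ≤ Ac j := fun j => ENNReal.toReal_nonneg
  have hB0 : ∀ j, 0 ≤ Bc j := fun j => ENNReal.toReal_nonneg
  -- the support set
  set U : Set ℝ := ⋃ j ∈ Js, {p j} with hUd
  have hUm : MeasurableSet U := by
    rw [hUd]
    exact Set.Finite.measurableSet
      (Set.Finite.biUnion Js.finite_toSet (fun _ _ => Set.finite_singleton _))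
  have hφU : ∀ θ, φ θ ∈ U := by
    intro θ
    rw [hUd]
    by_cases h : θ ∈ u
    · obtain ⟨j, hj, _, heq⟩ := hvalu θ h
      exact Set.mem_biUnion hj (by rw [heq]; rfl)
    · obtain ⟨j, hj, _, heq⟩ := hvalc θ h
      exact Set.mem_biUnion hj (by rw [heq]; rfl)
  have hcpos : (Measure.map φ pos) Uᶜ = 0 := by
    rw [Measure.map_apply hφm hUm.compl]
    have hemp : φ ⁻¹' Uᶜ = ∅ := by
      ext θ
      simp only [Set.mem_preimage, Set.mem_compl_iff, Set.mem_empty_iff_false, iff_false, not_not]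
      exact hφU θ
    rw [hemp, measure_empty]
  have hcneg : (Measure.map φ neg) Uᶜ = 0 := by
    rw [Measure.map_apply hφm hUm.compl]
    have hemp : φ ⁻¹' Uᶜ = ∅ := by
      ext θ
      simp only [Set.mem_preimage, Set.mem_compl_iff, Set.mem_empty_iff_false, iff_false, not_not]
      exact hφU θ
    rw [hemp, measure_empty]
  have hsum_eq : ∀ ρ : Measure ℝ, ρ Uᶜ = 0 → ρ Set.univ = ∑ j ∈ Js, ρ {p j} := by
    intro ρ hρ
    have hdisj : (↑Js : Set ℕ).PairwiseDisjoint (fun j => ({p j} : Set ℝ)) := by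
      intro i hi j hj hij
      simp only [Function.onFun, Set.disjoint_singleton_left, Set.mem_singleton_iff]
      intro hpe
      exact hij (hpinjN hpe)
    rw [← measure_biUnion_finset hdisj (fun _ _ => measurableSet_singleton _), ← hUd,
      ← measure_add_measure_compl hUm, hρ, add_zero]
  have hAsum : ∑ j ∈ Js, Ac j = (pos Set.univ).toReal := by
    simp only [hAcd]
    rw [← ENNReal.toReal_sum (fun j _ => measure_ne_top _ _), ← hsum_eq _ hcpos,
      Measure.map_apply hφm MeasurableSet.univ, Set.preimage_univ]
  have hBsum : ∑ j ∈ Js, Bc j = (neg Set.univ).toReal := by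
    simp only [hBcd]
    rw [← ENNReal.toReal_sum (fun j _ => measure_ne_top _ _), ← hsum_eq _ hcneg,
      Measure.map_apply hφm MeasurableSet.univ, Set.preimage_univ]
  -- total variation bound
  set Treal : ℝ := (pos Set.univ).toReal + (neg Set.univ).toReal with hTd
  have h1T : 1 ≤ Treal := by
    have h1 : (1:ℝ≥0∞) ≤ μ.totalVariation Set.univ :=
      le_trans hge (measure_mono (Set.subset_univ _))
    have h2 : μ.totalVariation Set.univ = pos Set.univ + neg Set.univ := by
      rw [SignedMeasure.totalVariation, Measure.add_apply]
    rw [h2] at h1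
    have h3 : ((1:ℝ≥0∞)).toReal ≤ (pos Set.univ + neg Set.univ).toReal :=
      (ENNReal.toReal_le_toReal ENNReal.one_ne_top
        (ENNReal.add_ne_top.mpr ⟨measure_ne_top _ _, measure_ne_top _ _⟩)).mpr h1
    rw [ENNReal.toReal_add (measure_ne_top _ _) (measure_ne_top _ _), ENNReal.toReal_one] at h3
    rw [hTd]
    exact h3
  have hT0 : (0:ℝ) < Treal := lt_of_lt_of_le one_pos h1T
  -- characteristic polynomial
  set F : ℝ → ℝ := fun z => ∑ j ∈ Js, ((Ac j - Bc j) * (-1)^j) * z^j with hFd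
  have hFc : Continuous F := by
    rw [hFd]
    exact continuous_finset_sum _ (fun j _ => continuous_const.mul (continuous_pow j))
  have hF1 : F 1 = Treal := by
    rw [hFd]
    simp only [one_pow, mul_one]
    have hcongr : ∀ j ∈ Js, (Ac j - Bc j) * (-1)^j = Ac j + Bc j := by
      intro j hj
      rcases Nat.even_or_odd j with hev | hod
      · have hBz : Bc j = 0 := by
          simp only [hBcd]; rw [hpreneg j hev]; simp
        rw [hev.neg_one_pow, hBz]; ring
      · have hAz : Ac j = 0 := by
          simp only [hAcd]; rw [hprepos j hod]; simp
        rw [hod.neg_one_pow, hAz]; ring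
    rw [Finset.sum_congr rfl hcongr, Finset.sum_add_distrib, hAsum, hBsum]
  set s₀ : ℝ := 1/(2*Treal) with hs₀d
  have hs₀pos : 0 < s₀ := by rw [hs₀d]; positivity
  have hs₀half : s₀ ≤ 1/2 := by
    rw [hs₀d, div_le_div_iff₀ (by positivity) (by norm_num)]
    nlinarith
  have hFs₀ : F s₀ ≤ 1/2 := by
    rw [hFd]
    simp only
    have hterm : ∀ j ∈ Js, ((Ac j - Bc j) * (-1)^j) * s₀^j ≤ (Ac j + Bc j) * s₀ := by
      intro j hj
      rw [hJsd, Finset.mem_Icc] at hj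
      have h1 : ((Ac j - Bc j) * (-1)^j) * s₀^j ≤ |((Ac j - Bc j) * (-1)^j) * s₀^j| :=
        le_abs_self _
      have h2 : |((Ac j - Bc j) * (-1)^j) * s₀^j| = |Ac j - Bc j| * s₀^j := by
        rw [abs_mul, abs_mul, abs_pow, abs_neg, abs_one, one_pow, mul_one,
          abs_pow, abs_of_pos hs₀pos]
      have h3 : |Ac j - Bc j| ≤ Ac j + Bc j :=
        abs_le.mpr ⟨by linarith [hA0 j, hB0 j], by linarith [hA0 j, hB0 j]⟩
      have h4 : s₀^j ≤ s₀ := by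
        have := pow_le_pow_of_le_one (le_of_lt hs₀pos) (by linarith) hj.1
        rwa [pow_one] at this
      calc ((Ac j - Bc j) * (-1)^j) * s₀^j ≤ |Ac j - Bc j| * s₀^j := h2 ▸ h1
        _ ≤ (Ac j + Bc j) * s₀ := by
            apply mul_le_mul h3 h4 (pow_nonneg (le_of_lt hs₀pos) j)
              (by linarith [hA0 j, hB0 j])
    calc ∑ j ∈ Js, ((Ac j - Bc j) * (-1)^j) * s₀^j ≤ ∑ j ∈ Js, (Ac j + Bc j) * s₀ :=
          Finset.sum_le_sum hterm
      _ = Treal * s₀ := by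
          rw [← Finset.sum_mul, Finset.sum_add_distrib, hAsum, hBsum, hTd]
      _ = 1/2 := by rw [hs₀d]; field_simp
  have hs₀le1 : s₀ ≤ 1 := by linarith
  obtain ⟨sv, hsv, hFsv⟩ := intermediate_value_Icc hs₀le1 hFc.continuousOn
    (show (1:ℝ) ∈ Set.Icc (F s₀) (F 1) from ⟨by linarith, by rw [hF1]; linarith⟩)
  have hsv0 : 0 < sv := lt_of_lt_of_le hs₀pos hsv.1
  have hsv1 : sv ≤ 1 := hsv.2
  -- the destabilizing solution
  set L : ℝ := -(2*(m:ℝ)) * Real.log sv with hLd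
  have hL0 : 0 ≤ L := by
    have hls := Real.log_nonpos (le_of_lt hsv0) hsv1
    rw [hLd]; nlinarith
  set x : ℝ → ℝ := fun t => Real.exp (L*t) * Real.cos ((2*(m:ℝ)) * Real.pi * t) with hxd
  have hxc : Continuous x := by
    rw [hxd]
    exact (Real.continuous_exp.comp (continuous_const.mul continuous_id)).mul
      (Real.continuous_cos.comp (continuous_const.mul continuous_id))
  have hshift : ∀ (t:ℝ) (j:ℕ), x (t + p j) = ((-1)^j * sv^j) * x t := by
    intro t j
    rw [hxd, hpd]
    simp only
    have harg1 : L * (t + -(j:ℝ)/(2*(m:ℝ))) = L*t + (j:ℝ)*Real.log sv := by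
      rw [hLd]; field_simp; ring
    have harg2 : (2*(m:ℝ))*Real.pi*(t + -(j:ℝ)/(2*(m:ℝ)))
        = -((j:ℝ)*Real.pi - (2*(m:ℝ))*Real.pi*t) := by
      field_simp; ring
    rw [harg1, harg2, Real.exp_add, Real.cos_neg, Real.cos_nat_mul_pi_sub,
      show (j:ℝ)*Real.log sv = Real.log sv * (j:ℝ) by ring]
    rw [show Real.log sv * (j:ℝ) = ((j:ℕ):ℝ) * Real.log sv by push_cast; ring,
      Real.exp_nat_mul, Real.exp_log hsv0]
    ring
  -- integral computation against an atomic measure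
  set S : Finset ℝ := Js.image p with hSd
  have hUS : U = ↑S := by
    rw [hUd, hSd, Finset.coe_image]
    ext z
    simp only [Set.mem_iUnion, Set.mem_singleton_iff, Set.mem_image, Finset.mem_coe]
    constructor
    · rintro ⟨j, hj, rfl⟩; exact ⟨j, hj, rfl⟩
    · rintro ⟨j, hj, rfl⟩; exact ⟨j, hj, rfl⟩
  have hIcalc : ∀ (ρ : Measure ℝ), IsFiniteMeasure ρ → ρ Uᶜ = 0 →
      ∀ (g : ℝ → ℝ) (C : ℝ), Continuous g → (∀ θ, |g θ| ≤ C) →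
      ∫ θ, g θ ∂ρ = ∑ j ∈ Js, (ρ {p j}).toReal * g (p j) := by
    intro ρ hρf hρ g C hg hC
    haveI := hρf
    have hInt : Integrable g ρ := (integrable_const C).mono' hg.measurable.aestronglyMeasurable
      (Filter.Eventually.of_forall (fun θ => (Real.norm_eq_abs _).symm ▸ hC θ))
    have hae : ∀ᵐ θ ∂ρ, θ ∈ (↑S : Set ℝ) := by
      rw [Filter.eventually_iff, mem_ae_iff]
      have : {θ : ℝ | θ ∈ (↑S : Set ℝ)}ᶜ = Uᶜ := by rw [hUS]; rfl
      rw [this]; exact hρ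
    have hres : ρ.restrict ↑S = ρ := Measure.restrict_eq_self_of_ae_mem hae
    conv_lhs => rw [← hres]
    rw [integral_finset S (hInt.integrableOn)]
    rw [hSd, Finset.sum_image hpinj]
    simp [smul_eq_mul, Measure.real]
  have heqn : ∀ t ≥ (0:ℝ), x t = signedIntegral (μ.map φ) (fun θ => x (t + θ)) := by
    intro t ht
    obtain ⟨hgc, hgb⟩ := gbound x hxc.continuousOn t ht
    rw [map_eq_sub μ φ hφm]
    have hfg : ∀ θ ∈ U, x (t + θ) = x (t + cl θ) := by
      intro θ hθ
      rw [hUd] at hθ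
      simp only [Set.mem_iUnion, Set.mem_singleton_iff] at hθ
      obtain ⟨j, hj, rfl⟩ := hθ
      rw [cl_eq (hpIcc j hj)]
    rw [signedIntegral_sub (Measure.map φ pos) (Measure.map φ neg) (A := U) hcpos hcneg
      hgc.measurable hgb hfg]
    rw [hIcalc _ inferInstance hcpos _ _ hgc hgb, hIcalc _ inferInstance hcneg _ _ hgc hgb]
    have hgp : ∀ j ∈ Js, x (t + cl (p j)) = ((-1)^j * sv^j) * x t := by
      intro j hj
      rw [cl_eq (hpIcc j hj), hshift t j]
    calc x t = F sv * x t := by rw [hFsv, one_mul]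
      _ = ∑ j ∈ Js, (Ac j * (((-1)^j * sv^j) * x t) - Bc j * (((-1)^j * sv^j) * x t)) := by
          rw [hFd]
          simp only
          rw [Finset.sum_mul]
          apply Finset.sum_congr rfl
          intro j _
          ring
      _ = ∑ j ∈ Js, Ac j * (((-1)^j * sv^j) * x t)
            - ∑ j ∈ Js, Bc j * (((-1)^j * sv^j) * x t) := Finset.sum_sub_distrib _ _
      _ = (∑ j ∈ Js, ((Measure.map φ pos) {p j}).toReal * x (t + cl (p j)))
            - ∑ j ∈ Js, ((Measure.map φ neg) {p j}).toReal * x (t + cl (p j)) := by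
          congr 1
          · apply Finset.sum_congr rfl
            intro j hj
            rw [hgp j hj]
          · apply Finset.sum_congr rfl
            intro j hj
            rw [hgp j hj]
  -- non-stability
  refine ⟨φ, hφm, hmaps, herr, hadm, ?_⟩
  rintro ⟨K, hK, α, hα, H⟩
  have hM1 : sSup ((fun s => |x s|) '' Set.Icc (-1:ℝ) 0) ≤ 1 := by
    apply csSup_le (Set.Nonempty.image _ (Set.nonempty_Icc.mpr (by norm_num)))
    rintro y ⟨σ, hσ, rfl⟩
    rw [hxd]
    simp only
    have hσL : L*σ ≤ 0 := by
      have := mul_le_mul_of_nonneg_left hσ.2 hL0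
      simpa using this
    have h1 : Real.exp (L*σ) ≤ 1 := by
      calc Real.exp (L*σ) ≤ Real.exp 0 := Real.exp_le_exp.mpr hσL
        _ = 1 := Real.exp_zero
    calc |Real.exp (L*σ) * Real.cos ((2*(m:ℝ))*Real.pi*σ)|
        = Real.exp (L*σ) * |Real.cos ((2*(m:ℝ))*Real.pi*σ)| := by
          rw [abs_mul, abs_of_pos (Real.exp_pos _)]
      _ ≤ Real.exp (L*σ) * 1 := by
          apply mul_le_mul_of_nonneg_left (Real.abs_cos_le_one _) (le_of_lt (Real.exp_pos _))
      _ ≤ 1 := by rw [mul_one]; exact h1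
  set k : ℕ := ⌈K/(2*α)⌉₊ + 1 with hkd
  have hk : K < 2*α*(k:ℝ) := by
    have h1 : K/(2*α) ≤ ((⌈K/(2*α)⌉₊ : ℕ):ℝ) := Nat.le_ceil _
    have h2 : ((⌈K/(2*α)⌉₊ : ℕ):ℝ) + 1 = (k:ℝ) := by rw [hkd]; push_cast; ring
    have h3 : K/(2*α) + 1 ≤ (k:ℝ) := by linarith
    have h4 : (2*α) * (K/(2*α)) = K := by field_simp
    nlinarith
  have hcontr := H x hxc.continuousOn heqn (2*(k:ℝ)) (by positivity) 0
    ⟨by norm_num, le_refl 0⟩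
  have hx2k : x (2*(k:ℝ) + 0) = Real.exp (L*(2*(k:ℝ))) := by
    rw [add_zero, hxd]
    simp only
    rw [show (2*(m:ℝ))*Real.pi*(2*(k:ℝ)) = ((2*m*k : ℕ):ℝ)*(2*Real.pi) by push_cast; ring,
      Real.cos_nat_mul_two_pi, mul_one]
  have h1le : (1:ℝ) ≤ Real.exp (L*(2*(k:ℝ))) := by
    have : (0:ℝ) ≤ L*(2*(k:ℝ)) := by positivity
    linarith [Real.add_one_le_exp (L*(2*(k:ℝ)))]
  rw [hx2k, abs_of_pos (Real.exp_pos _)] at hcontr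
  have hKle : K * Real.exp (-α*(2*(k:ℝ))) < 1 := by
    rw [show -α*(2*(k:ℝ)) = -(α*(2*(k:ℝ))) by ring, Real.exp_neg]
    rw [mul_comm, inv_mul_lt_iff₀ (Real.exp_pos _), mul_one]
    calc K < 2*α*(k:ℝ) := hk
      _ < 2*α*(k:ℝ) + 1 := by linarith
      _ ≤ Real.exp (α*(2*(k:ℝ))) := by
          have := Real.add_one_le_exp (α*(2*(k:ℝ)))
          linarith [this]
  have hfin : K * Real.exp (-α*(2*(k:ℝ))) * sSup ((fun s => |x s|) '' Set.Icc (-1:ℝ) 0)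
      ≤ K * Real.exp (-α*(2*(k:ℝ))) := by
    have hnn : 0 ≤ K * Real.exp (-α*(2*(k:ℝ))) := by positivity
    nlinarith [hM1, hnn]
  linarith



/-- generalized Melvin criterion: for a finite signed Borel measure `μ` on
`[-1,0]`, if `|μ|([-1,0]) < 1` then every admissible pushforward system
`x(t) = ∫ x(t+θ) d(φ_*μ)(θ)` is exponentially stable (strong stability); conversely, if
`|μ|([-1,0]) ≥ 1`, then for every `ε > 0` there is a Borel-measurable
`φ : [-1,0] → [-1,0]` with `sup |φ − id| < ε`, admissible pushforward, whose perturbed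
system is not exponentially stable. -/
theorem stmt11 (μ : SignedMeasure ℝ)
    (hsupp : μ.totalVariation (Set.Icc (-1:ℝ) 0)ᶜ = 0) :
    (μ.totalVariation (Set.Icc (-1:ℝ) 0) < 1 →
      ∀ φ : ℝ → ℝ, Measurable φ →
        Set.MapsTo φ (Set.Icc (-1) 0) (Set.Icc (-1) 0) →
        Admissible (μ.map φ) → ExpStable (μ.map φ)) ∧
    (1 ≤ μ.totalVariation (Set.Icc (-1:ℝ) 0) →
      ∀ ε > (0:ℝ), ∃ φ : ℝ → ℝ, Measurable φ ∧
        Set.MapsTo φ (Set.Icc (-1) 0) (Set.Icc (-1) 0) ∧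
        (∀ θ ∈ Set.Icc (-1:ℝ) 0, |φ θ - θ| < ε) ∧
        Admissible (μ.map φ) ∧ ¬ ExpStable (μ.map φ)) := by
  constructor
  · intro hlt φ hφm hmaps _adm
    exact dir1 μ hsupp hlt φ hφm hmaps
  · intro hge ε hε
    exact dir2 μ hsupp hge ε hε
end
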